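/- arXiv:1904.03166 — 5 statements merged into one kernel-verified Lean document; each statement's English description precedes it below -/
import Mathlib

section
/- Let Λ be a finite-dimensional algebra and S a brick in mod Λ (i.e., End(S) is a division ring). If f : S_T → X is a morphism with X in Filt(S), and g : T → S_T is a left minimal Filt(S)-approximation of a module T with f ∘ g = 0, then f = 0. Consequently the induced map Hom(S_T, X) → Hom(T, X) is a bijection. -/
open CategoryTheory

universe u

variable {Λ : Type u} [Ring Λ]

/-- A short exact sequence of `Λ`-modules. -/
def IsSESeq {A E B : ModuleCat.{u} Λ} (i : A ⟶ E) (p : E ⟶ B) : Prop :=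
  Function.Injective i ∧ Function.Surjective p ∧ LinearMap.range i.hom = LinearMap.ker p.hom

/-- A brick: a nonzero module whose endomorphism ring is a division ring, i.e. every
nonzero endomorphism is invertible. -/
def IsBrick (M : ModuleCat.{u} Λ) : Prop :=
  Nontrivial M ∧ ∀ f : M ⟶ M, f ≠ 0 → IsIso f

/-- `FiltBy S M`: `M` admits a finite filtration with subquotients isomorphic to `S`
(the smallest class containing `0` and `S` closed under isomorphisms and extensions). -/
inductive FiltBy (S : ModuleCat.{u} Λ) : ModuleCat.{u} Λ → Prop
  | self : FiltBy S S
  | zero (M : ModuleCat.{u} Λ) : Subsingleton M → FiltBy S M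
  | iso (M N : ModuleCat.{u} Λ) : FiltBy S M → (M ≅ N) → FiltBy S N
  | ext (A E B : ModuleCat.{u} Λ) (i : A ⟶ E) (p : E ⟶ B) :
      FiltBy S A → FiltBy S B → IsSESeq i p → FiltBy S E

/-- `g : T ⟶ A` is a left minimal `Filt S`-approximation: `A ∈ Filt S`, every map from `T`
to an object of `Filt S` factors through `g`, and `g` is left minimal. -/
def IsMinLeftApprox (S : ModuleCat.{u} Λ) {T A : ModuleCat.{u} Λ} (g : T ⟶ A) : Prop :=
  FiltBy S A ∧
  (∀ X : ModuleCat.{u} Λ, FiltBy S X → ∀ h : T ⟶ X, ∃ hfac : A ⟶ X, g ≫ hfac = h) ∧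
  (∀ φ : A ⟶ A, g ≫ φ = g → IsIso φ)

-- basic helpers
lemma mcomp_apply {M N P : ModuleCat.{u} Λ} (f : M ⟶ N) (g : N ⟶ P) (x : M) :
    (f ≫ g) x = g (f x) := rfl

lemma mzero_apply {M N : ModuleCat.{u} Λ} (x : M) : (0 : M ⟶ N) x = 0 := rfl

lemma mcongr_fun {M N : ModuleCat.{u} Λ} {f g : M ⟶ N} (h : f = g) (x : M) : f x = g x := by
  rw [h]

lemma hom_eq_zero_iff {M N : ModuleCat.{u} Λ} {f : M ⟶ N} : f = 0 ↔ ∀ x, f x = 0 := by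
  constructor
  · rintro rfl x; rfl
  · intro h; exact ModuleCat.hom_ext (LinearMap.ext h)

lemma filt_equiv {S M : ModuleCat.{u} Λ} {N : Type u} [AddCommGroup N] [Module Λ N]
    (h : FiltBy S M) (e : M ≃ₗ[Λ] N) : FiltBy S (ModuleCat.of Λ N) :=
  FiltBy.iso M _ h e.toModuleIso

lemma filt_ext {S E : ModuleCat.{u} Λ} (P : Submodule Λ E)
    (h1 : FiltBy S (ModuleCat.of Λ P)) (h2 : FiltBy S (ModuleCat.of Λ (E ⧸ P))) :
    FiltBy S E :=
  FiltBy.ext (ModuleCat.of Λ P) E (ModuleCat.of Λ (E ⧸ P))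
    (ModuleCat.ofHom P.subtype) (ModuleCat.ofHom P.mkQ) h1 h2
    ⟨P.injective_subtype, P.mkQ_surjective, by
      show LinearMap.range P.subtype = LinearMap.ker P.mkQ
      rw [Submodule.range_subtype, Submodule.ker_mkQ]⟩

lemma exists_factor {E B N : Type u} [AddCommGroup E] [Module Λ E] [AddCommGroup B] [Module Λ B]
    [AddCommGroup N] [Module Λ N] (p : E →ₗ[Λ] B) (hp : Function.Surjective p)
    (h : E →ₗ[Λ] N) (hle : LinearMap.ker p ≤ LinearMap.ker h) :
    ∃ h' : B →ₗ[Λ] N, (∀ x, h' (p x) = h x) ∧ LinearMap.range h' = LinearMap.range h := by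
  classical
  set e' : (E ⧸ LinearMap.ker p) →ₗ[Λ] B := Submodule.liftQ _ p le_rfl with he'
  have hsurj : Function.Surjective e' := by
    intro b; obtain ⟨x, rfl⟩ := hp b
    exact ⟨Submodule.Quotient.mk x, by rw [he', Submodule.liftQ_apply]⟩
  have hinj : Function.Injective e' := by
    rw [← LinearMap.ker_eq_bot, he', Submodule.ker_liftQ_eq_bot _ _ _ le_rfl]
  set e := LinearEquiv.ofBijective e' (⟨hinj, hsurj⟩ : Function.Bijective e') with he
  have hemk : ∀ x : E, e (Submodule.Quotient.mk x) = p x := fun x => by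
    show e' (Submodule.Quotient.mk x) = p x
    rw [he', Submodule.liftQ_apply]
  refine ⟨(Submodule.liftQ _ h hle) ∘ₗ (e.symm : B →ₗ[Λ] _), fun x => ?_, ?_⟩
  · have : e.symm (p x) = Submodule.Quotient.mk x := by
      apply e.injective; rw [LinearEquiv.apply_symm_apply, hemk]
    rw [LinearMap.comp_apply, LinearEquiv.coe_coe, this, Submodule.liftQ_apply]
  · rw [LinearMap.range_comp, LinearEquiv.range, Submodule.map_top, Submodule.range_liftQ]

lemma inj_of_ne_zero {S : ModuleCat.{u} Λ} (hS : IsBrick S) :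
    ∀ {N : ModuleCat.{u} Λ}, FiltBy S N → ∀ f : S ⟶ N, f ≠ 0 → Function.Injective f := by
  intro N hN
  induction hN with
  | self =>
    intro f hf
    have hiso : IsIso f := hS.2 f hf
    intro x y hxy
    have h1 := mcongr_fun (IsIso.hom_inv_id f) x
    have h2 := mcongr_fun (IsIso.hom_inv_id f) y
    rw [mcomp_apply] at h1 h2
    rw [show ((𝟙 S : S ⟶ S) x = x) from rfl] at h1
    rw [show ((𝟙 S : S ⟶ S) y = y) from rfl] at h2
    rw [← h1, ← h2, hxy]
  | zero M hM =>
    intro f hf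
    exact absurd (hom_eq_zero_iff.2 fun x => Subsingleton.elim _ _) hf
  | iso M N hM e IH =>
    intro f hf
    have h1 : f ≫ e.inv ≠ 0 := by
      intro h0
      apply hf
      have := congrArg (fun q => q ≫ e.hom) h0
      simpa [Category.assoc, e.inv_hom_id] using this
    have inj := IH (f ≫ e.inv) h1
    intro x y hxy
    exact inj (by rw [mcomp_apply, mcomp_apply, hxy])
  | ext A E B i p hA hB hs IH_A IH_B =>
    intro f hf
    obtain ⟨hi, hp, hrk⟩ := hs
    by_cases hfp : f ≫ p = 0
    · -- f lands in range i
      have hsub : ∀ c, f c ∈ LinearMap.range i.hom := by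
        intro c
        rw [hrk, LinearMap.mem_ker]
        exact mcongr_fun hfp c
      set e : A ≃ₗ[Λ] LinearMap.range i.hom := LinearEquiv.ofInjective i.hom hi with he
      have hie : ∀ y : LinearMap.range i.hom, i (e.symm y) = (y : E) := by
        intro y
        have : (e (e.symm y) : E) = (y : E) := by rw [LinearEquiv.apply_symm_apply]
        rwa [he, LinearEquiv.ofInjective_apply] at this
      set f' : S →ₗ[Λ] A :=
        (e.symm : LinearMap.range i.hom →ₗ[Λ] A) ∘ₗ
          LinearMap.codRestrict (LinearMap.range i.hom) f.hom hsub with hf'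
      have hif' : ∀ c, i (f' c) = f c := by
        intro c
        rw [hf', LinearMap.comp_apply, LinearEquiv.coe_coe, hie]
        rfl
      have hf'0 : ModuleCat.ofHom f' ≠ 0 := by
        intro h0
        apply hf
        rw [hom_eq_zero_iff]
        intro c
        rw [← hif' c, show (f' : S →ₗ[Λ] A) c = (0 : S ⟶ A) c from by rw [← h0]; rfl, mzero_apply,
          map_zero]
      have inj' := IH_A (ModuleCat.ofHom f') hf'0
      intro x y hxy
      exact inj' (hi (show i (f' x) = i (f' y) by rw [hif', hif', hxy]))
    · have inj2 := IH_B (f ≫ p) hfp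
      intro x y hxy
      exact inj2 (by rw [mcomp_apply, mcomp_apply, hxy])

noncomputable def quotCompEquiv {E B : Type u} [AddCommGroup E] [Module Λ E] [AddCommGroup B]
    [Module Λ B] (p : E →ₗ[Λ] B) (hp : Function.Surjective p) (W : Submodule Λ B) :
    (E ⧸ W.comap p) ≃ₗ[Λ] (B ⧸ W) :=
  (Submodule.quotEquivOfEq _ _
      (by rw [LinearMap.ker_comp, Submodule.ker_mkQ] :
        LinearMap.ker (W.mkQ ∘ₗ p) = W.comap p).symm).trans
    (LinearMap.quotKerEquivOfSurjective _ ((Submodule.mkQ_surjective W).comp hp))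

lemma filt_coker_inj {S : ModuleCat.{u} Λ} (hS : IsBrick S) :
    ∀ {N : ModuleCat.{u} Λ}, FiltBy S N → ∀ j : S ⟶ N, Function.Injective j →
      FiltBy S (ModuleCat.of Λ (↥N ⧸ LinearMap.range j.hom)) := by
  intro N hN
  induction hN with
  | self =>
    intro j hj
    have hj0 : j ≠ 0 := by
      intro h0
      obtain ⟨x, y, hxy⟩ := hS.1
      exact hxy (hj (by rw [h0, mzero_apply, mzero_apply]))
    have hiso : IsIso j := hS.2 j hj0
    have hsurj : Function.Surjective j := by
      intro y
      refine ⟨(inv j) y, ?_⟩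
      have := mcongr_fun (IsIso.inv_hom_id j) y
      rwa [mcomp_apply] at this
    have : LinearMap.range j.hom = ⊤ := LinearMap.range_eq_top.2 hsurj
    refine FiltBy.zero _ ?_
    show Subsingleton (↥S ⧸ LinearMap.range j.hom)
    rw [this]
    exact Submodule.Quotient.subsingleton_iff.2 rfl
  | zero M hM =>
    intro j hj
    obtain ⟨x, y, hxy⟩ := hS.1
    exact absurd (hj (Subsingleton.elim _ _)) hxy
  | iso M N hM e IH =>
    intro j hj
    have hj' : Function.Injective (j ≫ e.inv) := by
      intro x y hxy
      apply hj
      have := congrArg e.hom hxy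
      rw [mcomp_apply, mcomp_apply] at this
      have h1 := mcongr_fun e.inv_hom_id (j x)
      have h2 := mcongr_fun e.inv_hom_id (j y)
      rw [mcomp_apply] at h1 h2
      rw [h1, h2] at this
      exact this
    have hIH := IH (j ≫ e.inv) hj'
    have hcoe : ∀ s : ↥S, e.toLinearEquiv ((j ≫ e.inv) s) = j s := by
      intro s
      show ((j ≫ e.inv) ≫ e.hom) s = j s
      rw [Category.assoc, e.inv_hom_id, Category.comp_id]
    refine filt_equiv hIH (Submodule.Quotient.equiv _ _ e.toLinearEquiv ?_)
    -- map of range (j ≫ e.inv) under e.hom is range j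
    ext y
    simp only [Submodule.mem_map, LinearMap.mem_range]
    constructor
    · rintro ⟨x, ⟨s, rfl⟩, rfl⟩
      exact ⟨s, (hcoe s).symm⟩
    · rintro ⟨s, rfl⟩
      exact ⟨(j ≫ e.inv) s, ⟨s, rfl⟩, hcoe s⟩
  | ext A E B i p hA hB hs IH_A IH_B =>
    intro j hj
    obtain ⟨hi, hp, hrk⟩ := hs
    set R : Submodule Λ ↥E := LinearMap.range j.hom with hR
    set k : ↥A →ₗ[Λ] (↥E ⧸ R) := R.mkQ ∘ₗ i.hom with hk
    set Q : Submodule Λ (↥E ⧸ R) := LinearMap.range k with hQ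
    have hrangeQ : Q = Submodule.map R.mkQ (LinearMap.range i.hom) := by
      rw [hQ, hk, LinearMap.range_comp]
    have hpi : ∀ a, p (i a) = 0 := fun a =>
      LinearMap.mem_ker.1 (hrk ▸ LinearMap.mem_range_self i.hom a)
    -- the double quotient is E ⧸ (R ⊔ range i)
    have hqq : ((↥E ⧸ R) ⧸ Q) ≃ₗ[Λ] (↥E ⧸ (R ⊔ LinearMap.range i.hom)) :=
      (Submodule.quotEquivOfEq _ _ (by rw [hrangeQ])).trans
        (Submodule.quotientQuotientEquivQuotientSup R (LinearMap.range i.hom))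
    by_cases hjp : j ≫ p = 0
    · -- j lands in range i
      have hsub : ∀ c, j c ∈ LinearMap.range i.hom := by
        intro c
        rw [hrk, LinearMap.mem_ker]
        exact mcongr_fun hjp c
      set e0 : ↥A ≃ₗ[Λ] LinearMap.range i.hom :=
        LinearEquiv.ofInjective i.hom hi with he0
      have hie : ∀ y : LinearMap.range i.hom, i (e0.symm y) = (y : ↥E) := by
        intro y
        have : (e0 (e0.symm y) : ↥E) = (y : ↥E) := by rw [LinearEquiv.apply_symm_apply]
        rwa [he0, LinearEquiv.ofInjective_apply] at this
      set j' : ↥S →ₗ[Λ] ↥A :=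
        (e0.symm : LinearMap.range i.hom →ₗ[Λ] ↥A) ∘ₗ
          LinearMap.codRestrict _ j.hom hsub with hj'
      have hij' : ∀ c, i (j' c) = j c := by
        intro c
        rw [hj', LinearMap.comp_apply, LinearEquiv.coe_coe, hie]
        rfl
      have inj' : Function.Injective j' := by
        intro x y hxy
        exact hj (by rw [← hij' x, ← hij' y, hxy])
      have hQA := IH_A (ModuleCat.ofHom j') inj'
      have hkerk : LinearMap.ker k = LinearMap.range j' := by
        ext a
        rw [LinearMap.mem_ker, hk, LinearMap.comp_apply, Submodule.mkQ_apply,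
          Submodule.Quotient.mk_eq_zero]
        constructor
        · rintro hmem
          obtain ⟨s, hs⟩ := hmem
          exact ⟨s, hi (by rw [hij', hs])⟩
        · rintro ⟨s, rfl⟩
          exact ⟨s, (hij' s).symm⟩
      have hRle : R ≤ LinearMap.range i.hom := by
        rintro x ⟨s, rfl⟩
        exact hsub s
      apply filt_ext (S := S) (E := ModuleCat.of Λ (↥E ⧸ R)) Q
      ·
        refine filt_equiv hQA ?_
        rw [hQ]
        exact (Submodule.quotEquivOfEq _ _ hkerk.symm).trans k.quotKerEquivRange
      ·
        refine filt_equiv hB ?_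
        refine (hqq.trans ((Submodule.quotEquivOfEq _ _ ?_).trans
          (LinearMap.quotKerEquivOfSurjective p.hom hp))).symm
        rw [sup_eq_right.2 hRle, hrk]
    · -- p ∘ j is a nonzero, hence injective, map S → B
      have hpj_inj : Function.Injective (j ≫ p) := inj_of_ne_zero hS hB (j ≫ p) hjp
      have kinj : Function.Injective k := by
        have hz : ∀ a, k a = 0 → a = 0 := by
          intro a ha
          rw [hk, LinearMap.comp_apply, Submodule.mkQ_apply, Submodule.Quotient.mk_eq_zero] at ha
          obtain ⟨s, hs⟩ := ha
          have hs0 : s = 0 := by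
            apply hpj_inj
            show p (j s) = (j ≫ p) 0
            rw [hs, hpi, map_zero]
          apply hi
          rw [← hs, hs0]
          simp
        intro x y hxy
        have := hz (x - y) (by rw [map_sub, hxy, sub_self])
        exact sub_eq_zero.mp this
      have hcomap : R ⊔ LinearMap.range i.hom =
          Submodule.comap p.hom (LinearMap.range (j ≫ p).hom) := by
        apply le_antisymm
        · apply sup_le
          · rintro x ⟨s, rfl⟩
            exact ⟨s, rfl⟩
          · rintro x ⟨a, rfl⟩
            rw [Submodule.mem_comap, hpi]
            exact Submodule.zero_mem _
        · rintro x hx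
          obtain ⟨s, hs⟩ := hx
          have : p (x - j s) = 0 := by
            rw [map_sub]
            show p x - (j ≫ p) s = 0
            rw [hs, sub_self]
          obtain ⟨a, ha⟩ : x - j s ∈ LinearMap.range i.hom := by
            rw [hrk]; exact this
          refine Submodule.mem_sup.2 ⟨j s, ⟨s, rfl⟩, i a, ⟨a, rfl⟩, ?_⟩
          rw [ha]
          abel
      have hIB := IH_B (j ≫ p) hpj_inj
      apply filt_ext (S := S) (E := ModuleCat.of Λ (↥E ⧸ R)) Q
      ·
        refine filt_equiv hA ?_
        rw [hQ]
        exact LinearEquiv.ofInjective k kinj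
      ·
        refine filt_equiv hIB ?_
        exact (hqq.trans ((Submodule.quotEquivOfEq _ _ hcomap).trans
          (quotCompEquiv p.hom hp _))).symm

lemma filt_coker {S : ModuleCat.{u} Λ} (hS : IsBrick S) :
    ∀ {A : ModuleCat.{u} Λ}, FiltBy S A → ∀ {N : ModuleCat.{u} Λ}, FiltBy S N →
      ∀ h : A ⟶ N, FiltBy S (ModuleCat.of Λ (↥N ⧸ LinearMap.range h.hom)) := by
  intro A hA
  induction hA with
  | self =>
    intro N hN h
    by_cases h0 : h = 0
    · have hb : LinearMap.range h.hom = ⊥ := by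
        rw [eq_bot_iff]
        rintro x ⟨c, rfl⟩
        show h c ∈ (⊥ : Submodule Λ ↥N)
        rw [h0, mzero_apply]
        exact Submodule.zero_mem _
      exact filt_equiv hN (Submodule.quotEquivOfEqBot _ hb).symm
    · exact filt_coker_inj hS hN h (inj_of_ne_zero hS hN h h0)
  | zero M hM =>
    intro N hN h
    have hb : LinearMap.range h.hom = ⊥ := by
      rw [eq_bot_iff]
      rintro x ⟨c, rfl⟩
      show h c ∈ (⊥ : Submodule Λ ↥N)
      rw [Subsingleton.elim c 0, map_zero]
      exact Submodule.zero_mem _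
    exact filt_equiv hN (Submodule.quotEquivOfEqBot _ hb).symm
  | iso M M' hM e IH =>
    intro N hN h
    have hIH := IH hN (e.hom ≫ h)
    refine filt_equiv hIH (Submodule.quotEquivOfEq _ _ ?_)
    ext y
    constructor
    · rintro ⟨x, rfl⟩
      exact ⟨e.hom x, rfl⟩
    · rintro ⟨x, rfl⟩
      refine ⟨e.inv x, ?_⟩
      show h (e.hom (e.inv x)) = h x
      congr 1
      exact mcongr_fun e.inv_hom_id x
  | ext A₀ A' B₀ i p hA₀ hB₀ hs IH_A IH_B =>
    intro N hN h
    obtain ⟨hi, hp, hrk⟩ := hs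
    set W : Submodule Λ ↥N := LinearMap.range (i ≫ h).hom with hW
    have hN₁ : FiltBy S (ModuleCat.of Λ (↥N ⧸ W)) := IH_A hN (i ≫ h)
    set h₂ : ↥A' →ₗ[Λ] (↥N ⧸ W) := W.mkQ ∘ₗ h.hom with hh₂
    have hle : LinearMap.ker p.hom ≤ LinearMap.ker h₂ := by
      intro x hx
      obtain ⟨a, rfl⟩ : x ∈ LinearMap.range i.hom := by rw [hrk]; exact hx
      show h₂ (i a) = 0
      rw [hh₂, LinearMap.comp_apply, Submodule.mkQ_apply, Submodule.Quotient.mk_eq_zero]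
      exact ⟨a, rfl⟩
    obtain ⟨h', hfac, hrange⟩ := exists_factor p.hom hp h₂ hle
    have hB2 := IH_B hN₁ (ModuleCat.ofHom h' : B₀ ⟶ ModuleCat.of Λ (↥N ⧸ W))
    have hWle : W ≤ LinearMap.range h.hom := by
      rintro x ⟨a, rfl⟩
      exact ⟨i a, rfl⟩
    refine filt_equiv hB2 ((Submodule.quotEquivOfEq _ _ ?_).trans
      (Submodule.quotientQuotientEquivQuotient W (LinearMap.range h.hom) hWle))
    rw [ModuleCat.hom_ofHom, hrange, hh₂, LinearMap.range_comp]

lemma filt_ker {S : ModuleCat.{u} Λ} (hS : IsBrick S) :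
    ∀ {E : ModuleCat.{u} Λ}, FiltBy S E → ∀ {N : ModuleCat.{u} Λ}, FiltBy S N →
      ∀ f : E ⟶ N, FiltBy S (ModuleCat.of Λ ↥(LinearMap.ker f.hom)) := by
  intro E hE
  induction hE with
  | self =>
    intro N hN f
    by_cases f0 : f = 0
    · have htop : LinearMap.ker f.hom = ⊤ := by
        rw [eq_top_iff]
        intro x _
        show f x = 0
        rw [f0, mzero_apply]
      exact filt_equiv FiltBy.self (Submodule.topEquiv.symm.trans (LinearEquiv.ofEq _ _ htop.symm))
    · have inj := inj_of_ne_zero hS hN f f0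
      refine FiltBy.zero _ ?_
      show Subsingleton ↥(LinearMap.ker f.hom)
      rw [LinearMap.ker_eq_bot.2 inj]
      infer_instance
  | zero M hM =>
    intro N hN f
    haveI := hM
    exact FiltBy.zero _ (by show Subsingleton ↥(LinearMap.ker f.hom); infer_instance)
  | iso M M' hM e IH =>
    intro N hN f
    have hIH := IH hN (e.hom ≫ f)
    have hmap : Submodule.map (e.toLinearEquiv : ↥M →ₗ[Λ] ↥M') (LinearMap.ker (e.hom ≫ f).hom) =
        LinearMap.ker f.hom := by
      ext y
      simp only [Submodule.mem_map, LinearMap.mem_ker]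
      constructor
      · rintro ⟨x, hx, rfl⟩
        exact hx
      · intro hy
        refine ⟨e.inv y, ?_, ?_⟩
        · show f (e.hom (e.inv y)) = 0
          have h3 : e.hom (e.inv y) = y := mcongr_fun e.inv_hom_id y
          rw [h3]
          exact hy
        · show e.hom (e.inv y) = y
          exact mcongr_fun e.inv_hom_id y
    exact filt_equiv hIH ((e.toLinearEquiv.submoduleMap _).trans (LinearEquiv.ofEq _ _ hmap))
  | ext A E' B i p hA hB hs IH_A IH_B =>
    intro N hN f
    obtain ⟨hi, hp, hrk⟩ := hs
    set K : Submodule Λ ↥E' := LinearMap.ker f.hom with hK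
    have hKA := IH_A hN (i ≫ f)
    set W : Submodule Λ ↥N := LinearMap.range (i ≫ f).hom with hWdef
    have hN₁ : FiltBy S (ModuleCat.of Λ (↥N ⧸ W)) := filt_coker hS hA hN (i ≫ f)
    set h₂ : ↥E' →ₗ[Λ] (↥N ⧸ W) := W.mkQ ∘ₗ f.hom with hh₂
    have hle : LinearMap.ker p.hom ≤ LinearMap.ker h₂ := by
      intro x hx
      obtain ⟨a, rfl⟩ : x ∈ LinearMap.range i.hom := by rw [hrk]; exact hx
      show h₂ (i a) = 0
      rw [hh₂, LinearMap.comp_apply, Submodule.mkQ_apply, Submodule.Quotient.mk_eq_zero]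
      exact ⟨a, rfl⟩
    obtain ⟨f', hfac, -⟩ := exists_factor p.hom hp h₂ hle
    have hKB := IH_B hN₁ (ModuleCat.ofHom f' : B ⟶ ModuleCat.of Λ (↥N ⧸ W))
    set ψ : ↥K →ₗ[Λ] ↥B := p.hom ∘ₗ K.subtype with hψ
    set J : Submodule Λ ↥E' := LinearMap.range i.hom ⊓ K with hJdef
    have hJK : J ≤ K := inf_le_right
    have hJ : LinearMap.ker ψ = Submodule.comap K.subtype J := by
      ext x
      show p (x : ↥E') = 0 ↔ _
      rw [Submodule.mem_comap, hJdef, Submodule.mem_inf]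
      constructor
      · intro hx
        exact ⟨by rw [hrk]; exact hx, x.2⟩
      · intro hx
        have : (x : ↥E') ∈ LinearMap.ker p.hom := by rw [← hrk]; exact hx.1
        exact this
    -- J ≃ ker (i ≫ f)
    have hm : ∀ x ∈ LinearMap.ker (i ≫ f).hom, i x ∈ J := by
      intro x hx
      exact ⟨⟨x, rfl⟩, hx⟩
    set m : ↥(LinearMap.ker (i ≫ f).hom) →ₗ[Λ] ↥J := i.hom.restrict hm with hm'
    have mbij : Function.Bijective m := by
      constructor
      · intro x y hxy
        apply Subtype.ext
        apply hi
        have := congrArg (Subtype.val) hxy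
        exact this
      · rintro ⟨x, ⟨⟨a, rfl⟩, hxK⟩⟩
        refine ⟨⟨a, hxK⟩, Subtype.ext rfl⟩
    -- range ψ = ker f'
    have hker : LinearMap.range ψ = LinearMap.ker f' := by
      ext b
      constructor
      · rintro ⟨x, rfl⟩
        show f' (p (x : ↥E')) = 0
        rw [hfac, hh₂, LinearMap.comp_apply, Submodule.mkQ_apply, Submodule.Quotient.mk_eq_zero]
        have : f (x : ↥E') = 0 := x.2
        rw [this]
        exact Submodule.zero_mem _
      · intro hb
        obtain ⟨x₀, rfl⟩ := hp b
        have h0 : f' (p x₀) = 0 := hb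
        rw [hfac, hh₂, LinearMap.comp_apply, Submodule.mkQ_apply,
          Submodule.Quotient.mk_eq_zero] at h0
        obtain ⟨a, ha⟩ := h0
        have hxK : x₀ - i a ∈ K := by
          show f (x₀ - i a) = 0
          rw [map_sub]
          show f x₀ - (i ≫ f) a = 0
          rw [ha, sub_self]
        refine ⟨⟨x₀ - i a, hxK⟩, ?_⟩
        show p (x₀ - i a) = p x₀
        have hpia : p (i a) = 0 :=
          LinearMap.mem_ker.1 (hrk ▸ LinearMap.mem_range_self i.hom a)
        rw [map_sub, hpia, sub_zero]
    apply filt_ext (S := S) (E := ModuleCat.of Λ ↥K) (LinearMap.ker ψ)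
    · refine filt_equiv hKA ?_
      exact (LinearEquiv.ofBijective m mbij).trans
        ((Submodule.comapSubtypeEquivOfLe hJK).symm.trans (LinearEquiv.ofEq _ _ hJ.symm))
    · refine filt_equiv hKB ?_
      exact (LinearEquiv.ofEq _ _ hker.symm).trans ψ.quotKerEquivRange.symm

/-- Let `Λ` be a finite-dimensional algebra and `S` a brick. If
`g : T ⟶ A` is a left minimal `Filt S`-approximation and `f : A ⟶ X` with
`X ∈ Filt S` satisfies `f ∘ g = 0`, then `f = 0`; consequently composition with `g`
induces a bijection `Hom(A, X) → Hom(T, X)`. -/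
theorem stmt0 {K : Type} [Field K] {Λ : Type} [Ring Λ] [Algebra K Λ] [FiniteDimensional K Λ]
    (S T A : ModuleCat Λ) (hS : IsBrick S) (g : T ⟶ A) (hg : IsMinLeftApprox S g)
    (X : ModuleCat Λ) (hX : FiltBy S X) :
    (∀ f : A ⟶ X, g ≫ f = 0 → f = 0) ∧
    Function.Bijective (fun φ : A ⟶ X => g ≫ φ) := by
  obtain ⟨hAF, happrox, hmin⟩ := hg
  have main : ∀ f : A ⟶ X, g ≫ f = 0 → f = 0 := by
    intro f hf0
    set Kr : Submodule Λ ↥A := LinearMap.ker f.hom with hKr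
    have hKF : FiltBy S (ModuleCat.of Λ ↥Kr) := filt_ker hS hAF hX f
    have hgmem : ∀ t, g t ∈ Kr := by
      intro t
      show f (g t) = 0
      exact mcongr_fun hf0 t
    set g' : ↥T →ₗ[Λ] ↥Kr := LinearMap.codRestrict Kr g.hom hgmem with hg'
    obtain ⟨k, hk⟩ := happrox (ModuleCat.of Λ ↥Kr) hKF (ModuleCat.ofHom g' : T ⟶ ModuleCat.of Λ ↥Kr)
    set φ : A ⟶ A := k ≫ (ModuleCat.ofHom Kr.subtype : ModuleCat.of Λ ↥Kr ⟶ A) with hφdef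
    have hφ : g ≫ φ = g := by
      refine ModuleCat.hom_ext (LinearMap.ext ?_)
      intro t
      show Kr.subtype (k (g t)) = g t
      have h1 : k (g t) = g' t := mcongr_fun hk t
      rw [h1]
      rfl
    have hiso := hmin φ hφ
    have hsurf : Function.Surjective φ := fun y =>
      ⟨(inv φ) y, mcongr_fun (IsIso.inv_hom_id φ) y⟩
    refine ModuleCat.hom_ext (LinearMap.ext ?_)
    intro x
    obtain ⟨y, rfl⟩ := hsurf x
    show f (Kr.subtype (k y)) = 0
    exact (k y).2
  refine ⟨main, ?_, ?_⟩
  · intro φ₁ φ₂ h12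
    have h12' : g ≫ φ₁ = g ≫ φ₂ := h12
    have hz : g ≫ (φ₁ - φ₂) = 0 := by
      rw [Preadditive.comp_sub, h12', sub_self]
    have := main _ hz
    exact sub_eq_zero.mp this
  · intro ψ
    obtain ⟨k, hk⟩ := happrox X hX ψ
    exact ⟨k, hk⟩
end

section
/- Let Λ be a finite-dimensional algebra, S a brick, T a module, and g : T → S_T a left minimal Filt(S)-approximation. Then the induced map Ext¹(S_T, S) → Ext¹(T, S) given by pullback along g is injective. -/
open CategoryTheory

universe u

variable {Λ : Type u} [Ring Λ]

/-- Let `Λ` be a finite-dimensional algebra, `S` a brick, and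
`g : T ⟶ A` a left minimal `Filt S`-approximation. Then the pullback map
`Ext¹(A, S) → Ext¹(T, S)` along `g` is injective: if a short exact sequence
`S ↪ E ↠ A` becomes split after pulling back along `g` (i.e. `g` lifts to `E`),
then it was already split. -/
theorem stmt1 {K : Type} [Field K] {Λ : Type} [Ring Λ] [Algebra K Λ] [FiniteDimensional K Λ]
    (S T A : ModuleCat Λ) (hS : IsBrick S) (g : T ⟶ A) (hg : IsMinLeftApprox S g) :
    ∀ (E : ModuleCat Λ) (i : S ⟶ E) (p : E ⟶ A), IsSESeq i p →
      (∃ h : T ⟶ E, h ≫ p = g) → (∃ s : A ⟶ E, s ≫ p = 𝟙 A) := by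
  rintro E i p hses ⟨h, hh⟩
  have hE : FiltBy S E := FiltBy.ext S E A i p FiltBy.self hg.1 hses
  obtain ⟨f, hf⟩ := hg.2.1 E hE h
  have hcomp : g ≫ (f ≫ p) = g := by rw [← Category.assoc, hf, hh]
  have hiso := hg.2.2 (f ≫ p) hcomp
  exact ⟨inv (f ≫ p) ≫ f, by rw [Category.assoc, IsIso.inv_hom_id]⟩
end

section
/- Let Λ be a finite-dimensional algebra and S, T bricks in mod Λ with Hom(T, S) = 0. For a module E, the Hall number counting submodules T' ⊆ E with T' ≅ T and E/T' ≅ S equals 1 if there exists a short exact sequence 0 → T → E → S → 0, and equals 0 otherwise. -/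
/-!
If `Hom(T, S) = 0`, then for submodules `T', T''` of `E` with `T' ≅ T` and `E/T'' ≅ S` the
composite `T' ↪ E ↠ E/T''` is a map `T → S`, hence zero, so `T' ≤ T''`. Thus at most one
submodule has both properties, and one exists exactly when a short exact sequence
`0 → T → E → S → 0` does: take the image of `T`.
-/

/-- A brick: a nonzero module whose endomorphism ring is a division ring, i.e. every
nonzero endomorphism is invertible. -/
def IsBrickMod (Λ : Type) [Ring Λ] (M : Type) [AddCommGroup M] [Module Λ M] : Prop :=
  Nontrivial M ∧ ∀ f : M →ₗ[Λ] M, f ≠ 0 → Function.Bijective f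

section HallSubmodule

variable {Λ : Type*} [Ring Λ] {S T E : Type*} [AddCommGroup S] [Module Λ S]
  [AddCommGroup T] [Module Λ T] [AddCommGroup E] [Module Λ E]

theorem Submodule.le_of_linearMap_eq_zero (hHom : ∀ f : T →ₗ[Λ] S, f = 0)
    {N₁ N₂ : Submodule Λ E} (e₁ : N₁ ≃ₗ[Λ] T) (e₂ : (E ⧸ N₂) ≃ₗ[Λ] S) : N₁ ≤ N₂ := by
  intro x hx
  have h := congr($(hHom (e₂.toLinearMap ∘ₗ N₂.mkQ ∘ₗ N₁.subtype ∘ₗ e₁.symm.toLinearMap))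
    (e₁ ⟨x, hx⟩))
  simp only [LinearMap.comp_apply, LinearEquiv.coe_coe, LinearEquiv.symm_apply_apply,
    Submodule.coe_subtype, LinearMap.zero_apply, LinearEquiv.map_eq_zero_iff] at h
  rwa [Submodule.mkQ_apply, Submodule.Quotient.mk_eq_zero] at h

theorem exists_shortExact_iff_exists_submodule :
    (∃ (f : T →ₗ[Λ] E) (g : E →ₗ[Λ] S), Function.Injective f ∧ Function.Surjective g ∧
        LinearMap.range f = LinearMap.ker g) ↔
      ∃ N : Submodule Λ E, Nonempty (N ≃ₗ[Λ] T) ∧ Nonempty ((E ⧸ N) ≃ₗ[Λ] S) := by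
  constructor
  · rintro ⟨f, g, hf, hg, hfg⟩
    exact ⟨LinearMap.range f, ⟨(LinearEquiv.ofInjective f hf).symm⟩,
      ⟨(Submodule.quotEquivOfEq _ _ hfg).trans (g.quotKerEquivOfSurjective hg)⟩⟩
  · rintro ⟨N, ⟨e₁⟩, ⟨e₂⟩⟩
    refine ⟨N.subtype ∘ₗ e₁.symm.toLinearMap, e₂.toLinearMap ∘ₗ N.mkQ,
      N.injective_subtype.comp e₁.symm.injective, e₂.surjective.comp N.mkQ_surjective, ?_⟩
    rw [LinearMap.range_comp, LinearEquiv.range, Submodule.map_top, Submodule.range_subtype,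
      LinearMap.ker_comp, LinearEquiv.ker, Submodule.comap_bot, Submodule.ker_mkQ]

end HallSubmodule

theorem stmt4_general {Λ : Type} [Ring Λ]
    (S T E : Type) [AddCommGroup S] [Module Λ S] [AddCommGroup T] [Module Λ T]
    [AddCommGroup E] [Module Λ E]
    (hHom : ∀ f : T →ₗ[Λ] S, f = 0) :
    ((∃ (f : T →ₗ[Λ] E) (g : E →ₗ[Λ] S), Function.Injective f ∧ Function.Surjective g ∧
        LinearMap.range f = LinearMap.ker g) →
      {T' : Submodule Λ E | Nonempty (T' ≃ₗ[Λ] T) ∧ Nonempty ((E ⧸ T') ≃ₗ[Λ] S)}.ncard = 1) ∧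
    (¬ (∃ (f : T →ₗ[Λ] E) (g : E →ₗ[Λ] S), Function.Injective f ∧ Function.Surjective g ∧
        LinearMap.range f = LinearMap.ker g) →
      {T' : Submodule Λ E | Nonempty (T' ≃ₗ[Λ] T) ∧ Nonempty ((E ⧸ T') ≃ₗ[Λ] S)}.ncard = 0) := by
  set X := {T' : Submodule Λ E | Nonempty (T' ≃ₗ[Λ] T) ∧ Nonempty ((E ⧸ T') ≃ₗ[Λ] S)}
  have hX : X.Subsingleton := fun N₁ ⟨⟨e₁⟩, ⟨e₁'⟩⟩ N₂ ⟨⟨e₂⟩, ⟨e₂'⟩⟩ =>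
    le_antisymm (Submodule.le_of_linearMap_eq_zero hHom e₁ e₂')
      (Submodule.le_of_linearMap_eq_zero hHom e₂ e₁')
  rw [exists_shortExact_iff_exists_submodule]
  refine ⟨fun ⟨N, hN⟩ => Set.ncard_eq_one.2 ⟨N, hX.eq_singleton_of_mem hN⟩, fun h => ?_⟩
  have hX_eq_empty : X = ∅ := Set.eq_empty_of_forall_notMem fun N hN => h ⟨N, hN⟩
  rw [hX_eq_empty, Set.ncard_empty]

/-- Let `Λ` be a finite-dimensional algebra and `S`, `T` bricks with
`Hom(T, S) = 0`. For a module `E`, the Hall number counting submodules `T' ⊆ E` with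
`T' ≅ T` and `E/T' ≅ S` equals `1` if there is a short exact sequence
`0 → T → E → S → 0`, and equals `0` otherwise. -/
theorem stmt4 {K : Type} [Field K] {Λ : Type} [Ring Λ] [Algebra K Λ] [FiniteDimensional K Λ]
    (S T E : Type) [AddCommGroup S] [Module Λ S] [AddCommGroup T] [Module Λ T]
    [AddCommGroup E] [Module Λ E]
    [Module.Finite Λ S] [Module.Finite Λ T] [Module.Finite Λ E]
    (hS : IsBrickMod Λ S) (hT : IsBrickMod Λ T)
    (hHom : ∀ f : T →ₗ[Λ] S, f = 0) :
    ((∃ (f : T →ₗ[Λ] E) (g : E →ₗ[Λ] S), Function.Injective f ∧ Function.Surjective g ∧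
        LinearMap.range f = LinearMap.ker g) →
      {T' : Submodule Λ E | Nonempty (T' ≃ₗ[Λ] T) ∧ Nonempty ((E ⧸ T') ≃ₗ[Λ] S)}.ncard = 1) ∧
    (¬ (∃ (f : T →ₗ[Λ] E) (g : E →ₗ[Λ] S), Function.Injective f ∧ Function.Surjective g ∧
        LinearMap.range f = LinearMap.ker g) →
      {T' : Submodule Λ E | Nonempty (T' ≃ₗ[Λ] T) ∧ Nonempty ((E ⧸ T') ≃ₗ[Λ] S)}.ncard = 0) :=
  stmt4_general S T E hHom
end

section
/- Let Λ be a finite-dimensional algebra and X = S_p ⊔ S_n[1] a semibrick pair which is singly left mutation compatible at S ∈ S_p. Then for every T ∈ X with T ≠ S, the cone of a left minimal Filt(S)-approximation g : T[-1] → S_T in the bounded derived category is a brick (has division endomorphism ring). -/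
open CategoryTheory

universe u

variable {Λ : Type u} [Ring Λ]

/-- A semibrick pair \`X = Sp ⊔ Sn[1]\`: \`Sp\` and \`Sn\` are semibricks (sets of pairwise
Hom-orthogonal bricks) with \`Hom(Sp, Sn) = 0\` and \`Ext¹(Sp, Sn) = 0\` (every short exact
sequence with sub in \`Sn\` and quotient in \`Sp\` splits). -/
def IsSemibrickPair (Sp Sn : Set (ModuleCat.{u} Λ)) : Prop :=
  (∀ M ∈ Sp, IsBrick M) ∧ (∀ M ∈ Sn, IsBrick M) ∧
  (∀ M ∈ Sp, ∀ N ∈ Sp, M ≠ N → ∀ f : M ⟶ N, f = 0) ∧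
  (∀ M ∈ Sn, ∀ N ∈ Sn, M ≠ N → ∀ f : M ⟶ N, f = 0) ∧
  (∀ M ∈ Sp, ∀ N ∈ Sn, ∀ f : M ⟶ N, f = 0) ∧
  (∀ M ∈ Sp, ∀ N ∈ Sn, ∀ (E : ModuleCat.{u} Λ) (i : N ⟶ E) (p : E ⟶ M),
    IsSESeq i p → ∃ r : E ⟶ N, i ≫ r = 𝟙 N)

/-- The short exact sequence `A ↪ E ↠ T` (an extension class in `Ext¹(T, A)`, i.e. a map
`T[-1] ⟶ A` in the derived category) is a left minimal `Filt S`-approximation of `T[-1]`: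
`A ∈ Filt S`, every extension of `T` by an object of `Filt S` is a pushout of it, and it is
left minimal. -/
def IsMinExtApprox (S T A E : ModuleCat.{u} Λ) (i : A ⟶ E) (p : E ⟶ T) : Prop :=
  FiltBy S A ∧ IsSESeq i p ∧
  (∀ X : ModuleCat.{u} Λ, FiltBy S X →
    ∀ (F : ModuleCat.{u} Λ) (i' : X ⟶ F) (p' : F ⟶ T), IsSESeq i' p' →
      ∃ (h : A ⟶ X) (k : E ⟶ F), i ≫ k = h ≫ i' ∧ k ≫ p' = p) ∧
  (∀ φ : A ⟶ A, (∃ k : E ⟶ E, i ≫ k = φ ≫ i ∧ k ≫ p = p) → IsIso φ)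

/-- `X = Sp ⊔ Sn[1]` is singly left mutation compatible at `S ∈ Sp`: for every `T ∈ Sn`,
any left minimal `Filt S`-approximation `T ⟶ S_T` is a monomorphism or an epimorphism. -/
def SinglyLeftMutCompatAt (Sp Sn : Set (ModuleCat.{u} Λ)) (S : ModuleCat.{u} Λ) : Prop :=
  S ∈ Sp ∧ ∀ T ∈ Sn, ∀ (A : ModuleCat.{u} Λ) (g : T ⟶ A),
    IsMinLeftApprox S g → Mono g ∨ Epi g

namespace SBAux

open Function CategoryTheory LinearMap

variable {Λ : Type u} [Ring Λ]




lemma lapp {A B : ModuleCat.{u} Λ} {f g : A ⟶ B} (h : f = g) (x : A) : f x = g x := by rw [h]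

lemma hom_ne_zero_iff {A B : ModuleCat.{u} Λ} (f : A ⟶ B) : f ≠ 0 ↔ ∃ x, f x ≠ 0 := by
  constructor
  · intro h
    by_contra hc
    push_neg at hc
    exact h (by ext x; exact hc x)
  · rintro ⟨x, hx⟩ h
    exact hx (by rw [h]; rfl)

lemma isIso_of_bijective {A B : ModuleCat.{u} Λ} (f : A ⟶ B) (h : Function.Bijective f) :
    IsIso f := by
  rw [ConcreteCategory.isIso_iff_bijective]; exact h

lemma bijective_of_isIso {A B : ModuleCat.{u} Λ} (f : A ⟶ B) (h : IsIso f) :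
    Function.Bijective f := by
  haveI := h
  exact ConcreteCategory.bijective_of_isIso f

lemma injective_of_sub {A B : ModuleCat.{u} Λ} {f : A ⟶ B} (h : ∀ x, f x = 0 → x = 0) :
    Function.Injective f := by
  intro x y hxy
  have : f (x - y) = 0 := by rw [map_sub, hxy, sub_self]
  have := h _ this
  rwa [sub_eq_zero] at this

/-- descend a morphism along a surjection whose kernel it kills -/
noncomputable def desc {E B W : ModuleCat.{u} Λ} (p : E ⟶ B) (hp : Surjective p)
    (f : E ⟶ W) (h : ∀ x, p x = 0 → f x = 0) : B ⟶ W :=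
  have key : ∀ x y : E, p x = p y → f x = f y := by
    intro x y hxy
    have := h (x - y) (by rw [map_sub, hxy, sub_self])
    rw [map_sub, sub_eq_zero] at this
    exact this
  ModuleCat.ofHom
  { toFun := fun b => f (surjInv hp b)
    map_add' := fun a b => by
      show f (surjInv hp (a + b)) = f (surjInv hp a) + f (surjInv hp b)
      rw [key (surjInv hp (a + b)) (surjInv hp a + surjInv hp b)
        (by rw [map_add, surjInv_eq hp, surjInv_eq hp, surjInv_eq hp]), map_add]
    map_smul' := fun r a => by
      show f (surjInv hp (r • a)) = (RingHom.id Λ) r • f (surjInv hp a)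
      rw [key (surjInv hp (r • a)) (r • surjInv hp a)
        (by rw [map_smul, surjInv_eq hp, surjInv_eq hp]), map_smul]
      rfl }

lemma desc_apply {E B W : ModuleCat.{u} Λ} (p : E ⟶ B) (hp : Surjective p)
    (f : E ⟶ W) (h : ∀ x, p x = 0 → f x = 0) (x : E) : desc p hp f h (p x) = f x := by
  show f (surjInv hp (p x)) = f x
  have hpp : p (surjInv hp (p x)) = p x := surjInv_eq hp (p x)
  have := h (surjInv hp (p x) - x) (by rw [map_sub, hpp, sub_self])
  rw [map_sub, sub_eq_zero] at this
  exact this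

/-- lift a morphism through an injection containing its range -/
noncomputable def liftI {A E W : ModuleCat.{u} Λ} (i : A ⟶ E) (hi : Injective i)
    (f : W ⟶ E) (h : ∀ x, ∃ a, i a = f x) : W ⟶ A := ModuleCat.ofHom {
  toFun := fun x => Classical.choose (h x)
  map_add' := fun x y => hi (by
    rw [Classical.choose_spec (h (x + y)), map_add, map_add,
      Classical.choose_spec (h x), Classical.choose_spec (h y)])
  map_smul' := fun r x => hi (by
    rw [Classical.choose_spec (h (r • x))]
    show f (r • x) = i (r • Classical.choose (h x))
    rw [map_smul, map_smul, Classical.choose_spec (h x)]) }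

lemma liftI_spec {A E W : ModuleCat.{u} Λ} (i : A ⟶ E) (hi : Injective i)
    (f : W ⟶ E) (h : ∀ x, ∃ a, i a = f x) (x : W) : i (liftI i hi f h x) = f x :=
  Classical.choose_spec (h x)

lemma exists_desc {E B W : ModuleCat.{u} Λ} (p : E ⟶ B) (hp : Surjective p)
    (f : E ⟶ W) (h : ∀ x, p x = 0 → f x = 0) : ∃ g : B ⟶ W, ∀ x, g (p x) = f x :=
  ⟨desc p hp f h, desc_apply p hp f h⟩

lemma exists_liftI {A E W : ModuleCat.{u} Λ} (i : A ⟶ E) (hi : Injective i)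
    (f : W ⟶ E) (h : ∀ x, ∃ a, i a = f x) : ∃ g : W ⟶ A, ∀ x, i (g x) = f x :=
  ⟨liftI i hi f h, liftI_spec i hi f h⟩

lemma isIso_of_sandwich {A : ModuleCat.{u} Λ} (φ u : A ⟶ A)
    (h1 : IsIso (φ ≫ u)) (h2 : IsIso (u ≫ φ)) : IsIso φ := by
  haveI : Mono (φ ≫ u) := by infer_instance
  haveI : Epi (u ≫ φ) := by infer_instance
  haveI hm : Mono φ := mono_of_mono φ u
  haveI he : Epi φ := epi_of_epi u φ
  exact isIso_of_bijective φ
    ⟨(ModuleCat.mono_iff_injective φ).mp hm, (ModuleCat.epi_iff_surjective φ).mp he⟩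

lemma brick_iso {M N : ModuleCat.{u} Λ} (h : IsBrick M) (e : M ≅ N) : IsBrick N := by
  obtain ⟨hnt, hend⟩ := h
  have hbij := bijective_of_isIso e.hom inferInstance
  constructor
  · obtain ⟨x, y, hxy⟩ := hnt
    exact ⟨e.hom x, e.hom y, fun hc => hxy (hbij.1 hc)⟩
  · intro f hf
    have hf' : e.hom ≫ f ≫ e.inv ≠ 0 := by
      intro hc
      apply hf
      have h1 : f = e.inv ≫ (e.hom ≫ f ≫ e.inv) ≫ e.hom := by simp
      rw [h1, hc]
      simp
    haveI := hend _ hf'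
    have h1 : f = e.inv ≫ (e.hom ≫ f ≫ e.inv) ≫ e.hom := by simp
    rw [h1]
    infer_instance

lemma nontrivial_transfer {M N : ModuleCat.{u} Λ} (f : M ⟶ N) (hf : Injective f)
    (h : Nontrivial M) : Nontrivial N := by
  obtain ⟨x, y, hxy⟩ := h
  exact ⟨f x, f y, fun hc => hxy (hf hc)⟩





lemma filt_hom_to {S W : ModuleCat.{u} Λ} (h0 : ∀ f : S ⟶ W, f = 0)
    {X : ModuleCat.{u} Λ} (hX : FiltBy S X) : ∀ f : X ⟶ W, f = 0 := by
  induction hX with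
  | self => exact h0
  | zero M hM =>
      intro f
      ext x
      rw [Subsingleton.elim x 0, map_zero]
      rfl
  | iso M N hM e ih =>
      intro f
      have h1 : f = e.inv ≫ (e.hom ≫ f) := by simp
      rw [h1, ih (e.hom ≫ f)]
      simp
  | ext A E B i p hA hB hses ihA ihB =>
      intro f
      obtain ⟨hi, hp, hr⟩ := hses
      have h1 : i ≫ f = 0 := ihA _
      have hker : ∀ x, p x = 0 → f x = 0 := by
        intro x hx
        have hx2 : x ∈ LinearMap.range i.hom := hr.symm ▸ LinearMap.mem_ker.mpr hx
        obtain ⟨a, ha⟩ := hx2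
        rw [← ha]
        exact lapp h1 a
      have h2 := ihB (desc p hp f hker)
      ext x
      have h3 : f x = desc p hp f hker (p x) := (desc_apply p hp f hker x).symm
      rw [h3, h2]
      rfl

lemma filt_hom_from {S W : ModuleCat.{u} Λ} (h0 : ∀ f : W ⟶ S, f = 0)
    {X : ModuleCat.{u} Λ} (hX : FiltBy S X) : ∀ f : W ⟶ X, f = 0 := by
  induction hX with
  | self => exact h0
  | zero M hM =>
      intro f
      ext x
      rw [Subsingleton.elim (f x) 0]
      rfl
  | iso M N hM e ih =>
      intro f
      have h1 : f = (f ≫ e.inv) ≫ e.hom := by simp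
      rw [h1, ih (f ≫ e.inv)]
      simp
  | ext A E B i p hA hB hses ihA ihB =>
      intro f
      obtain ⟨hi, hp, hr⟩ := hses
      have h1 : f ≫ p = 0 := ihB _
      have hmem : ∀ x, ∃ a, i a = f x := by
        intro x
        have : f x ∈ LinearMap.range i.hom := hr.symm ▸ LinearMap.mem_ker.mpr (lapp h1 x)
        exact this
      have h2 := ihA (liftI i hi f hmem)
      ext x
      have h3 : i (liftI i hi f hmem x) = f x := liftI_spec i hi f hmem x
      rw [← h3, h2]
      show i 0 = (0 : W ⟶ E) x
      rw [map_zero]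
      rfl

lemma filt_nonzero_from_S {S X : ModuleCat.{u} Λ} (hS : Nontrivial S) (hX : FiltBy S X) :
    Nontrivial X → ∃ f : S ⟶ X, ∃ s, f s ≠ 0 := by
  induction hX with
  | self =>
      intro _
      obtain ⟨x, hx⟩ := exists_ne (0 : S)
      exact ⟨𝟙 S, x, hx⟩
  | zero M hM =>
      intro h
      obtain ⟨x, y, hxy⟩ := h
      exact absurd (Subsingleton.elim x y) hxy
  | iso M N hM e ih =>
      intro h
      have hbij := bijective_of_isIso e.inv inferInstance
      have : Nontrivial M := nontrivial_transfer e.inv hbij.1 h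
      obtain ⟨f, s, hs⟩ := ih this
      refine ⟨f ≫ e.hom, s, fun hc => hs ?_⟩
      have hbij2 := bijective_of_isIso e.hom inferInstance
      apply hbij2.1
      rw [map_zero]
      exact hc
  | ext A E B i p hA hB hses ihA ihB =>
      intro h
      obtain ⟨hi, hp, hr⟩ := hses
      by_cases hAnt : Nontrivial A
      · obtain ⟨f, s, hs⟩ := ihA hAnt
        refine ⟨f ≫ i, s, fun hc => hs (hi ?_)⟩
        rw [map_zero]
        exact hc
      · have hsub : Subsingleton A := not_nontrivial_iff_subsingleton.mp hAnt
        have hpinj : Injective p := by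
          apply injective_of_sub
          intro x hx
          have hx2 : x ∈ LinearMap.range i.hom := hr.symm ▸ LinearMap.mem_ker.mpr hx
          obtain ⟨a, ha⟩ := hx2
          rw [← ha, Subsingleton.elim a 0, map_zero]
        have hBnt : Nontrivial B := nontrivial_transfer p ?hh h
        case hh => exact hpinj
        obtain ⟨f, s, hs⟩ := ihB hBnt
        let ep := LinearEquiv.ofBijective p.hom ⟨hpinj, hp⟩
        refine ⟨f ≫ ModuleCat.ofHom ep.symm.toLinearMap, s, fun hc => hs ?_⟩
        have : ep.symm (f s) = 0 := hc
        have := congrArg ep this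
        rwa [LinearEquiv.apply_symm_apply, map_zero] at this

lemma filt_to_S_surj {S : ModuleCat.{u} Λ} (hS : IsBrick S) {X : ModuleCat.{u} Λ}
    (hX : FiltBy S X) : ∀ f : X ⟶ S, (∃ x, f x ≠ 0) → Surjective f := by
  induction hX with
  | self =>
      intro f hf
      have : IsIso f := hS.2 f ((hom_ne_zero_iff f).mpr hf)
      exact (bijective_of_isIso f this).2
  | zero M hM =>
      rintro f ⟨x, hx⟩
      exact absurd (by rw [Subsingleton.elim x 0, map_zero]) hx
  | iso M N hM e ih =>
      rintro f ⟨x, hx⟩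
      have hsurj : Surjective (e.hom ≫ f) := by
        apply ih
        refine ⟨e.inv x, ?_⟩
        show f (e.hom (e.inv x)) ≠ 0
        rw [show e.hom (e.inv x) = x from lapp e.inv_hom_id x]
        exact hx
      intro s
      obtain ⟨m, hm⟩ := hsurj s
      exact ⟨e.hom m, hm⟩
  | ext A E B i p hA hB hses ihA ihB =>
      rintro f ⟨x₀, hx₀⟩
      obtain ⟨hi, hp, hr⟩ := hses
      by_cases hia : ∃ a, (i ≫ f) a ≠ 0
      · have hs := ihA (i ≫ f) hia
        intro s
        obtain ⟨a, ha⟩ := hs s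
        exact ⟨i a, ha⟩
      · push_neg at hia
        have hker : ∀ x, p x = 0 → f x = 0 := by
          intro x hx
          obtain ⟨a, ha⟩ := (hr.symm ▸ LinearMap.mem_ker.mpr hx : x ∈ LinearMap.range i.hom)
          rw [← ha]
          exact hia a
        have hs := ihB (desc p hp f hker) ⟨p x₀, by rw [desc_apply]; exact hx₀⟩
        intro s
        obtain ⟨b, hb⟩ := hs s
        obtain ⟨x, hx⟩ := hp b
        refine ⟨x, ?_⟩
        rw [← desc_apply p hp f hker x, hx, hb]





lemma filt_ker_to_S {S : ModuleCat.{u} Λ} (hS : IsBrick S) {X : ModuleCat.{u} Λ}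
    (hX : FiltBy S X) : ∀ f : X ⟶ S, (∃ x, f x ≠ 0) →
      FiltBy S (ModuleCat.of Λ ↥(LinearMap.ker f.hom)) := by
  induction hX with
  | self =>
      intro f hf
      have hiso : IsIso f := hS.2 f ((hom_ne_zero_iff f).mpr hf)
      have hinj := (bijective_of_isIso f hiso).1
      apply FiltBy.zero
      constructor
      intro a b
      apply Subtype.ext
      have ha : f a.1 = 0 := a.2
      have hb : f b.1 = 0 := b.2
      have h1 : a.1 = 0 := hinj (by rw [ha, map_zero])
      have h2 : b.1 = 0 := hinj (by rw [hb, map_zero])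
      rw [h1, h2]
  | zero M hM =>
      rintro f ⟨x, hx⟩
      exact absurd (by rw [Subsingleton.elim x 0, map_zero]) hx
  | iso M N hM e ih =>
      rintro f ⟨x, hx⟩
      have hf' : ∃ y, (e.hom ≫ f) y ≠ 0 := by
        refine ⟨e.inv x, ?_⟩
        show f (e.hom (e.inv x)) ≠ 0
        rw [show e.hom (e.inv x) = x from lapp e.inv_hom_id x]
        exact hx
      have ihM := ih (e.hom ≫ f) hf'
      refine FiltBy.iso _ _ ihM ?_
      refine LinearEquiv.toModuleIso ?_
      refine
        { toFun := fun z => ⟨e.hom z.1, ?_⟩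
          invFun := fun y => ⟨e.inv y.1, ?_⟩
          map_add' := fun a b => Subtype.ext (by simp [map_add])
          map_smul' := fun r a => Subtype.ext (by simp)
          left_inv := fun a => Subtype.ext (by
            show e.inv (e.hom a.1) = a.1
            exact lapp e.hom_inv_id a.1)
          right_inv := fun b => Subtype.ext (by
            show e.hom (e.inv b.1) = b.1
            exact lapp e.inv_hom_id b.1) }
      · exact z.2
      · show e.inv y.1 ∈ LinearMap.ker (e.hom ≫ f).hom
        rw [LinearMap.mem_ker]
        show f (e.hom (e.inv y.1)) = 0
        rw [show e.hom (e.inv y.1) = y.1 from lapp e.inv_hom_id y.1]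
        exact y.2
  | ext A E B i p hA hB hses ihA ihB =>
      rintro f hf
      obtain ⟨hi, hp, hr⟩ := hses
      by_cases hia : ∃ a, (i ≫ f) a ≠ 0
      · -- i ≫ f nonzero : bottom piece ker (i ≫ f), top piece B
        have hsurjif : Surjective (i ≫ f) := filt_to_S_surj hS hA (i ≫ f) hia
        have ihK := ihA (i ≫ f) hia
        let i'' : ModuleCat.of Λ ↥(LinearMap.ker (i ≫ f).hom) ⟶
            ModuleCat.of Λ ↥(LinearMap.ker f.hom) := ModuleCat.ofHom (LinearMap.codRestrict _ (i.hom.comp (Submodule.subtype _))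
            (fun a => by
              rw [LinearMap.mem_ker]
              exact a.2))
        let p'' : ModuleCat.of Λ ↥(LinearMap.ker f.hom) ⟶ B := ModuleCat.ofHom (p.hom.comp (Submodule.subtype _))
        refine FiltBy.ext _ _ _ i'' p'' ihK hB ⟨?_, ?_, ?_⟩
        · intro a b hab
          apply Subtype.ext
          apply hi
          exact congrArg Subtype.val hab
        · intro b
          obtain ⟨x₀, hx₀⟩ := hp b
          obtain ⟨a, ha⟩ := hsurjif (f x₀)
          have hmem : x₀ - i a ∈ LinearMap.ker f.hom := by
            rw [LinearMap.mem_ker, map_sub, show f (i a) = (i ≫ f) a from rfl, ha, sub_self]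
          refine ⟨⟨x₀ - i a, hmem⟩, ?_⟩
          show p (x₀ - i a) = b
          have hpia : p (i a) = 0 := by
            have : i a ∈ LinearMap.range i.hom := ⟨a, rfl⟩
            rw [hr] at this
            exact this
          rw [map_sub, hpia, hx₀, sub_zero]
        · apply le_antisymm
          · rintro z ⟨w, hw⟩
            show p z.1 = 0
            have : z.1 = i w.1 := (congrArg Subtype.val hw).symm
            rw [this]
            have : i w.1 ∈ LinearMap.range i.hom := ⟨w.1, rfl⟩
            rw [hr] at this
            exact this
          · rintro z hz
            have hz1 : p z.1 = 0 := hz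
            have : z.1 ∈ LinearMap.range i.hom := hr.symm ▸ LinearMap.mem_ker.mpr hz1
            obtain ⟨a, ha⟩ := this
            have haK : a ∈ LinearMap.ker (i ≫ f).hom := by
              rw [LinearMap.mem_ker]
              show f (i a) = 0
              rw [ha]
              exact z.2
            exact ⟨⟨a, haK⟩, Subtype.ext ha⟩
      · -- i ≫ f = 0 : descend, bottom piece A, top piece ker fb
        push_neg at hia
        have hker : ∀ x, p x = 0 → f x = 0 := by
          intro x hx
          obtain ⟨a, ha⟩ := (hr.symm ▸ LinearMap.mem_ker.mpr hx : x ∈ LinearMap.range i.hom)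
          rw [← ha]
          exact hia a
        set fb := desc p hp f hker with hfb
        obtain ⟨x₀, hx₀⟩ := hf
        have hfbne : ∃ b, fb b ≠ 0 := ⟨p x₀, by rw [desc_apply]; exact hx₀⟩
        have ihK := ihB fb hfbne
        let i' : A ⟶ ModuleCat.of Λ ↥(LinearMap.ker f.hom) := ModuleCat.ofHom (LinearMap.codRestrict _ i.hom (fun a => by
            rw [LinearMap.mem_ker]
            exact hia a))
        let p' : ModuleCat.of Λ ↥(LinearMap.ker f.hom) ⟶
            ModuleCat.of Λ ↥(LinearMap.ker fb.hom) := ModuleCat.ofHom (LinearMap.codRestrict _ (p.hom.comp (Submodule.subtype _)) (fun x => by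
            rw [LinearMap.mem_ker]
            show fb (p x.1) = 0
            rw [desc_apply]
            exact x.2))
        refine FiltBy.ext _ _ _ i' p' hA ihK ⟨?_, ?_, ?_⟩
        · intro a b hab
          exact hi (congrArg Subtype.val hab)
        · rintro ⟨b, hbmem⟩
          obtain ⟨x, hx⟩ := hp b
          have hxk : x ∈ LinearMap.ker f.hom := by
            rw [LinearMap.mem_ker]
            have : fb (p x) = 0 := by rw [hx]; exact hbmem
            rw [desc_apply] at this
            exact this
          exact ⟨⟨x, hxk⟩, Subtype.ext (by show p x = b; exact hx)⟩
        · apply le_antisymm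
          · rintro z ⟨a, ha⟩
            apply Subtype.ext
            show p z.1 = 0
            have hz1 : z.1 = i a := (congrArg Subtype.val ha).symm
            rw [hz1]
            have : i a ∈ LinearMap.range i.hom := ⟨a, rfl⟩
            rw [hr] at this
            exact this
          · rintro z hz
            have hz1 : p z.1 = 0 := congrArg Subtype.val hz
            have : z.1 ∈ LinearMap.range i.hom := hr.symm ▸ LinearMap.mem_ker.mpr hz1
            obtain ⟨a, ha⟩ := this
            exact ⟨a, Subtype.ext ha⟩





set_option maxHeartbeats 2000000 in
lemma filt_ext_split {S T : ModuleCat.{u} Λ}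
    (hbase : ∀ (F : ModuleCat.{u} Λ) (i : T ⟶ F) (p : F ⟶ S), IsSESeq i p →
      ∃ r : F ⟶ T, i ≫ r = 𝟙 T)
    {X : ModuleCat.{u} Λ} (hX : FiltBy S X) :
    ∀ (F : ModuleCat.{u} Λ) (i : T ⟶ F) (p : F ⟶ X), IsSESeq i p →
      ∃ r : F ⟶ T, i ≫ r = 𝟙 T := by
  induction hX with
  | self => exact hbase
  | zero M hM =>
      rintro F i p ⟨hi, hp, hr⟩
      have hisurj : Surjective i := by
        intro x
        have hpx : p x = 0 := Subsingleton.elim _ _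
        exact (hr.symm ▸ LinearMap.mem_ker.mpr hpx : x ∈ LinearMap.range i.hom)
      let e := LinearEquiv.ofBijective i.hom ⟨hi, hisurj⟩
      refine ⟨ModuleCat.ofHom e.symm.toLinearMap, ?_⟩
      ext t
      exact e.symm_apply_apply t
  | iso M N hM e ih =>
      rintro F i p ⟨hi, hp, hr⟩
      apply ih F i (p ≫ e.inv)
      refine ⟨hi, ?_, ?_⟩
      · intro m
        obtain ⟨x, hx⟩ := hp (e.hom m)
        refine ⟨x, ?_⟩
        show e.inv (p x) = m
        rw [hx]
        exact lapp e.hom_inv_id m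
      · rw [hr]
        apply le_antisymm
        · intro x hx
          show e.inv (p x) = 0
          rw [LinearMap.mem_ker.mp hx, map_zero]
        · intro x hx
          have h1 : e.inv (p x) = 0 := hx
          have h2 := congrArg e.hom h1
          rw [map_zero] at h2
          rw [show e.hom (e.inv (p x)) = p x from lapp e.inv_hom_id (p x)] at h2
          exact LinearMap.mem_ker.mpr h2
  | ext A E B i₀ p₀ hA hB hses₀ ihA ihB =>
      rintro F i p ⟨hi, hp, hr⟩
      obtain ⟨hi₀, hp₀, hr₀⟩ := hses₀
      -- U = ker (p ≫ p₀) ⊆ F, the pullback to A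
      set U : Submodule Λ F := LinearMap.ker (p ≫ p₀).hom with hU
      have hiU : ∀ t, i t ∈ U := by
        intro t
        have h1 : p (i t) = 0 := by
          have h2 : i t ∈ LinearMap.range i.hom := ⟨t, rfl⟩
          rw [hr] at h2
          exact h2
        show p₀ (p (i t)) = 0
        rw [h1, map_zero]
      let iU : T ⟶ ModuleCat.of Λ ↥U := ModuleCat.ofHom (LinearMap.codRestrict U i.hom hiU)
      let pU : ModuleCat.of Λ ↥U ⟶ E := ModuleCat.ofHom (p.hom.comp (Submodule.subtype U))
      have hmemA : ∀ x, ∃ a, i₀ a = pU x := by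
        intro x
        have h1 : p₀ (p x.1) = 0 := x.2
        exact (hr₀.symm ▸ LinearMap.mem_ker.mpr h1 : p x.1 ∈ LinearMap.range i₀.hom)
      obtain ⟨qA, hqA'⟩ := exists_liftI i₀ hi₀ pU hmemA
      have hqA : ∀ x : ↥U, i₀ (qA x) = p x.1 := fun x => hqA' x
      have s1 : IsSESeq iU qA := by
        refine ⟨?_, ?_, ?_⟩
        · intro a b hab
          exact hi (congrArg Subtype.val hab)
        · intro a
          obtain ⟨y, hy⟩ := hp (i₀ a)
          have hyU : y ∈ U := by
            show p₀ (p y) = 0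
            rw [hy]
            have h2 : i₀ a ∈ LinearMap.range i₀.hom := ⟨a, rfl⟩
            rw [hr₀] at h2
            exact h2
          refine ⟨⟨y, hyU⟩, hi₀ ?_⟩
          rw [hqA]
          exact hy
        · apply le_antisymm
          · rintro z ⟨t, ht⟩
            rw [LinearMap.mem_ker]
            apply hi₀
            rw [hqA, map_zero]
            have h2 : z.1 = i t := (congrArg Subtype.val ht).symm
            rw [h2]
            have h3 : i t ∈ LinearMap.range i.hom := ⟨t, rfl⟩
            rw [hr] at h3
            exact h3
          · rintro z hz
            have h1 : qA z = 0 := hz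
            have h2 : p z.1 = 0 := by rw [← hqA z, h1, map_zero]
            obtain ⟨t, ht⟩ := (hr.symm ▸ LinearMap.mem_ker.mpr h2 : z.1 ∈ LinearMap.range i.hom)
            exact ⟨t, Subtype.ext ht⟩
      obtain ⟨rA, hrA⟩ := ihA (ModuleCat.of Λ ↥U) iU qA s1
      -- section s : A ⟶ U with qA ∘ s = id
      have hkers : ∀ x : ↥U, qA x = 0 →
          ((𝟙 (ModuleCat.of Λ ↥U) - rA ≫ iU) : ModuleCat.of Λ ↥U ⟶ ModuleCat.of Λ ↥U) x = 0 := by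
        intro x hx
        obtain ⟨t, ht⟩ := (s1.2.2.symm ▸ LinearMap.mem_ker.mpr hx : x ∈ LinearMap.range iU.hom)
        rw [← ht]
        show iU t - iU (rA (iU t)) = 0
        rw [show rA (iU t) = t from lapp hrA t, sub_self]
      obtain ⟨s, hs0'⟩ := exists_desc qA s1.2.1 _ hkers
      have hs0 : ∀ x, s (qA x) = x - iU (rA x) := fun x => by
        rw [hs0' x]
        show ((𝟙 (ModuleCat.of Λ ↥U)) : _ ⟶ _) x - (rA ≫ iU) x = _
        rfl
      have hs : ∀ a, qA (s a) = a := by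
        intro a
        obtain ⟨x, hx⟩ := s1.2.1 a
        rw [← hx, hs0, map_sub]
        have h2 : qA (iU (rA x)) = 0 := by
          have h3 : iU (rA x) ∈ LinearMap.ker qA.hom := s1.2.2 ▸ ⟨rA x, rfl⟩
          exact h3
        rw [h2, sub_zero]
      let hatS : A ⟶ F := s ≫ ModuleCat.ofHom (Submodule.subtype U)
      have hhatS : ∀ a, p (hatS a) = i₀ a := by
        intro a
        show p ((s a).1) = i₀ a
        rw [← hqA (s a), hs a]
      -- quotient G = F ⧸ range hatS
      set V : Submodule Λ F := LinearMap.range hatS.hom with hV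
      let G := ModuleCat.of Λ (↥F ⧸ V)
      let mkV : F ⟶ G := ModuleCat.ofHom (V.mkQ)
      have hmkVs : Surjective mkV := Submodule.mkQ_surjective V
      have hmkV0 : ∀ x : ↥F, mkV x = 0 ↔ x ∈ V := fun x => Submodule.Quotient.mk_eq_zero V
      have hkerG : ∀ x : ↥F, mkV x = 0 → ((p ≫ p₀) : F ⟶ B) x = 0 := by
        intro x hx
        obtain ⟨a, ha⟩ := (hmkV0 x).mp hx
        show p₀ (p x) = 0
        rw [← ha, hhatS a]
        have h2 : i₀ a ∈ LinearMap.range i₀.hom := ⟨a, rfl⟩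
        rw [hr₀] at h2
        exact h2
      obtain ⟨pG, hpG'⟩ := exists_desc mkV hmkVs (p ≫ p₀) hkerG
      have hpG : ∀ x, pG (mkV x) = p₀ (p x) := fun x => hpG' x
      let iG : T ⟶ G := i ≫ mkV
      have s2 : IsSESeq iG pG := by
        refine ⟨?_, ?_, ?_⟩
        · apply injective_of_sub
          intro t ht
          have h1 : mkV (i t) = 0 := ht
          obtain ⟨a, ha⟩ := (hmkV0 (i t)).mp h1
          have h2 : p (i t) = 0 := by
            have h3 : i t ∈ LinearMap.range i.hom := ⟨t, rfl⟩
            rw [hr] at h3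
            exact h3
          have h3 : i₀ a = 0 := by rw [← hhatS a, ha, h2]
          have h4 : a = 0 := hi₀ (by rw [h3, map_zero])
          have h5 : i t = 0 := by rw [← ha, h4, map_zero]
          exact hi (by rw [h5, map_zero])
        · intro b
          obtain ⟨e, he⟩ := hp₀ b
          obtain ⟨x, hx⟩ := hp e
          refine ⟨mkV x, ?_⟩
          rw [hpG, hx, he]
        · apply le_antisymm
          · rintro z ⟨t, ht⟩
            rw [LinearMap.mem_ker, ← ht]
            show pG (mkV (i t)) = 0
            rw [hpG]
            have h2 : p (i t) = 0 := by
              have h3 : i t ∈ LinearMap.range i.hom := ⟨t, rfl⟩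
              rw [hr] at h3
              exact h3
            rw [h2, map_zero]
          · rintro z hz
            obtain ⟨x, hx⟩ := hmkVs z
            have h1 : p₀ (p x) = 0 := by
              have h2 : pG z = 0 := hz
              rw [← hx, hpG] at h2
              exact h2
            obtain ⟨a, ha⟩ := (hr₀.symm ▸ LinearMap.mem_ker.mpr h1 : p x ∈ LinearMap.range i₀.hom)
            have h2 : p (x - hatS a) = 0 := by rw [map_sub, hhatS a, ha, sub_self]
            obtain ⟨t, ht⟩ := (hr.symm ▸ LinearMap.mem_ker.mpr h2 : x - hatS a ∈ LinearMap.range i.hom)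
            refine ⟨t, ?_⟩
            show mkV (i t) = z
            rw [ht, map_sub, ← hx]
            have h3 : mkV (hatS a) = 0 := (hmkV0 _).mpr ⟨a, rfl⟩
            rw [h3, sub_zero]
      obtain ⟨rB, hrB⟩ := ihB G iG pG s2
      refine ⟨mkV ≫ rB, ?_⟩
      rw [← Category.assoc]
      exact hrB





set_option maxHeartbeats 2000000 in
lemma part2 {S T A E : ModuleCat.{u} Λ} (hS : IsBrick S) (hT : IsBrick T)
    (hST : ∀ f : S ⟶ T, f = 0) (hTS : ∀ f : T ⟶ S, f = 0)
    {i : A ⟶ E} {p : E ⟶ T} (happ : IsMinExtApprox S T A E i p) : IsBrick E := by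
  obtain ⟨hA, ⟨hi, hp, hr⟩, hpush, hmin⟩ := happ
  have hTnt : Nontrivial T := hT.1
  have hEnt : Nontrivial E := by
    obtain ⟨t1, t2, h12⟩ := hTnt
    obtain ⟨e1, he1⟩ := hp t1
    obtain ⟨e2, he2⟩ := hp t2
    exact ⟨e1, e2, fun hc => h12 (by rw [← he1, ← he2, hc])⟩
  -- Hom(E, S) = 0
  have homES : ∀ q : E ⟶ S, q = 0 := by
    intro q
    by_contra hq
    obtain ⟨x₀, hx₀⟩ := (hom_ne_zero_iff q).mp hq
    by_cases hh : ∃ a, (i ≫ q) a ≠ 0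
    · -- h := i ≫ q nonzero
      have hFB : FiltBy S (ModuleCat.of Λ ↥(LinearMap.ker (i ≫ q).hom)) :=
        filt_ker_to_S hS hA (i ≫ q) hh
      have hhs : Surjective (i ≫ q) := filt_to_S_surj hS hA (i ≫ q) hh
      let Bm := ModuleCat.of Λ ↥(LinearMap.ker (i ≫ q).hom)
      let Em := ModuleCat.of Λ ↥(LinearMap.ker q.hom)
      let i' : Bm ⟶ Em := ModuleCat.ofHom (LinearMap.codRestrict _ (i.hom.comp (Submodule.subtype _)) (fun a => a.2))
      let p' : Em ⟶ T := ModuleCat.ofHom (p.hom.comp (Submodule.subtype _))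
      have s3 : IsSESeq i' p' := by
        refine ⟨?_, ?_, ?_⟩
        · intro a b hab
          exact Subtype.ext (hi (congrArg Subtype.val hab))
        · intro t
          obtain ⟨e, he⟩ := hp t
          obtain ⟨a, ha⟩ := hhs (q e)
          have hmem : e - i a ∈ LinearMap.ker q.hom := by
            rw [LinearMap.mem_ker, map_sub, show q (i a) = (i ≫ q) a from rfl, ha, sub_self]
          refine ⟨⟨e - i a, hmem⟩, ?_⟩
          show p (e - i a) = t
          have hpia : p (i a) = 0 := by
            have h2 : i a ∈ LinearMap.range i.hom := ⟨a, rfl⟩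
            rw [hr] at h2
            exact h2
          rw [map_sub, hpia, he, sub_zero]
        · apply le_antisymm
          · rintro z ⟨w, hw⟩
            rw [LinearMap.mem_ker]
            show p z.1 = 0
            have h2 : z.1 = i w.1 := (congrArg Subtype.val hw).symm
            rw [h2]
            have h3 : i w.1 ∈ LinearMap.range i.hom := ⟨w.1, rfl⟩
            rw [hr] at h3
            exact h3
          · rintro z hz
            have hz1 : p z.1 = 0 := hz
            obtain ⟨a, ha⟩ := (hr.symm ▸ LinearMap.mem_ker.mpr hz1 : z.1 ∈ LinearMap.range i.hom)
            have haK : a ∈ LinearMap.ker (i ≫ q).hom := by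
              rw [LinearMap.mem_ker]
              show q (i a) = 0
              rw [ha]
              exact z.2
            exact ⟨⟨a, haK⟩, Subtype.ext ha⟩
      obtain ⟨h₂, k, hk1, hk2⟩ := hpush Bm hFB Em i' p' s3
      have hiso : IsIso (h₂ ≫ ModuleCat.ofHom (Submodule.subtype _)) := by
        apply hmin
        refine ⟨k ≫ ModuleCat.ofHom (Submodule.subtype _), ?_, ?_⟩
        · ext a
          show (k (i a)).1 = i ((h₂ a).1)
          rw [show k (i a) = i' (h₂ a) from lapp hk1 a]
          rfl
        · ext x
          show p ((k x).1) = p x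
          exact lapp hk2 x
      obtain ⟨a₀, ha₀⟩ := hh
      obtain ⟨x, hx⟩ := (bijective_of_isIso _ hiso).2 a₀
      apply ha₀
      have h5 : (h₂ x).1 = a₀ := hx
      rw [show ((i ≫ q) a₀ : S) = (i ≫ q) ((h₂ x).1) from by rw [h5]]
      exact (h₂ x).2
    · -- i ≫ q = 0 : q factors through T
      push_neg at hh
      have hker : ∀ x, p x = 0 → q x = 0 := by
        intro x hx
        obtain ⟨a, ha⟩ := (hr.symm ▸ LinearMap.mem_ker.mpr hx : x ∈ LinearMap.range i.hom)
        rw [← ha]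
        exact hh a
      obtain ⟨qb, hqb⟩ := exists_desc p hp q hker
      have h2 := hTS qb
      apply hx₀
      rw [← hqb x₀, h2]
      rfl
  -- Hom(E, Filt S) = 0 and Hom(A, T) = 0
  have homEF : ∀ (X : ModuleCat.{u} Λ), FiltBy S X → ∀ v : E ⟶ X, v = 0 := by
    intro X hX
    exact filt_hom_from homES hX
  have homAT : ∀ v : A ⟶ T, v = 0 := fun v => filt_hom_to hST hA v
  refine ⟨hEnt, fun f hf => ?_⟩
  -- induced map on T
  have hker1 : ∀ x, p x = 0 → (f ≫ p) x = 0 := by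
    intro x hx
    obtain ⟨a, ha⟩ := (hr.symm ▸ LinearMap.mem_ker.mpr hx : x ∈ LinearMap.range i.hom)
    have h2 := homAT (i ≫ f ≫ p)
    show p (f x) = 0
    rw [← ha]
    exact lapp h2 a
  obtain ⟨fbar, hfbar'⟩ := exists_desc p hp (f ≫ p) hker1
  have hfbar : ∀ x, fbar (p x) = p (f x) := fun x => hfbar' x
  by_cases hfb : fbar = 0
  · -- then f = 0, contradiction
    exfalso
    apply hf
    have hfp : ∀ x, p (f x) = 0 := by
      intro x
      rw [← hfbar x, hfb]
      rfl
    have hmem : ∀ x, ∃ a, i a = f x := fun x =>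
      (hr.symm ▸ LinearMap.mem_ker.mpr (hfp x) : f x ∈ LinearMap.range i.hom)
    obtain ⟨r, hrr⟩ := exists_liftI i hi f hmem
    have h2 := homEF A hA r
    ext x
    rw [← hrr x, h2]
    show i 0 = (0 : E ⟶ E) x
    rw [map_zero]
    rfl
  · have hfbiso : IsIso fbar := hT.2 fbar hfb
    have hfbbij := bijective_of_isIso fbar hfbiso
    -- lift f to A
    have hmemA : ∀ a, ∃ b, i b = (i ≫ f) a := by
      intro a
      have h2 : p (f (i a)) = 0 := by
        rw [← hfbar (i a)]
        have h3 : p (i a) = 0 := by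
          have h4 : i a ∈ LinearMap.range i.hom := ⟨a, rfl⟩
          rw [hr] at h4
          exact h4
        rw [h3, map_zero]
      exact (hr.symm ▸ LinearMap.mem_ker.mpr h2 : f (i a) ∈ LinearMap.range i.hom)
    obtain ⟨φA, hφA'⟩ := exists_liftI i hi (i ≫ f) hmemA
    have hφA : ∀ a, i (φA a) = f (i a) := fun a => hφA' a
    -- second extension (i, p ≫ fbar)
    have s4 : IsSESeq i (p ≫ fbar) := by
      refine ⟨hi, ?_, ?_⟩
      · intro t
        obtain ⟨t', ht'⟩ := hfbbij.2 t
        obtain ⟨x, hx⟩ := hp t'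
        exact ⟨x, by show fbar (p x) = t; rw [hx, ht']⟩
      · rw [hr]
        apply le_antisymm
        · intro x hx
          show fbar (p x) = 0
          rw [LinearMap.mem_ker.mp hx, map_zero]
        · intro x hx
          have h2 : fbar (p x) = 0 := hx
          have h3 : p x = 0 := by
            apply hfbbij.1
            rw [h2, map_zero]
          exact LinearMap.mem_ker.mpr h3
    obtain ⟨hm, k, hk1, hk2⟩ := hpush A hA E i (p ≫ fbar) s4
    have hk1' : ∀ a, k (i a) = i (hm a) := fun a => lapp hk1 a
    have hk2' : ∀ x, fbar (p (k x)) = p x := fun x => lapp hk2 x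
    have m1 : IsIso (φA ≫ hm) := by
      apply hmin
      refine ⟨f ≫ k, ?_, ?_⟩
      · ext a
        show k (f (i a)) = i (hm (φA a))
        rw [← hφA a, hk1' (φA a)]
      · ext x
        show p (k (f x)) = p x
        apply hfbbij.1
        rw [hk2' (f x), hfbar x]
    have m2 : IsIso (hm ≫ φA) := by
      apply hmin
      refine ⟨k ≫ f, ?_, ?_⟩
      · ext a
        show f (k (i a)) = i (φA (hm a))
        rw [hk1' a, hφA (hm a)]
      · ext x
        show p (f (k x)) = p x
        rw [← hfbar (k x), hk2' x]
    have hφiso : IsIso φA := isIso_of_sandwich φA hm m1 m2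
    have hφbij := bijective_of_isIso φA hφiso
    apply isIso_of_bijective
    constructor
    · apply injective_of_sub
      intro x hx
      have h2 : p x = 0 := by
        apply hfbbij.1
        rw [hfbar x, hx, map_zero, map_zero]
      obtain ⟨a, ha⟩ := (hr.symm ▸ LinearMap.mem_ker.mpr h2 : x ∈ LinearMap.range i.hom)
      have h3 : i (φA a) = 0 := by rw [hφA a, ha, hx]
      have h4 : φA a = 0 := hi (by rw [h3, map_zero])
      have h5 : a = 0 := hφbij.1 (by rw [h4, map_zero])
      rw [← ha, h5, map_zero]
    · intro e
      obtain ⟨t', ht'⟩ := hfbbij.2 (p e)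
      obtain ⟨e', he'⟩ := hp t'
      have h2 : p (e - f e') = 0 := by
        rw [map_sub, ← hfbar e', he', ht', sub_self]
      obtain ⟨a, ha⟩ := (hr.symm ▸ LinearMap.mem_ker.mpr h2 : e - f e' ∈ LinearMap.range i.hom)
      obtain ⟨a', ha'⟩ := hφbij.2 a
      refine ⟨e' + i a', ?_⟩
      rw [map_add, ← hφA a', ha', ha]
      abel




set_option maxHeartbeats 2000000 in
lemma part1mono {S T A : ModuleCat.{u} Λ} (hS : IsBrick S) (hT : IsBrick T)
    (hST : ∀ f : S ⟶ T, f = 0)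
    (hsplit : ∀ (F : ModuleCat.{u} Λ) (i : T ⟶ F) (p : F ⟶ S), IsSESeq i p →
      ∃ r : F ⟶ T, i ≫ r = 𝟙 T)
    {g : T ⟶ A} (happ : IsMinLeftApprox S g) (hg : Function.Injective g) :
    IsBrick (ModuleCat.of Λ (↑A ⧸ LinearMap.range g.hom)) := by
  obtain ⟨hA, hfac, hmin⟩ := happ
  set R : Submodule Λ A := LinearMap.range g.hom with hR
  let C := ModuleCat.of Λ (↑A ⧸ R)
  let π : A ⟶ C := ModuleCat.ofHom (R.mkQ)
  have hπs : Surjective π := Submodule.mkQ_surjective R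
  have hπ0 : ∀ x : ↥A, π x = 0 ↔ x ∈ R := fun x => Submodule.Quotient.mk_eq_zero R
  -- g is not surjective
  have hgns : ¬ Surjective g := by
    intro hgs
    have hTnt : Nontrivial T := hT.1
    have hAnt : Nontrivial A := nontrivial_transfer g hg hTnt
    obtain ⟨f, s, hs⟩ := filt_nonzero_from_S hS.1 hA hAnt
    let e := LinearEquiv.ofBijective g.hom ⟨hg, hgs⟩
    have h2 := hST (f ≫ ModuleCat.ofHom e.symm.toLinearMap)
    apply hs
    have h3 : e.symm (f s) = 0 := lapp h2 s
    have h4 := congrArg e h3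
    rwa [LinearEquiv.apply_symm_apply, map_zero] at h4
  have hCnt : Nontrivial C := by
    have h1 : ∃ a : ↥A, a ∉ R := by
      by_contra hc
      push_neg at hc
      apply hgns
      intro a
      exact hc a
    obtain ⟨a, ha⟩ := h1
    refine ⟨π a, 0, fun hc => ha ((hπ0 a).mp hc)⟩
  -- Hom(C, S) = 0
  have homCS : ∀ q : C ⟶ S, q = 0 := by
    intro q
    by_contra hq
    have hπq : ∃ a, (π ≫ q) a ≠ 0 := by
      obtain ⟨c, hc⟩ := (hom_ne_zero_iff q).mp hq
      obtain ⟨a, ha⟩ := hπs c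
      exact ⟨a, by show q (π a) ≠ 0; rw [ha]; exact hc⟩
    have hFB : FiltBy S (ModuleCat.of Λ ↥(LinearMap.ker (π ≫ q).hom)) :=
      filt_ker_to_S hS hA (π ≫ q) hπq
    have hmemg : ∀ t, g t ∈ LinearMap.ker (π ≫ q).hom := by
      intro t
      rw [LinearMap.mem_ker]
      show q (π (g t)) = 0
      have h2 : π (g t) = 0 := (hπ0 (g t)).mpr ⟨t, rfl⟩
      rw [h2, map_zero]
    let g' : T ⟶ ModuleCat.of Λ ↥(LinearMap.ker (π ≫ q).hom) := ModuleCat.ofHom (LinearMap.codRestrict _ g.hom hmemg)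
    obtain ⟨w, hw⟩ := hfac _ hFB g'
    have hiso : IsIso (w ≫ ModuleCat.ofHom (Submodule.subtype _)) := by
      apply hmin
      ext t
      show (w (g t)).1 = g t
      rw [show w (g t) = g' t from lapp hw t]
      rfl
    obtain ⟨a₀, ha₀⟩ := hπq
    obtain ⟨x, hx⟩ := (bijective_of_isIso _ hiso).2 a₀
    apply ha₀
    have h5 : (w x).1 = a₀ := hx
    rw [show ((π ≫ q) a₀ : S) = (π ≫ q) ((w x).1) from by rw [h5]]
    exact (w x).2
  refine ⟨hCnt, fun f hf => ?_⟩
  -- pullback P to lift f to φ : A ⟶ A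
  let d : ModuleCat.of Λ (↥A × ↥A) ⟶ C := ModuleCat.ofHom ((π ≫ f).hom.comp (LinearMap.fst Λ ↥A ↥A) -
      π.hom.comp (LinearMap.snd Λ ↥A ↥A))
  have hd : ∀ z : ↥A × ↥A, d z = f (π z.1) - π z.2 := fun z => rfl
  set P : Submodule Λ (ModuleCat.of Λ (↥A × ↥A)) := LinearMap.ker d.hom with hP
  have hmemP : ∀ z : ↥A × ↥A, z ∈ P ↔ f (π z.1) = π z.2 := by
    intro z
    constructor
    · intro h1
      have h2 : f (π z.1) - π z.2 = 0 := by rw [← hd z]; exact h1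
      rwa [sub_eq_zero] at h2
    · intro h1
      show d z = 0
      rw [hd z, h1, sub_self]
  have hmemjT : ∀ t, ((0 : ↥A), g t) ∈ P := by
    intro t
    rw [hmemP]
    have h2 : π (g t) = 0 := (hπ0 (g t)).mpr ⟨t, rfl⟩
    rw [h2]
    show f (π 0) = 0
    rw [map_zero, map_zero]
  let jT : T ⟶ ModuleCat.of Λ ↥P := ModuleCat.ofHom (LinearMap.codRestrict P (LinearMap.prod (0 : T →ₗ[Λ] ↥A) g.hom) hmemjT)
  let pr1 : ModuleCat.of Λ ↥P ⟶ A := ModuleCat.ofHom ((LinearMap.fst Λ ↥A ↥A).comp (Submodule.subtype P))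
  have sP : IsSESeq jT pr1 := by
    refine ⟨?_, ?_, ?_⟩
    · apply injective_of_sub
      intro t ht
      have h1 : ((0 : ↥A), g t) = ((0 : ↥A), (0 : ↥A)) := by
        have := congrArg Subtype.val ht
        exact this
      have h2 : g t = 0 := congrArg Prod.snd h1
      exact hg (by rw [h2, map_zero])
    · intro a
      obtain ⟨a', ha'⟩ := hπs (f (π a))
      have hmem : (a, a') ∈ P := (hmemP (a, a')).mpr (by rw [ha'])
      exact ⟨⟨(a, a'), hmem⟩, rfl⟩
    · apply le_antisymm
      · rintro z ⟨t, ht⟩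
        rw [LinearMap.mem_ker]
        show z.1.1 = 0
        rw [show z.1 = ((0 : ↥A), g t) from (congrArg Subtype.val ht).symm]
      · rintro z hz
        have hz1 : z.1.1 = 0 := hz
        have hz2 : f (π z.1.1) = π z.1.2 := (hmemP z.1).mp z.2
        rw [hz1, map_zero, map_zero] at hz2
        obtain ⟨t, ht⟩ := (hπ0 z.1.2).mp hz2.symm
        refine ⟨t, Subtype.ext ?_⟩
        show ((0 : ↥A), g t) = z.1
        rw [ht]
        exact Prod.ext hz1.symm rfl
  obtain ⟨r, hrr⟩ := filt_ext_split hsplit hA _ jT pr1 sP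
  -- section of pr1
  have hkers : ∀ x : ↥P, pr1 x = 0 →
      ((𝟙 (ModuleCat.of Λ ↥P) - r ≫ jT) : ModuleCat.of Λ ↥P ⟶ ModuleCat.of Λ ↥P) x = 0 := by
    intro x hx
    obtain ⟨t, ht⟩ := (sP.2.2.symm ▸ LinearMap.mem_ker.mpr hx : x ∈ LinearMap.range jT.hom)
    rw [← ht]
    show jT t - jT (r (jT t)) = 0
    rw [show r (jT t) = t from lapp hrr t, sub_self]
  obtain ⟨s, hs0'⟩ := exists_desc pr1 sP.2.1 _ hkers
  have hs0 : ∀ x, s (pr1 x) = x - jT (r x) := fun x => by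
    rw [hs0' x]
    show ((𝟙 (ModuleCat.of Λ ↥P)) : _ ⟶ _) x - (r ≫ jT) x = _
    rfl
  have hs : ∀ a, (s a).1.1 = a := by
    intro a
    obtain ⟨x, hx⟩ := sP.2.1 a
    rw [← hx, hs0]
    show (x.1.1 : ↥A) - (jT (r x)).1.1 = pr1 x
    rw [show ((jT (r x)).1.1 : ↥A) = 0 from rfl, sub_zero]
    rfl
  let φ : A ⟶ A := s ≫ ModuleCat.ofHom ((LinearMap.snd Λ ↥A ↥A).comp (Submodule.subtype P))
  have hφπ : ∀ a, π (φ a) = f (π a) := by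
    intro a
    have h2 := (hmemP (s a).1).mp (s a).2
    rw [hs a] at h2
    exact h2.symm
  have hmemψ : ∀ t, ∃ t', g t' = (g ≫ φ : T ⟶ A) t := by
    intro t
    have h2 : π (φ (g t)) = 0 := by
      rw [hφπ (g t), (hπ0 (g t)).mpr ⟨t, rfl⟩, map_zero]
    exact (hπ0 _).mp h2
  obtain ⟨ψ, hψ'⟩ := exists_liftI g hg (g ≫ φ) hmemψ
  have hψ : ∀ t, g (ψ t) = φ (g t) := fun t => hψ' t
  by_cases hψ0 : ψ = 0
  · exfalso
    apply hf
    have hφg : ∀ t, φ (g t) = 0 := by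
      intro t
      rw [← hψ t, hψ0]
      show (g 0 : ↥A) = 0
      rw [map_zero]
    have hkerφ : ∀ a, π a = 0 → φ a = 0 := by
      intro a ha
      obtain ⟨t, ht⟩ := (hπ0 a).mp ha
      rw [← ht, hφg t]
    obtain ⟨v, hv⟩ := exists_desc π hπs φ hkerφ
    have hv0 := filt_hom_from homCS hA v
    refine ModuleCat.hom_ext (LinearMap.ext fun c => ?_)
    obtain ⟨a, ha⟩ := hπs c
    have h9 : f (π a) = 0 := by
      rw [← hφπ a, ← hv a, hv0]
      show π ((0 : C ⟶ A) (π a)) = 0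
      show (π 0 : ↥C) = 0
      rw [map_zero]
    rw [← ha]
    exact h9
  · have hψiso : IsIso ψ := hT.2 ψ hψ0
    have hψbij := bijective_of_isIso ψ hψiso
    let eψ := LinearEquiv.ofBijective ψ.hom hψbij
    obtain ⟨u, hu⟩ := hfac A hA (ModuleCat.ofHom eψ.symm.toLinearMap ≫ g)
    have hu' : ∀ t, u (g t) = g (eψ.symm t) := fun t => lapp hu t
    have hes : ∀ t, ψ (eψ.symm t) = t := fun t => eψ.apply_symm_apply t
    have hse : ∀ t, eψ.symm (ψ t) = t := fun t => eψ.symm_apply_apply t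
    have m1 : IsIso (φ ≫ u) := by
      apply hmin
      ext t
      show u (φ (g t)) = g t
      rw [← hψ t, hu' (ψ t), hse t]
    have m2 : IsIso (u ≫ φ) := by
      apply hmin
      ext t
      show φ (u (g t)) = g t
      rw [hu' t, ← hψ (eψ.symm t), hes t]
    have hφiso := isIso_of_sandwich φ u m1 m2
    have hφbij := bijective_of_isIso φ hφiso
    apply isIso_of_bijective
    constructor
    · apply injective_of_sub
      intro c hc
      obtain ⟨a, ha⟩ := hπs c
      rw [← ha] at hc ⊢
      have h2 : π (φ a) = 0 := by rw [hφπ a, hc]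
      obtain ⟨t, ht⟩ := (hπ0 (φ a)).mp h2
      have h3 : φ (g (eψ.symm t)) = φ a := by
        rw [← hψ (eψ.symm t), hes t]
        exact ht
      have h4 : g (eψ.symm t) = a := hφbij.1 h3
      rw [← h4]
      exact (hπ0 _).mpr ⟨_, rfl⟩
    · intro c
      obtain ⟨a, ha⟩ := hπs c
      obtain ⟨a', ha'⟩ := hφbij.2 a
      exact ⟨π a', by rw [← hφπ a', ha', ha]⟩

set_option maxHeartbeats 2000000 in
lemma part1epi {S T A : ModuleCat.{u} Λ} (hS : IsBrick S) (hT : IsBrick T)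
    (hST : ∀ f : S ⟶ T, f = 0)
    (hsplit : ∀ (F : ModuleCat.{u} Λ) (i : T ⟶ F) (p : F ⟶ S), IsSESeq i p →
      ∃ r : F ⟶ T, i ≫ r = 𝟙 T)
    {g : T ⟶ A} (happ : IsMinLeftApprox S g) (hg : Surjective g) :
    IsBrick (ModuleCat.of Λ ↥(LinearMap.ker g.hom)) := by
  obtain ⟨hA, hfac, hmin⟩ := happ
  set Kk : Submodule Λ T := LinearMap.ker g.hom with hKk
  let κ : ModuleCat.of Λ ↥Kk ⟶ T := ModuleCat.ofHom (Submodule.subtype Kk)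
  have hκinj : Injective κ := Subtype.val_injective
  -- K nontrivial
  have hKnt : Nontrivial (ModuleCat.of Λ ↥Kk) := by
    by_contra hns
    have hsub : Subsingleton ↥Kk := not_nontrivial_iff_subsingleton.mp hns
    have hginj : Injective g := by
      apply injective_of_sub
      intro t ht
      have h2 : (⟨t, LinearMap.mem_ker.mpr ht⟩ : ↥Kk) = ⟨0, by simp⟩ := Subsingleton.elim _ _
      exact congrArg Subtype.val h2
    have hTnt : Nontrivial T := hT.1
    have hAnt : Nontrivial A := nontrivial_transfer g hginj hTnt
    obtain ⟨f, s, hs⟩ := filt_nonzero_from_S hS.1 hA hAnt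
    let e := LinearEquiv.ofBijective g.hom ⟨hginj, hg⟩
    have h2 := hST (f ≫ ModuleCat.ofHom e.symm.toLinearMap)
    apply hs
    have h3 : e.symm (f s) = 0 := lapp h2 s
    have h4 := congrArg e h3
    rwa [LinearEquiv.apply_symm_apply, map_zero] at h4
  refine ⟨hKnt, fun f hf => ?_⟩
  let θ : ModuleCat.of Λ ↥Kk ⟶ T := f ≫ κ
  -- pushout Q = (T × T) ⧸ D
  set D : Submodule Λ (ModuleCat.of Λ (↥T × ↥T)) :=
    LinearMap.range (LinearMap.prod κ.hom (-θ.hom)) with hD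
  let Q := ModuleCat.of Λ ((↥T × ↥T) ⧸ D)
  let mkD : ModuleCat.of Λ (↥T × ↥T) ⟶ Q := ModuleCat.ofHom (D.mkQ)
  have hmkDs : Surjective mkD := Submodule.mkQ_surjective D
  have hmkD0 : ∀ z : ↥T × ↥T, mkD z = 0 ↔ z ∈ D := fun z => Submodule.Quotient.mk_eq_zero D
  let iQ : T ⟶ Q := ModuleCat.ofHom (LinearMap.inr Λ ↥T ↥T : ↥T →ₗ[Λ] ↥T × ↥T) ≫ mkD
  let fstg : ModuleCat.of Λ (↥T × ↥T) ⟶ A := ModuleCat.ofHom (g.hom.comp (LinearMap.fst Λ ↥T ↥T))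
  have hkerQ : ∀ z : ↥T × ↥T, mkD z = 0 → fstg z = 0 := by
    intro z hz
    obtain ⟨x, hxz⟩ := (hmkD0 z).mp hz
    have h2 : z.1 = κ x := (congrArg Prod.fst hxz).symm
    show g z.1 = 0
    rw [h2]
    exact x.2
  obtain ⟨pQ, hpQ'⟩ := exists_desc mkD hmkDs fstg hkerQ
  have hpQ : ∀ z : ↥T × ↥T, pQ (mkD z) = g z.1 := fun z => hpQ' z
  have sQ : IsSESeq iQ pQ := by
    refine ⟨?_, ?_, ?_⟩
    · apply injective_of_sub
      intro t ht
      have h1 : mkD ((0 : ↥T), t) = 0 := ht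
      obtain ⟨x, hxz⟩ := (hmkD0 _).mp h1
      have h2 : κ x = 0 := congrArg Prod.fst hxz
      have h3 : x = 0 := hκinj (by rw [h2, map_zero])
      have h4 : -θ x = t := congrArg Prod.snd hxz
      rw [← h4, h3, map_zero, neg_zero]
    · intro a
      obtain ⟨t, ht⟩ := hg a
      refine ⟨mkD (t, 0), ?_⟩
      rw [hpQ (t, 0)]
      exact ht
    · apply le_antisymm
      · rintro z ⟨t, ht⟩
        rw [LinearMap.mem_ker, ← ht]
        show pQ (mkD ((0 : ↥T), t)) = 0
        rw [hpQ ((0 : ↥T), t), map_zero]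
      · rintro z hz
        obtain ⟨w, hw⟩ := hmkDs z
        have h1 : g w.1 = 0 := by
          have h2 : pQ z = 0 := hz
          rw [← hw, hpQ w] at h2
          exact h2
        have hwK : w.1 ∈ Kk := LinearMap.mem_ker.mpr h1
        refine ⟨w.2 + θ ⟨w.1, hwK⟩, ?_⟩
        show mkD ((0 : ↥T), w.2 + θ ⟨w.1, hwK⟩) = z
        rw [← hw]
        have h3 : ((0 : ↥T), w.2 + θ ⟨w.1, hwK⟩) - (w.1, w.2) ∈ D := by
          have h4 : ((0 : ↥T), w.2 + θ ⟨w.1, hwK⟩) - (w.1, w.2) = -(κ ⟨w.1, hwK⟩, -θ ⟨w.1, hwK⟩) := by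
            apply Prod.ext
            · show (0 : ↥T) - w.1 = -(κ ⟨w.1, hwK⟩)
              show (0 : ↥T) - w.1 = -w.1
              rw [zero_sub]
            · show w.2 + θ ⟨w.1, hwK⟩ - w.2 = -(-θ ⟨w.1, hwK⟩)
              rw [neg_neg, add_sub_cancel_left]
          rw [h4]
          exact neg_mem ⟨⟨w.1, hwK⟩, rfl⟩
        have h5 : mkD (((0 : ↥T), w.2 + θ ⟨w.1, hwK⟩) - (w.1, w.2)) = 0 := (hmkD0 _).mpr h3
        rw [map_sub, sub_eq_zero] at h5
        exact h5
  obtain ⟨ρ, hρ⟩ := filt_ext_split hsplit hA Q iQ pQ sQ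
  have hρi : ∀ t, ρ (iQ t) = t := fun t => lapp hρ t
  let φ : T ⟶ T := ModuleCat.ofHom (LinearMap.inl Λ ↥T ↥T : ↥T →ₗ[Λ] ↥T × ↥T) ≫ mkD ≫ ρ
  have hφκ : ∀ x : ↥Kk, φ (κ x) = θ x := by
    intro x
    show ρ (mkD ((κ x : ↥T), (0 : ↥T))) = θ x
    have h3 : ((κ x : ↥T), (0 : ↥T)) - ((0 : ↥T), θ x) ∈ D := by
      refine ⟨x, ?_⟩
      apply Prod.ext
      · show (κ x : ↥T) = κ x - 0
        rw [sub_zero]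
      · show -θ x = 0 - θ x
        rw [zero_sub]
    have h4 : mkD (((κ x : ↥T), (0 : ↥T)) - ((0 : ↥T), θ x)) = 0 := (hmkD0 _).mpr h3
    rw [map_sub, sub_eq_zero] at h4
    rw [h4]
    exact hρi (θ x)
  by_cases hφ0 : φ = 0
  · exfalso
    apply hf
    refine ModuleCat.hom_ext (LinearMap.ext fun x => ?_)
    have h2 : κ (f x) = 0 := by
      rw [show (κ (f x) : ↥T) = θ x from rfl, ← hφκ x, hφ0]
      rfl
    apply hκinj
    rw [h2]
    show (0 : ↥T) = κ 0
    rw [map_zero]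
  · have hφiso : IsIso φ := hT.2 φ hφ0
    have hφbij := bijective_of_isIso φ hφiso
    let eφ := LinearEquiv.ofBijective φ.hom hφbij
    have hkerψ : ∀ t, g t = 0 → (φ ≫ g : T ⟶ A) t = 0 := by
      intro t ht
      have htK : t ∈ Kk := LinearMap.mem_ker.mpr ht
      show g (φ t) = 0
      rw [show (t : ↥T) = κ ⟨t, htK⟩ from rfl, hφκ ⟨t, htK⟩]
      exact (f ⟨t, htK⟩).2
    obtain ⟨ψ, hψ'⟩ := exists_desc g hg (φ ≫ g) hkerψ
    have hψ : ∀ t, ψ (g t) = g (φ t) := fun t => hψ' t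
    obtain ⟨u, hu⟩ := hfac A hA (ModuleCat.ofHom eφ.symm.toLinearMap ≫ g)
    have hu' : ∀ t, u (g t) = g (eφ.symm t) := fun t => lapp hu t
    have hes : ∀ t, φ (eφ.symm t) = t := fun t => eφ.apply_symm_apply t
    have hse : ∀ t, eφ.symm (φ t) = t := fun t => eφ.symm_apply_apply t
    have m1 : IsIso (ψ ≫ u) := by
      apply hmin
      ext t
      show u (ψ (g t)) = g t
      rw [hψ t, hu' (φ t), hse t]
    have m2 : IsIso (u ≫ ψ) := by
      apply hmin
      ext t
      show ψ (u (g t)) = g t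
      rw [hu' t, hψ (eφ.symm t), hes t]
    have hψiso := isIso_of_sandwich ψ u m1 m2
    have hψbij := bijective_of_isIso ψ hψiso
    apply isIso_of_bijective
    constructor
    · apply injective_of_sub
      intro x hx
      have h2 : φ (κ x) = 0 := by
        rw [hφκ x]
        show κ (f x) = 0
        rw [hx, map_zero]
      have h3 : κ x = 0 := hφbij.1 (by rw [h2, map_zero])
      exact hκinj (by rw [h3, map_zero])
    · intro x
      have h2 : g (eφ.symm (κ x)) = 0 := by
        apply hψbij.1
        rw [map_zero, hψ (eφ.symm (κ x)), hes (κ x)]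
        exact x.2
      refine ⟨⟨eφ.symm (κ x), LinearMap.mem_ker.mpr h2⟩, ?_⟩
      apply hκinj
      rw [show (κ (f ⟨eφ.symm (κ x), LinearMap.mem_ker.mpr h2⟩) : ↥T) =
        θ ⟨eφ.symm (κ x), LinearMap.mem_ker.mpr h2⟩ from rfl,
        ← hφκ ⟨eφ.symm (κ x), LinearMap.mem_ker.mpr h2⟩]
      show φ (eφ.symm (κ x)) = κ x
      exact hes (κ x)

end SBAux

/-- Let `Λ` be a finite-dimensional algebra and `X = Sp ⊔ Sn[1]` a
semibrick pair which is singly left mutation compatible at `S ∈ Sp`. Then for every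
`T ∈ X` with `T ≠ S`, the cone of a left minimal `Filt S`-approximation
`g : T[-1] ⟶ S_T` is a brick. For `T ∈ Sn` the approximation `g : T ⟶ S_T` is mono or
epi, and the cone is `coker g` (resp. `(ker g)[1]`); for `T ∈ Sp` the approximation is an
extension class `S_T ↪ E ↠ T` and the cone is its middle term `E`. -/
theorem stmt11 {K : Type} [Field K] {Λ : Type} [Ring Λ] [Algebra K Λ] [FiniteDimensional K Λ]
    (Sp Sn : Set (ModuleCat Λ)) (hX : IsSemibrickPair Sp Sn)
    (S : ModuleCat Λ) (hcompat : SinglyLeftMutCompatAt Sp Sn S) :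
    (∀ T ∈ Sn, ∀ (A : ModuleCat Λ) (g : T ⟶ A), IsMinLeftApprox S g →
      (Mono g → IsBrick (Limits.cokernel g)) ∧ (Epi g → IsBrick (Limits.kernel g))) ∧
    (∀ T ∈ Sp, T ≠ S → ∀ (A E : ModuleCat Λ) (i : A ⟶ E) (p : E ⟶ T),
      IsMinExtApprox S T A E i p → IsBrick E) := by
  obtain ⟨hSpB, hSnB, hSpSp, hSnSn, hSpSn, hext⟩ := hX
  obtain ⟨hSmem, _hcomp⟩ := hcompat
  have hS : IsBrick S := hSpB S hSmem
  constructor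
  · intro T hT A g happ
    have hTb : IsBrick T := hSnB T hT
    have hST : ∀ f : S ⟶ T, f = 0 := hSpSn S hSmem T hT
    have hsplit : ∀ (F : ModuleCat Λ) (i : T ⟶ F) (p : F ⟶ S), IsSESeq i p →
        ∃ r : F ⟶ T, i ≫ r = 𝟙 T :=
      fun F i p hs => hext S hSmem T hT F i p hs
    constructor
    · intro hmono
      have hg : Function.Injective g := (ModuleCat.mono_iff_injective g).mp hmono
      exact SBAux.brick_iso (SBAux.part1mono hS hTb hST hsplit happ hg)
        (ModuleCat.cokernelIsoRangeQuotient g).symm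
    · intro hepi
      have hg : Function.Surjective g := (ModuleCat.epi_iff_surjective g).mp hepi
      exact SBAux.brick_iso (SBAux.part1epi hS hTb hST hsplit happ hg)
        (ModuleCat.kernelIsoKer g).symm
  · intro T hT hTne A E i p happ
    have hTb : IsBrick T := hSpB T hT
    have hST : ∀ f : S ⟶ T, f = 0 := hSpSp S hSmem T hT (fun h => hTne h.symm)
    have hTS : ∀ f : T ⟶ S, f = 0 := hSpSp T hT S hSmem hTne
    exact SBAux.part2 hS hTb hST hTS happ
end

section
/- Let Λ be a finite-dimensional algebra, X = S_p ⊔ S_n[1] a semibrick pair singly left mutation compatible at S ∈ S_p, and define the left mutation μ⁺_S(X) by replacing S with S[1] and each other T ∈ X by the cone of a left minimal Filt(S)-approximation T[-1] → S_T. Then μ⁺_S(X) is again a semibrick pair. -/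
open CategoryTheory

universe u

variable {Λ : Type u} [Ring Λ]

namespace SB

instance homToLin {M N : ModuleCat.{u} Λ} : Coe (M ⟶ N) (M →ₗ[Λ] N) := ⟨ModuleCat.Hom.hom⟩

instance linToHom {M N : ModuleCat.{u} Λ} : Coe (M →ₗ[Λ] N) (M ⟶ N) := ⟨ModuleCat.ofHom⟩

lemma hom_ext {M N : ModuleCat.{u} Λ} {f g : M ⟶ N} (h : ∀ x, f x = g x) : f = g :=
  ModuleCat.hom_ext (LinearMap.ext h)

lemma ne_zero_iff {M N : ModuleCat.{u} Λ} {f : M ⟶ N} : f ≠ 0 ↔ ∃ x, f x ≠ 0 := by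
  constructor
  · intro h
    by_contra hc
    push_neg at hc
    exact h (hom_ext fun x => by simpa using hc x)
  · rintro ⟨x, hx⟩ h
    subst h
    exact hx rfl

lemma isIso_of_bijective {M N : ModuleCat.{u} Λ} (f : M ⟶ N) (hf : Function.Bijective f) :
    IsIso f := by
  let e := LinearEquiv.ofBijective (f : M →ₗ[Λ] N) hf
  refine ⟨e.symm.toLinearMap, ?_, ?_⟩
  · exact hom_ext fun x => e.symm_apply_apply x
  · exact hom_ext fun x => e.apply_symm_apply x

lemma bijective_of_isIso {M N : ModuleCat.{u} Λ} (f : M ⟶ N) [IsIso f] :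
    Function.Bijective f := by
  have h1 : ∀ x : M, (inv f : N ⟶ M) (f x) = x := by
    intro x
    exact congrArg (fun (g : M ⟶ M) => g x) (IsIso.hom_inv_id f)
  have h2 : ∀ y : N, f ((inv f : N ⟶ M) y) = y := by
    intro y
    exact congrArg (fun (g : N ⟶ N) => g y) (IsIso.inv_hom_id f)
  constructor
  · intro a b h
    have := congrArg (inv f : N ⟶ M) h
    rwa [h1, h1] at this
  · intro y
    exact ⟨(inv f : N ⟶ M) y, h2 y⟩

lemma injective_of_isIso {M N : ModuleCat.{u} Λ} (f : M ⟶ N) (h : IsIso f) :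
    Function.Injective f := (bijective_of_isIso f).injective

lemma surjective_of_isIso {M N : ModuleCat.{u} Λ} (f : M ⟶ N) (h : IsIso f) :
    Function.Surjective f := (bijective_of_isIso f).surjective

/-- Factor a map through an injective map, given that its range is contained. -/
lemma factor_inj {A E X : ModuleCat.{u} Λ} (i : A ⟶ E) (hi : Function.Injective i)
    (f : X ⟶ E) (h : ∀ x, ∃ a, i a = f x) : ∃ g : X ⟶ A, g ≫ i = f := by
  have hmem : ∀ x, f x ∈ LinearMap.range (i : A →ₗ[Λ] E) := fun x => by
    obtain ⟨a, ha⟩ := h x; exact ⟨a, ha⟩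
  let e := LinearEquiv.ofInjective (i : A →ₗ[Λ] E) hi
  let f' : X →ₗ[Λ] LinearMap.range (i : A →ₗ[Λ] E) :=
    LinearMap.codRestrict _ f hmem
  refine ⟨e.symm.toLinearMap.comp f', hom_ext fun x => ?_⟩
  show i (e.symm (f' x)) = f x
  have : i (e.symm (f' x)) = ((e (e.symm (f' x)) : LinearMap.range (i : A →ₗ[Λ] E)) : E) := by
    rw [LinearEquiv.ofInjective_apply]
  rw [this, e.apply_symm_apply]
  rfl

/-- Factor a map through a surjective map whose kernel it kills. -/
lemma factor_surj {E B X : ModuleCat.{u} Λ} (p : E ⟶ B) (hp : Function.Surjective p)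
    (f : E ⟶ X) (h : ∀ e, p e = 0 → f e = 0) : ∃ g : B ⟶ X, p ≫ g = f := by
  have key : ∀ e e' : E, p e = p e' → f e = f e' := by
    intro e e' he
    have : f (e - e') = 0 := h _ (by simp [he])
    have := sub_eq_zero.mp (by simpa using this)
    exact this
  refine ⟨ModuleCat.ofHom
          { toFun := fun b => f (Classical.choose (hp b))
            map_add' := ?_
            map_smul' := ?_ }, hom_ext fun e => ?_⟩
  · intro b b'
    show f (Classical.choose (hp (b + b'))) =
      f (Classical.choose (hp b)) + f (Classical.choose (hp b'))
    have h1 := Classical.choose_spec (hp b)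
    have h2 := Classical.choose_spec (hp b')
    have h3 := Classical.choose_spec (hp (b + b'))
    have heq : f (Classical.choose (hp (b + b'))) =
        f (Classical.choose (hp b) + Classical.choose (hp b')) :=
      key _ _ (by rw [h3, map_add, h1, h2])
    rw [heq, map_add]
  · intro r b
    show f (Classical.choose (hp (r • b))) = r • f (Classical.choose (hp b))
    have h1 := Classical.choose_spec (hp b)
    have h3 := Classical.choose_spec (hp (r • b))
    have heq : f (Classical.choose (hp (r • b))) = f (r • Classical.choose (hp b)) :=
      key _ _ (by rw [h3, map_smul, h1])
    rw [heq, map_smul]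
  · exact key _ _ (Classical.choose_spec (hp (p e)))

section SES

lemma ses_comp_zero {A E B : ModuleCat.{u} Λ} {i : A ⟶ E} {p : E ⟶ B} (hs : IsSESeq i p)
    (a : A) : p (i a) = 0 := by
  have : i a ∈ LinearMap.ker p.hom := hs.2.2 ▸ LinearMap.mem_range_self i.hom a
  exact this

lemma ses_exact {A E B : ModuleCat.{u} Λ} {i : A ⟶ E} {p : E ⟶ B} (hs : IsSESeq i p)
    {e : E} (he : p e = 0) : ∃ a, i a = e := by
  have : e ∈ LinearMap.range i.hom := hs.2.2 ▸ he
  exact this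

/-- From a retraction of the sub, get a section of the quotient. -/
lemma sec_of_retr {V Y B : ModuleCat.{u} Λ} {ι : V ⟶ Y} {π : Y ⟶ B} (hs : IsSESeq ι π)
    (r : Y ⟶ V) (hr : ι ≫ r = 𝟙 V) : ∃ s : B ⟶ Y, s ≫ π = 𝟙 B := by
  have hrι : ∀ v, r (ι v) = v := fun v => congrArg (fun (g : V ⟶ V) => g v) hr
  -- t = id - ι ∘ r kills ker π
  let t : Y ⟶ Y := (LinearMap.id : Y →ₗ[Λ] Y) - (r ≫ ι : Y ⟶ Y)
  have ht : ∀ y, t y = y - ι (r y) := fun y => rfl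
  have hker : ∀ y, π y = 0 → t y = 0 := by
    intro y hy
    obtain ⟨v, rfl⟩ := ses_exact hs hy
    rw [ht, hrι, sub_self]
  obtain ⟨s, hsdef⟩ := factor_surj π hs.2.1 t hker
  have hs' : ∀ y, s (π y) = y - ι (r y) := by
    intro y
    have := congrArg (fun (g : Y ⟶ Y) => g y) hsdef
    rw [← ht]; exact this
  refine ⟨s, hom_ext fun b => ?_⟩
  obtain ⟨y, rfl⟩ := hs.2.1 b
  show π (s (π y)) = π y
  rw [hs', map_sub, ses_comp_zero hs, sub_zero]

/-- From a section of the quotient, get a retraction of the sub. -/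
lemma retr_of_sec {V Y B : ModuleCat.{u} Λ} {ι : V ⟶ Y} {π : Y ⟶ B} (hs : IsSESeq ι π)
    (s : B ⟶ Y) (hsec : s ≫ π = 𝟙 B) : ∃ r : Y ⟶ V, ι ≫ r = 𝟙 V := by
  have hπs : ∀ b, π (s b) = b := fun b => congrArg (fun (g : B ⟶ B) => g b) hsec
  let t : Y ⟶ Y := (LinearMap.id : Y →ₗ[Λ] Y) - (π ≫ s : Y ⟶ Y)
  have ht : ∀ y, t y = y - s (π y) := fun y => rfl
  have hmem : ∀ y, ∃ v, ι v = t y := by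
    intro y
    apply ses_exact hs
    rw [ht, map_sub, hπs, sub_self]
  obtain ⟨r, hrdef⟩ := factor_inj ι hs.1 t hmem
  have hr : ∀ y, ι (r y) = y - s (π y) := by
    intro y
    have := congrArg (fun (g : Y ⟶ Y) => g y) hrdef
    rw [← ht]; exact this
  refine ⟨r, hom_ext fun v => ?_⟩
  apply hs.1
  show ι (r (ι v)) = ι v
  rw [hr, ses_comp_zero hs, map_zero, sub_zero]

/-- Pullback of a short exact sequence along a map, with its universal property. -/
lemma pullback_ses {V Y C X : ModuleCat.{u} Λ} (ι : V ⟶ Y) (π : Y ⟶ C) (hs : IsSESeq ι π)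
    (h : X ⟶ C) : ∃ (P : ModuleCat.{u} Λ) (ι' : V ⟶ P) (π' : P ⟶ X) (σ : P ⟶ Y),
      IsSESeq ι' π' ∧ ι' ≫ σ = ι ∧ σ ≫ π = π' ≫ h ∧
      (∀ (Z : ModuleCat.{u} Λ) (a : Z ⟶ Y) (b : Z ⟶ X), a ≫ π = b ≫ h →
        ∃ c : Z ⟶ P, c ≫ σ = a ∧ c ≫ π' = b) := by
  classical
  let d : (ModuleCat.of Λ (Y × X)) ⟶ C :=
    (π : Y →ₗ[Λ] C).comp (LinearMap.fst Λ Y X) - (h : X →ₗ[Λ] C).comp (LinearMap.snd Λ Y X)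
  let Psub : Submodule Λ (Y × X) := LinearMap.ker d.hom
  have hPsub : ∀ z : Y × X, z ∈ Psub ↔ π z.1 = h z.2 := by
    intro z
    show π z.1 - h z.2 = 0 ↔ _
    exact sub_eq_zero
  let P : ModuleCat.{u} Λ := ModuleCat.of Λ Psub
  let ι' : V ⟶ P := LinearMap.codRestrict Psub
    ((LinearMap.inl Λ Y X).comp (ι : V →ₗ[Λ] Y))
    (fun v => (hPsub _).2 (by show π (ι v) = h 0; rw [ses_comp_zero hs, map_zero]))
  let π' : P ⟶ X := (LinearMap.snd Λ Y X).comp Psub.subtype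
  let σ : P ⟶ Y := (LinearMap.fst Λ Y X).comp Psub.subtype
  refine ⟨P, ι', π', σ, ⟨?_, ?_, ?_⟩, ?_, ?_, ?_⟩
  · intro a b hab
    apply hs.1
    have := congrArg (fun z : Psub => (z : Y × X).1) hab
    exact this
  · intro x
    obtain ⟨y, hy⟩ := hs.2.1 (h x)
    exact ⟨⟨(y, x), (hPsub _).2 hy⟩, rfl⟩
  · apply le_antisymm
    · rintro z ⟨v, rfl⟩
      show (ι v, (0 : X)).2 = 0
      rfl
    · rintro ⟨⟨y, x⟩, hz⟩ hx
      have hx' : x = 0 := hx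
      have hy : π y = 0 := by
        have := (hPsub _).1 hz
        rw [hx'] at this
        simpa using this
      obtain ⟨v, hv⟩ := ses_exact hs hy
      refine ⟨v, ?_⟩
      apply Subtype.ext
      show (ι v, (0 : X)) = (y, x)
      rw [hv, hx']
  · rfl
  · apply hom_ext
    rintro ⟨⟨y, x⟩, hz⟩
    exact (hPsub _).1 hz
  · intro Z a b hab
    have hab' : ∀ z, π (a z) = h (b z) := fun z => congrArg (fun (g : Z ⟶ C) => g z) hab
    refine ⟨LinearMap.codRestrict Psub ((a : Z →ₗ[Λ] Y).prod (b : Z →ₗ[Λ] X))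
      (fun z => (hPsub _).2 (hab' z)), rfl, rfl⟩

lemma mkQ_eq' {M : Type u} [AddCommGroup M] [Module Λ M] (N : Submodule Λ M) (x y : M) :
    N.mkQ x = N.mkQ y ↔ x - y ∈ N := by
  rw [Submodule.mkQ_apply, Submodule.mkQ_apply, Submodule.Quotient.eq]

/-- Pushout of a short exact sequence along a map. -/
lemma pushout_ses {K V B W : ModuleCat.{u} Λ} (κ : K ⟶ V) (gq : V ⟶ B) (hs : IsSESeq κ gq)
    (φ : K ⟶ W) : ∃ (Q : ModuleCat.{u} Λ) (ιW : W ⟶ Q) (πB : Q ⟶ B) (jV : V ⟶ Q),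
      IsSESeq ιW πB ∧ κ ≫ jV = φ ≫ ιW ∧ jV ≫ πB = gq := by
  classical
  let N : Submodule Λ (W × V) :=
    LinearMap.range ((φ : K →ₗ[Λ] W).prod (-(κ : K →ₗ[Λ] V)))
  let Q : ModuleCat.{u} Λ := ModuleCat.of Λ ((W × V) ⧸ N)
  let ιW : W ⟶ Q := N.mkQ.comp (LinearMap.inl Λ W V)
  let jV : V ⟶ Q := N.mkQ.comp (LinearMap.inr Λ W V)
  have hkill : ∀ z ∈ N, gq ((z : W × V).2) = 0 := by
    rintro z ⟨k, rfl⟩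
    show gq (-(κ k)) = 0
    rw [map_neg, ses_comp_zero hs, neg_zero]
  let πB : Q ⟶ B := N.liftQ ((gq : V →ₗ[Λ] B).comp (LinearMap.snd Λ W V))
    (fun z hz => hkill z hz)
  refine ⟨Q, ιW, πB, jV, ⟨?_, ?_, ?_⟩, ?_, ?_⟩
  · intro w w' hww
    have : ((w, (0:V)) : W × V) - (w', (0:V)) ∈ N := (mkQ_eq' N _ _).1 hww
    obtain ⟨k, hk⟩ := this
    have hk2 : -(κ k) = (0 : V) := by
      have h := congrArg Prod.snd hk
      rw [show (((w, (0:V)) : W × V) - ((w', (0:V)) : W × V)).2 = (0:V) by simp] at h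
      exact h
    have hk0 : k = 0 := hs.1 (by
      have : κ k = (0 : V) := neg_eq_zero.mp hk2
      rw [this, map_zero])
    have hk1 : φ k = w - w' := by
      have h := congrArg Prod.fst hk
      rw [show (((w, (0:V)) : W × V) - ((w', (0:V)) : W × V)).1 = w - w' by simp] at h
      exact h
    rw [hk0, map_zero] at hk1
    exact (sub_eq_zero.mp hk1.symm)
  · intro b
    obtain ⟨v, hv⟩ := hs.2.1 b
    exact ⟨N.mkQ ((0 : W), v), hv⟩
  · apply le_antisymm
    · rintro z ⟨w, rfl⟩
      show gq ((0:V)) = 0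
      exact map_zero _
    · intro z hz
      obtain ⟨⟨w, v⟩, rfl⟩ := N.mkQ_surjective z
      have hv : gq v = 0 := hz
      obtain ⟨k, hk⟩ := ses_exact hs hv
      refine ⟨w + φ k, ?_⟩
      show N.mkQ ((w + φ k, 0)) = N.mkQ ((w, v))
      rw [mkQ_eq']
      refine ⟨k, ?_⟩
      show ((φ k, -(κ k)) : W × V) = (w + φ k, 0) - (w, v)
      rw [hk]
      ext <;> simp
  · apply hom_ext
    intro k
    show N.mkQ ((0, κ k)) = N.mkQ ((φ k, 0))
    rw [mkQ_eq']
    refine ⟨-k, ?_⟩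
    show ((φ (-k), -(κ (-k))) : W × V) = (0, κ k) - (φ k, 0)
    ext <;> simp
  · rfl

end SES

section Split

/-- Every short exact sequence with sub `V` and quotient `M` splits. -/
def SplitBy (V M : ModuleCat.{u} Λ) : Prop :=
  ∀ (Y : ModuleCat.{u} Λ) (ι : V ⟶ Y) (π : Y ⟶ M), IsSESeq ι π → ∃ r : Y ⟶ V, ι ≫ r = 𝟙 V

lemma splitBy_subsingleton (V M : ModuleCat.{u} Λ) (h : Subsingleton M) : SplitBy V M := by
  intro Y ι π hs
  have hker : ∀ y : Y, π y = 0 := fun y => Subsingleton.elim _ _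
  have hsurj : Function.Surjective ι := by
    intro y
    exact ses_exact hs (hker y)
  obtain ⟨r, hr⟩ := factor_inj ι hs.1 (𝟙 Y) (fun y => hsurj y)
  refine ⟨r, ?_⟩
  apply hom_ext
  intro v
  apply hs.1
  have := congrArg (fun (g : Y ⟶ Y) => g (ι v)) hr
  exact this

lemma splitBy_iso {V M N : ModuleCat.{u} Λ} (h : SplitBy V M) (e : M ≅ N) : SplitBy V N := by
  intro Y ι π hs
  have hb : Function.Bijective (e.inv : N ⟶ M) := bijective_of_isIso _
  refine h Y ι (π ≫ e.inv) ⟨hs.1, hb.surjective.comp hs.2.1, ?_⟩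
  rw [hs.2.2]
  ext y
  constructor
  · intro hy
    show e.inv (π y) = 0
    rw [show π y = (0 : N) from hy, map_zero]
  · intro hy
    have : e.inv (π y) = e.inv 0 := by rw [map_zero]; exact hy
    exact hb.injective this

/-- Splitting extends along extensions of the quotient. -/
lemma splitBy_ext {V A M B : ModuleCat.{u} Λ} (iM : A ⟶ M) (pM : M ⟶ B)
    (hsMB : IsSESeq iM pM) (hA : SplitBy V A) (hB : SplitBy V B) : SplitBy V M := by
  intro Y ι π hs
  classical
  -- Y₁ = π⁻¹ (range iM)
  let Y1s : Submodule Λ Y := Submodule.comap (π : Y →ₗ[Λ] M) (LinearMap.range (iM : A →ₗ[Λ] M))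
  let Y1 : ModuleCat.{u} Λ := ModuleCat.of Λ Y1s
  let ι₁ : V ⟶ Y1 := LinearMap.codRestrict Y1s (ι : V →ₗ[Λ] Y)
    (fun v => by
      show π (ι v) ∈ LinearMap.range (iM : A →ₗ[Λ] M)
      rw [ses_comp_zero hs]
      exact Submodule.zero_mem _)
  let ιY1 : Y1 ⟶ Y := Y1s.subtype
  obtain ⟨π₁, hπ₁⟩ := factor_inj iM hsMB.1 (ιY1 ≫ π)
    (fun y => LinearMap.mem_range.mp y.2)
  have hπ₁' : ∀ y : Y1, iM (π₁ y) = π (ιY1 y) :=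
    fun y => congrArg (fun (g : Y1 ⟶ M) => g y) hπ₁
  have hses1 : IsSESeq ι₁ π₁ := by
    refine ⟨?_, ?_, ?_⟩
    · intro v v' hv
      exact hs.1 (congrArg (Subtype.val) hv)
    · intro a
      obtain ⟨y, hy⟩ := hs.2.1 (iM a)
      refine ⟨⟨y, ⟨a, hy.symm⟩⟩, hsMB.1 ?_⟩
      rw [hπ₁']
      exact hy
    · ext y
      constructor
      · rintro ⟨v, rfl⟩
        have h0 : iM (π₁ (ι₁ v)) = iM 0 := by
          rw [hπ₁', map_zero]
          exact ses_comp_zero hs v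
        exact hsMB.1 h0
      · intro hy
        have : π (ιY1 y) = 0 := by
          rw [← hπ₁' y, show π₁ y = 0 from hy, map_zero]
        obtain ⟨v, hv⟩ := ses_exact hs this
        exact ⟨v, Subtype.ext hv⟩
  obtain ⟨r₁, hr₁⟩ := hA Y1 ι₁ π₁ hses1
  have hr₁' : ∀ v, r₁ (ι₁ v) = v := fun v => congrArg (fun (g : V ⟶ V) => g v) hr₁
  -- Z = image in Y of ker r₁
  let Z : Submodule Λ Y := Submodule.map (Y1s.subtype) (LinearMap.ker r₁.hom)
  let Y2 : ModuleCat.{u} Λ := ModuleCat.of Λ (Y ⧸ Z)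
  let μ : Y ⟶ Y2 := Z.mkQ
  let ι₂ : V ⟶ Y2 := ι ≫ μ
  have hkill : ∀ y ∈ Z, pM (π y) = 0 := by
    rintro y ⟨y1, _, rfl⟩
    rw [show π (Y1s.subtype y1) = π (ιY1 y1) from rfl, ← hπ₁' y1]
    exact ses_comp_zero hsMB _
  let π₂ : Y2 ⟶ B := Z.liftQ ((pM : M →ₗ[Λ] B).comp (π : Y →ₗ[Λ] M))
    (fun y hy => hkill y hy)
  have hses2 : IsSESeq ι₂ π₂ := by
    refine ⟨?_, ?_, ?_⟩
    · intro v v' hv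
      have hmem : ι (v - v') ∈ Z := by
        rw [map_sub]
        exact (mkQ_eq' Z _ _).1 hv
      obtain ⟨y1, hy1, hy1v⟩ := hmem
      have heq : ι₁ (v - v') = y1 := Subtype.ext (by
        show ι (v - v') = Y1s.subtype y1
        exact hy1v.symm)
      have hv0 : v - v' = 0 := by
        rw [← hr₁' (v - v'), heq]
        exact hy1
      exact sub_eq_zero.mp hv0
    · intro b
      obtain ⟨m, hm⟩ := hsMB.2.1 b
      obtain ⟨y, hy⟩ := hs.2.1 m
      exact ⟨μ y, by show pM (π y) = b; rw [hy, hm]⟩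
    · ext y2
      constructor
      · rintro ⟨v, rfl⟩
        show pM (π (ι v)) = 0
        rw [ses_comp_zero hs, map_zero]
      · intro hy2
        obtain ⟨y, rfl⟩ := Z.mkQ_surjective y2
        have hpy : pM (π y) = 0 := hy2
        have hmem : y ∈ Y1s := ses_exact hsMB hpy
        let y1 : Y1 := ⟨y, hmem⟩
        refine ⟨r₁ y1, ?_⟩
        show Z.mkQ (ι (r₁ y1)) = Z.mkQ y
        rw [mkQ_eq']
        refine ⟨ι₁ (r₁ y1) - y1, ?_, ?_⟩
        · show r₁ (ι₁ (r₁ y1) - y1) = 0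
          rw [map_sub, hr₁', sub_self]
        · show Y1s.subtype (ι₁ (r₁ y1) - y1) = ι (r₁ y1) - y
          rfl
  obtain ⟨r₂, hr₂⟩ := hB Y2 ι₂ π₂ hses2
  exact ⟨μ ≫ r₂, hr₂⟩

end Split

section Filt

variable {S : ModuleCat.{u} Λ}

lemma filt_hom_zero_to {X : ModuleCat.{u} Λ} (hXS : ∀ f : X ⟶ S, f = 0)
    {M : ModuleCat.{u} Λ} (hM : FiltBy S M) : ∀ f : X ⟶ M, f = 0 := by
  induction hM with
  | self => exact hXS
  | zero M hsub => intro f; exact hom_ext fun x => Subsingleton.elim _ _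
  | iso M N hM e ih =>
      intro f
      have h0 : f ≫ e.inv = 0 := ih _
      apply hom_ext
      intro x
      have h1 : e.inv (f x) = 0 := congrArg (fun (k : X ⟶ M) => k x) h0
      have h2 : e.hom (e.inv (f x)) = f x := congrArg (fun (k : N ⟶ N) => k (f x)) e.inv_hom_id
      rw [← h2, h1, map_zero]
      rfl
  | ext A E B i p hA hB hs ihA ihB =>
      intro f
      have hfp : f ≫ p = 0 := ihB _
      obtain ⟨g, hg⟩ := factor_inj i hs.1 f
        (fun x => ses_exact hs (congrArg (fun (k : X ⟶ B) => k x) hfp))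
      rw [← hg, ihA g]
      exact hom_ext fun x => show i 0 = 0 from map_zero i.hom

lemma filt_hom_zero_from {X : ModuleCat.{u} Λ} (hSX : ∀ f : S ⟶ X, f = 0)
    {M : ModuleCat.{u} Λ} (hM : FiltBy S M) : ∀ f : M ⟶ X, f = 0 := by
  induction hM with
  | self => exact hSX
  | zero M hsub =>
      intro f
      exact hom_ext fun x => by
        rw [show x = 0 from Subsingleton.elim _ _, map_zero]
        rfl
  | iso M N hM e ih =>
      intro f
      have h0 : e.hom ≫ f = 0 := ih _
      apply hom_ext
      intro y
      have h2 : e.hom (e.inv y) = y := congrArg (fun (k : N ⟶ N) => k y) e.inv_hom_id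
      have h1 : f (e.hom (e.inv y)) = 0 := congrArg (fun (k : M ⟶ X) => k (e.inv y)) h0
      rw [h2] at h1
      exact h1
  | ext A E B i p hA hB hs ihA ihB =>
      intro f
      have hfi : i ≫ f = 0 := ihA _
      obtain ⟨g, hg⟩ := factor_surj p hs.2.1 f (fun e he => by
        obtain ⟨a, rfl⟩ := ses_exact hs he
        exact congrArg (fun (k : A ⟶ X) => k a) hfi)
      rw [← hg, ihB g]
      exact hom_ext fun x => rfl

lemma filt_nonzero_from (hS : Nontrivial S) {M : ModuleCat.{u} Λ} (hM : FiltBy S M) :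
    Nontrivial M → ∃ f : S ⟶ M, f ≠ 0 := by
  induction hM with
  | self =>
      intro _
      obtain ⟨x, hx⟩ := exists_ne (0 : S)
      exact ⟨𝟙 S, ne_zero_iff.2 ⟨x, hx⟩⟩
  | zero M hsub =>
      intro hnt
      exact absurd hsub (not_subsingleton_iff_nontrivial.mpr hnt)
  | iso M N hM e ih =>
      intro hnt
      have hbij : Function.Bijective (e.hom : M ⟶ N) := bijective_of_isIso _
      have hMnt : Nontrivial M := by
        obtain ⟨y, hy⟩ := exists_ne (0 : N)
        refine ⟨e.inv y, 0, fun hc => hy ?_⟩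
        have h2 : e.hom (e.inv y) = y := congrArg (fun (k : N ⟶ N) => k y) e.inv_hom_id
        rw [← h2, hc, map_zero]
      obtain ⟨f, hf⟩ := ih hMnt
      obtain ⟨x, hx⟩ := ne_zero_iff.1 hf
      refine ⟨f ≫ e.hom, ne_zero_iff.2 ⟨x, fun hc => hx ?_⟩⟩
      have : e.hom (f x) = 0 := hc
      exact hbij.injective (by rw [this, map_zero])
  | ext A E B i p hA hB hs ihA ihB =>
      intro hnt
      rcases subsingleton_or_nontrivial A with hsubA | hntA
      · have hpbij : Function.Bijective (p : E ⟶ B) := by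
          constructor
          · intro x y hxy
            have : p (x - y) = 0 := by rw [map_sub, hxy, sub_self]
            obtain ⟨a, ha⟩ := ses_exact hs this
            have ha0 : a = 0 := Subsingleton.elim _ _
            rw [ha0, map_zero] at ha
            exact sub_eq_zero.mp ha.symm
          · exact hs.2.1
        have hBnt : Nontrivial B := by
          obtain ⟨x, hx⟩ := exists_ne (0 : E)
          refine ⟨p x, 0, fun hc => hx (hpbij.injective (by rw [hc, map_zero]))⟩
        obtain ⟨f, hf⟩ := ihB hBnt
        let eqv := LinearEquiv.ofBijective (p : E →ₗ[Λ] B) hpbij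
        let pinv : B ⟶ E := eqv.symm.toLinearMap
        obtain ⟨x, hx⟩ := ne_zero_iff.1 hf
        refine ⟨f ≫ pinv, ne_zero_iff.2 ⟨x, fun hc => hx ?_⟩⟩
        have : eqv.symm (f x) = 0 := hc
        have := congrArg eqv this
        rw [eqv.apply_symm_apply, map_zero] at this
        exact this
      · obtain ⟨f, hf⟩ := ihA hntA
        obtain ⟨x, hx⟩ := ne_zero_iff.1 hf
        exact ⟨f ≫ i, ne_zero_iff.2 ⟨x, fun hc => hx (by
          have : i (f x) = 0 := hc
          rw [← map_zero i.hom] at this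
          exact hs.1 this)⟩⟩

lemma filt_surj_to (hSb : IsBrick S) {M : ModuleCat.{u} Λ} (hM : FiltBy S M) :
    ∀ θ : M ⟶ S, θ ≠ 0 → Function.Surjective θ := by
  induction hM with
  | self => exact fun θ hθ => surjective_of_isIso θ (hSb.2 θ hθ)
  | zero M hsub =>
      intro θ hθ
      exact absurd (hom_ext fun x => by
        rw [show x = (0 : M) from Subsingleton.elim _ _, map_zero]; rfl) hθ
  | iso M N hM e ih =>
      intro θ hθ
      have hθ' : e.hom ≫ θ ≠ 0 := by
        intro hc
        apply hθ
        apply hom_ext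
        intro y
        have h2 : e.hom (e.inv y) = y := congrArg (fun (k : N ⟶ N) => k y) e.inv_hom_id
        have := congrArg (fun (k : M ⟶ S) => k (e.inv y)) hc
        simpa [h2] using this
      intro s
      obtain ⟨m, hm⟩ := ih _ hθ' s
      exact ⟨e.hom m, hm⟩
  | ext A E B i p hA hB hs ihA ihB =>
      intro θ hθ
      by_cases hiθ : i ≫ θ = 0
      · obtain ⟨g, hg⟩ := factor_surj p hs.2.1 θ (fun e he => by
          obtain ⟨a, rfl⟩ := ses_exact hs he
          exact congrArg (fun (k : A ⟶ S) => k a) hiθ)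
        have hgne : g ≠ 0 := by
          intro hc
          apply hθ
          rw [← hg, hc]
          exact hom_ext fun x => rfl
        intro s
        obtain ⟨b, hb⟩ := ihB g hgne s
        obtain ⟨e, rfl⟩ := hs.2.1 b
        exact ⟨e, by rw [← hb, ← hg]; rfl⟩
      · intro s
        obtain ⟨a, ha⟩ := ihA _ hiθ s
        exact ⟨i a, ha⟩

lemma filt_ker (hSb : IsBrick S) {M : ModuleCat.{u} Λ} (hM : FiltBy S M) :
    ∀ (θ : M ⟶ S), Function.Surjective θ →
    ∀ (K : ModuleCat.{u} Λ) (κ : K ⟶ M), Function.Injective κ →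
    (∀ k, θ (κ k) = 0) → (∀ m, θ m = 0 → ∃ k, κ k = m) → FiltBy S K := by
  induction hM with
  | self =>
      intro θ hsurj K κ hinj hker hex
      have hntS : Nontrivial S := hSb.1
      have hθne : θ ≠ 0 := by
        obtain ⟨x, hx⟩ := exists_ne (0 : S)
        obtain ⟨m, hm⟩ := hsurj x
        exact ne_zero_iff.2 ⟨m, by rw [hm]; exact hx⟩
      have hθinj : Function.Injective θ := injective_of_isIso θ (hSb.2 θ hθne)
      refine FiltBy.zero K ⟨fun a b => ?_⟩
      have ha : ∀ k : K, k = (0 : K) := by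
        intro k
        apply hinj
        rw [map_zero]
        exact hθinj (by rw [hker k, map_zero])
      rw [ha a, ha b]
  | zero M hsub =>
      intro θ hsurj K κ hinj hker hex
      have : Subsingleton S := ⟨fun s s' => by
        obtain ⟨m, rfl⟩ := hsurj s
        obtain ⟨m', rfl⟩ := hsurj s'
        rw [Subsingleton.elim m m']⟩
      exact absurd hSb.1 (not_nontrivial_iff_subsingleton.mpr this)
  | iso M N hM e ih =>
      intro θ hsurj K κ hinj hker hex
      have hinvhom : ∀ y : N, e.hom (e.inv y) = y :=
        fun y => congrArg (fun (k : N ⟶ N) => k y) e.inv_hom_id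
      have hhominv : ∀ x : M, e.inv (e.hom x) = x :=
        fun x => congrArg (fun (k : M ⟶ M) => k x) e.hom_inv_id
      refine ih (e.hom ≫ θ) ?_ K (κ ≫ e.inv) ?_ ?_ ?_
      · intro s
        obtain ⟨n, hn⟩ := hsurj s
        exact ⟨e.inv n, by show θ (e.hom (e.inv n)) = s; rw [hinvhom, hn]⟩
      · intro a b hab
        have : e.hom (e.inv (κ a)) = e.hom (e.inv (κ b)) := congrArg e.hom hab
        rw [hinvhom, hinvhom] at this
        exact hinj this
      · intro k
        show θ (e.hom (e.inv (κ k))) = 0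
        rw [hinvhom]
        exact hker k
      · intro m hm
        obtain ⟨k, hk⟩ := hex (e.hom m) hm
        exact ⟨k, by show e.inv (κ k) = m; rw [hk, hhominv]⟩
  | ext A E B i p hA hB hs ihA ihB =>
      intro θ hsurj K κ hinj hker hex
      by_cases hiθ : i ≫ θ = 0
      · -- θ factors through B
        obtain ⟨θb, hθb⟩ := factor_surj p hs.2.1 θ (fun e he => by
          obtain ⟨a, rfl⟩ := ses_exact hs he
          exact congrArg (fun (k : A ⟶ S) => k a) hiθ)
        have hθb' : ∀ e, θb (p e) = θ e := fun e => congrArg (fun (k : E ⟶ S) => k e) hθb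
        have hθbsurj : Function.Surjective θb := by
          intro s
          obtain ⟨e, he⟩ := hsurj s
          exact ⟨p e, by rw [hθb', he]⟩
        obtain ⟨κA, hκA⟩ := factor_inj κ hinj i (fun a => hex (i a) (by
          exact congrArg (fun (k : A ⟶ S) => k a) hiθ))
        have hκA' : ∀ a, κ (κA a) = i a := fun a => congrArg (fun (k : A ⟶ E) => k a) hκA
        let Kb : ModuleCat.{u} Λ := ModuleCat.of Λ (LinearMap.ker (θb : B →ₗ[Λ] S))
        have hKbfilt : FiltBy S Kb :=
          ihB θb hθbsurj Kb ((LinearMap.ker (θb : B →ₗ[Λ] S)).subtype)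
            (Subtype.val_injective) (fun x => x.2)
            (fun m hm => ⟨⟨m, hm⟩, rfl⟩)
        let πK : K ⟶ Kb := ModuleCat.ofHom <| LinearMap.codRestrict (LinearMap.ker θb.hom) ((κ ≫ p : K ⟶ B) : K →ₗ[Λ] B)
          (fun k => by
            show θb (p (κ k)) = 0
            rw [hθb', hker])
        have hsesK : IsSESeq κA πK := by
          refine ⟨?_, ?_, ?_⟩
          · intro a a' ha
            apply hs.1
            rw [← hκA', ← hκA', ha]
          · rintro ⟨b, hb⟩
            obtain ⟨e, rfl⟩ := hs.2.1 b
            have : θ e = 0 := by rw [← hθb']; exact hb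
            obtain ⟨k, hk⟩ := hex e this
            exact ⟨k, Subtype.ext (by show p (κ k) = p e; rw [hk])⟩
          · ext k
            constructor
            · rintro ⟨a, rfl⟩
              refine LinearMap.mem_ker.mpr (Subtype.ext ?_)
              show p (κ (κA a)) = 0
              rw [hκA']
              exact ses_comp_zero hs a
            · intro hk
              have : p (κ k) = 0 := congrArg Subtype.val (LinearMap.mem_ker.mp hk)
              obtain ⟨a, ha⟩ := ses_exact hs this
              exact ⟨a, hinj (by rw [hκA', ha])⟩
        exact FiltBy.ext A K Kb κA πK hA hKbfilt hsesK
      · -- i ≫ θ is surjective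
        have hθAsurj : Function.Surjective (i ≫ θ : A ⟶ S) := filt_surj_to hSb hA _ hiθ
        let KA : ModuleCat.{u} Λ := ModuleCat.of Λ (LinearMap.ker ((i ≫ θ : A ⟶ S) : A →ₗ[Λ] S))
        have hKAfilt : FiltBy S KA :=
          ihA (i ≫ θ) hθAsurj KA ((LinearMap.ker ((i ≫ θ : A ⟶ S) : A →ₗ[Λ] S)).subtype)
            (Subtype.val_injective) (fun x => x.2)
            (fun m hm => ⟨⟨m, hm⟩, rfl⟩)
        let ιKA : KA ⟶ A := (LinearMap.ker ((i ≫ θ : A ⟶ S) : A →ₗ[Λ] S)).subtype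
        have hmem : ∀ x : KA, ∃ k, κ k = (ιKA ≫ i) x := by
          rintro ⟨a, ha⟩
          exact hex (i a) ha
        obtain ⟨κ', hκ'⟩ := factor_inj κ hinj (ιKA ≫ i) hmem
        have hκ'' : ∀ x : KA, κ (κ' x) = i x.1 :=
          fun x => congrArg (fun (k : KA ⟶ E) => k x) hκ'
        have hsesK : IsSESeq κ' (κ ≫ p : K ⟶ B) := by
          refine ⟨?_, ?_, ?_⟩
          · intro x x' hx
            apply Subtype.ext
            apply hs.1
            rw [← hκ'', ← hκ'', hx]
          · intro b
            obtain ⟨e, rfl⟩ := hs.2.1 b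
            obtain ⟨a, ha⟩ := hθAsurj (θ e)
            have : θ (e - i a) = 0 := by
              rw [map_sub, show θ (i a) = (i ≫ θ) a from rfl, ha, sub_self]
            obtain ⟨k, hk⟩ := hex _ this
            refine ⟨k, ?_⟩
            show p (κ k) = p e
            rw [hk, map_sub, ses_comp_zero hs, sub_zero]
          · ext k
            constructor
            · rintro ⟨x, rfl⟩
              show p (κ (κ' x)) = 0
              rw [hκ'']
              exact ses_comp_zero hs _
            · intro hk
              have : p (κ k) = 0 := hk
              obtain ⟨a, ha⟩ := ses_exact hs this
              have haker : (i ≫ θ : A ⟶ S) a = 0 := by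
                show θ (i a) = 0
                rw [ha]
                exact hker k
              exact ⟨⟨a, haker⟩, hinj (by rw [hκ'']; exact ha)⟩
        exact FiltBy.ext KA K B κ' (κ ≫ p) hKAfilt hB hsesK

lemma splitBy_filt {V : ModuleCat.{u} Λ} (hbase : SplitBy V S) {M : ModuleCat.{u} Λ}
    (hM : FiltBy S M) : SplitBy V M := by
  induction hM with
  | self => exact hbase
  | zero M h => exact splitBy_subsingleton V M h
  | iso M N hM e ih => exact splitBy_iso ih e
  | ext A E B i p hA hB hs ihA ihB => exact splitBy_ext i p hs ihA ihB

lemma lift_of_splitBy {V Y C X : ModuleCat.{u} Λ} (ι : V ⟶ Y) (π : Y ⟶ C)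
    (hs : IsSESeq ι π) (h : X ⟶ C) (hsp : SplitBy V X) : ∃ l : X ⟶ Y, l ≫ π = h := by
  obtain ⟨P, ι', π', σ, hP, hισ, hcomm, -⟩ := pullback_ses ι π hs h
  obtain ⟨r, hr⟩ := hsp P ι' π' hP
  obtain ⟨s, hsec⟩ := sec_of_retr hP r hr
  refine ⟨s ≫ σ, ?_⟩
  rw [Category.assoc, hcomm, ← Category.assoc, hsec, Category.id_comp]

end Filt

lemma hEq {X Y : ModuleCat.{u} Λ} {f g : X ⟶ Y} (h : f = g) (x : X) : f x = g x := by rw [h]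

section Masters

variable {S : ModuleCat.{u} Λ}

/-- Key lemma: a map from a minimal left approximation target to `S` that kills the
image of `g` is zero. -/
lemma star_lemma (hSb : IsBrick S) {V B : ModuleCat.{u} Λ} {g : V ⟶ B}
    (hfilt : FiltBy S B)
    (happ : ∀ X : ModuleCat.{u} Λ, FiltBy S X → ∀ h : V ⟶ X, ∃ u : B ⟶ X, g ≫ u = h)
    (hmin : ∀ φ : B ⟶ B, g ≫ φ = g → IsIso φ)
    (θ : B ⟶ S) (hθg : g ≫ θ = 0) : θ = 0 := by
  by_contra hne
  have hsurj : Function.Surjective θ := filt_surj_to hSb hfilt θ hne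
  set Ks : Submodule Λ B := LinearMap.ker (θ : B →ₗ[Λ] S) with hKs
  let K : ModuleCat.{u} Λ := ModuleCat.of Λ Ks
  have hKfilt : FiltBy S K := filt_ker hSb hfilt θ hsurj K Ks.subtype Subtype.val_injective
      (fun x => x.2) (fun m hm => ⟨⟨m, hm⟩, rfl⟩)
  let g₀ : V ⟶ K := LinearMap.codRestrict Ks (g : V →ₗ[Λ] B)
    (fun v => show θ (g v) = 0 from hEq hθg v)
  obtain ⟨u, hu⟩ := happ K hKfilt g₀
  have hfix : g ≫ (u ≫ Ks.subtype) = g := by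
    apply hom_ext; intro v
    show Ks.subtype (u (g v)) = g v
    rw [show u (g v) = g₀ v from hEq hu v]
    rfl
  have hiso := hmin _ hfix
  have hψsurj : Function.Surjective (u ≫ Ks.subtype : B ⟶ B) := surjective_of_isIso _ hiso
  obtain ⟨b, hb⟩ := ne_zero_iff.1 hne
  obtain ⟨b', hb'⟩ := hψsurj b
  apply hb
  rw [← hb']
  exact (u b').2

/-- Key lemma, extension version: a map from the middle term of a minimal extension
approximation to `S` is zero. -/
lemma homES (hSb : IsBrick S) {U A E : ModuleCat.{u} Λ} {i : A ⟶ E} {p : E ⟶ U}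
    (hfiltA : FiltBy S A) (hsesE : IsSESeq i p)
    (happE : ∀ X : ModuleCat.{u} Λ, FiltBy S X →
      ∀ (F : ModuleCat.{u} Λ) (i' : X ⟶ F) (p' : F ⟶ U), IsSESeq i' p' →
        ∃ (h : A ⟶ X) (k : E ⟶ F), i ≫ k = h ≫ i' ∧ k ≫ p' = p)
    (hminE : ∀ φ : A ⟶ A, (∃ k : E ⟶ E, i ≫ k = φ ≫ i ∧ k ≫ p = p) → IsIso φ)
    (hUS : ∀ f : U ⟶ S, f = 0) :
    ∀ f : E ⟶ S, f = 0 := by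
  intro f
  by_cases hφ : i ≫ f = 0
  · obtain ⟨fb, hfb⟩ := factor_surj p hsesE.2.1 f (fun e he => by
      obtain ⟨a, rfl⟩ := ses_exact hsesE he
      exact hEq hφ a)
    rw [← hfb, hUS fb]
    exact hom_ext fun x => rfl
  · exfalso
    have hφsurj : Function.Surjective (i ≫ f : A ⟶ S) := filt_surj_to hSb hfiltA _ hφ
    set Ks : Submodule Λ A := LinearMap.ker ((i ≫ f : A ⟶ S) : A →ₗ[Λ] S) with hKsdef
    let K : ModuleCat.{u} Λ := ModuleCat.of Λ Ks
    have hKfilt : FiltBy S K := filt_ker hSb hfiltA (i ≫ f) hφsurj K Ks.subtype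
      Subtype.val_injective (fun x => x.2) (fun m hm => ⟨⟨m, hm⟩, rfl⟩)
    set Ws : Submodule Λ E := LinearMap.ker (f : E →ₗ[Λ] S) with hWsdef
    let W : ModuleCat.{u} Λ := ModuleCat.of Λ Ws
    let ιKW : K ⟶ W := LinearMap.codRestrict Ws (ModuleCat.ofHom Ks.subtype ≫ i : K ⟶ E).hom
      (fun x => x.2)
    let pW : W ⟶ U := (Ws.subtype : W ⟶ E) ≫ p
    have hsesW : IsSESeq ιKW pW := by
      refine ⟨?_, ?_, ?_⟩
      · intro x y hxy
        apply Subtype.ext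
        apply hsesE.1
        exact congrArg Subtype.val hxy
      · intro u'
        obtain ⟨e, rfl⟩ := hsesE.2.1 u'
        obtain ⟨a, ha⟩ := hφsurj (f e)
        have hmem : f (e - i a) = 0 := by
          rw [map_sub, show f (i a) = (i ≫ f) a from rfl, ha, sub_self]
        refine ⟨⟨e - i a, hmem⟩, ?_⟩
        show p (e - i a) = p e
        rw [map_sub, ses_comp_zero hsesE, sub_zero]
      · ext w
        constructor
        · rintro ⟨x, rfl⟩
          show p (i x.1) = 0
          exact ses_comp_zero hsesE _
        · intro hw
          have : p w.1 = 0 := hw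
          obtain ⟨a, ha⟩ := ses_exact hsesE this
          have haK : a ∈ Ks := by
            show f (i a) = 0
            rw [ha]
            exact w.2
          exact ⟨⟨a, haK⟩, Subtype.ext ha⟩
    obtain ⟨h, k, hik, hkp⟩ := happE K hKfilt W ιKW pW hsesW
    have hiso : IsIso (h ≫ Ks.subtype : A ⟶ A) := by
      apply hminE
      refine ⟨k ≫ (Ws.subtype : W ⟶ E), ?_, ?_⟩
      · apply hom_ext
        intro a
        show Ws.subtype (k (i a)) = i (Ks.subtype (h a))
        rw [show k (i a) = ιKW (h a) from hEq hik a]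
        rfl
      · apply hom_ext
        intro e
        show p (k e).1 = p e
        exact hEq hkp e
    have hsurjψ : Function.Surjective (h ≫ Ks.subtype : A ⟶ A) := surjective_of_isIso _ hiso
    obtain ⟨a, ha⟩ := ne_zero_iff.1 hφ
    obtain ⟨a', ha'⟩ := hsurjψ a
    apply ha
    rw [← ha']
    exact (h a').2

/-- Comparison of a minimal approximation with itself twisted by an isomorphism. -/
lemma min_comp_iso {V B : ModuleCat.{u} Λ} {g : V ⟶ B}
    (hfilt : FiltBy S B)
    (happ : ∀ X : ModuleCat.{u} Λ, FiltBy S X → ∀ h : V ⟶ X, ∃ u : B ⟶ X, g ≫ u = h)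
    (hmin : ∀ φ : B ⟶ B, g ≫ φ = g → IsIso φ)
    (Φ : V ⟶ V) (hΦ : IsIso Φ) (Φb : B ⟶ B) (hc : g ≫ Φb = Φ ≫ g) :
    Function.Bijective Φb := by
  obtain ⟨u, hu⟩ := happ B hfilt (inv Φ ≫ g)
  have h1 : g ≫ (Φb ≫ u) = g := by
    rw [← Category.assoc, hc, Category.assoc, hu, ← Category.assoc, IsIso.hom_inv_id,
      Category.id_comp]
  have h2 : g ≫ (u ≫ Φb) = g := by
    rw [← Category.assoc, hu, Category.assoc, hc, ← Category.assoc, IsIso.inv_hom_id,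
      Category.id_comp]
  haveI := hmin _ h1
  haveI := hmin _ h2
  have hb1 := bijective_of_isIso (Φb ≫ u)
  have hb2 := bijective_of_isIso (u ≫ Φb)
  constructor
  · intro x y hxy
    apply hb1.injective
    show u (Φb x) = u (Φb y)
    rw [hxy]
  · intro b
    obtain ⟨x, hx⟩ := hb2.surjective b
    exact ⟨u x, hx⟩

/-- Any map from the cokernel of a minimal left approximation to `S` is zero. -/
lemma homCS (hSb : IsBrick S) {V B : ModuleCat.{u} Λ} {g : V ⟶ B}
    (hfilt : FiltBy S B)
    (happ : ∀ X : ModuleCat.{u} Λ, FiltBy S X → ∀ h : V ⟶ X, ∃ u : B ⟶ X, g ≫ u = h)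
    (hmin : ∀ φ : B ⟶ B, g ≫ φ = g → IsIso φ)
    {C : ModuleCat.{u} Λ} {q : B ⟶ C} (hsesC : IsSESeq g q) :
    ∀ f : C ⟶ S, f = 0 := by
  intro f
  have h0 : (q ≫ f : B ⟶ S) = 0 := by
    apply star_lemma hSb hfilt happ hmin
    apply hom_ext
    intro v
    show f (q (g v)) = 0
    rw [ses_comp_zero hsesC, map_zero]
  apply hom_ext
  intro c
  obtain ⟨b, rfl⟩ := hsesC.2.1 c
  exact hEq h0 b

/-- Any map from the kernel of a minimal left approximation to `S` is zero. -/
lemma homKS {V B : ModuleCat.{u} Λ} {g : V ⟶ B}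
    (hfilt : FiltBy S B)
    (happ : ∀ X : ModuleCat.{u} Λ, FiltBy S X → ∀ h : V ⟶ X, ∃ u : B ⟶ X, g ≫ u = h)
    {K : ModuleCat.{u} Λ} {κ : K ⟶ V} (hsesK : IsSESeq κ g) :
    ∀ f : K ⟶ S, f = 0 := by
  intro f
  obtain ⟨Q, ιS, πB, j, hsesQ, hrel1, hrel2⟩ := pushout_ses κ g hsesK f
  have hQfilt : FiltBy S Q := FiltBy.ext S Q B ιS πB FiltBy.self hfilt hsesQ
  obtain ⟨m, hm⟩ := happ Q hQfilt j
  apply hom_ext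
  intro k
  have h1 : ιS (f k) = j (κ k) := (hEq hrel1 k).symm
  have h2 : j (κ k) = m (g (κ k)) := (hEq hm (κ k)).symm
  have h3 : g (κ k) = (0 : B) := ses_comp_zero hsesK k
  have hfin : ιS (f k) = ιS 0 := by rw [h1, h2, h3, map_zero, map_zero]
  exact hsesQ.1 hfin

/-- Extensions of the cokernel of a minimal left approximation by a brick `V'` with
`Hom(V,V') = 0` split. -/
lemma splitC {V B : ModuleCat.{u} Λ} {g : V ⟶ B}
    {C : ModuleCat.{u} Λ} {q : B ⟶ C} (hsesC : IsSESeq g q)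
    {V' : ModuleCat.{u} Λ} (hsplitV'B : SplitBy V' B) (hVV' : ∀ w : V ⟶ V', w = 0) :
    SplitBy V' C := by
  intro Y ι π hsY
  obtain ⟨t, ht⟩ := lift_of_splitBy ι π hsY q hsplitV'B
  have hgt : ∀ v, π (t (g v)) = 0 := by
    intro v
    have h1 : π (t (g v)) = q (g v) := hEq ht (g v)
    rw [h1]
    exact ses_comp_zero hsesC v
  obtain ⟨w, hw⟩ := factor_inj ι hsY.1 (g ≫ t) (fun v => ses_exact hsY (hgt v))
  have hw0 : w = 0 := hVV' w
  have hgt0 : ∀ v, t (g v) = 0 := by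
    intro v
    have h1 : ι (w v) = t (g v) := hEq hw v
    have h2 : w v = 0 := by rw [hw0]; rfl
    rw [← h1, h2, map_zero]
  obtain ⟨σ, hσ⟩ := factor_surj q hsesC.2.1 t (fun e he => by
    obtain ⟨v, rfl⟩ := ses_exact hsesC he
    exact hgt0 v)
  have hσπ : σ ≫ π = 𝟙 C := by
    apply hom_ext
    intro c
    obtain ⟨b, rfl⟩ := hsesC.2.1 c
    show π (σ (q b)) = q b
    rw [show σ (q b) = t b from hEq hσ b]
    exact hEq ht b
  exact retr_of_sec hsY σ hσπ

/-- Extensions of the cokernel of a minimal left approximation by `S` split. -/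
lemma splitSC (hSb : IsBrick S) {V B : ModuleCat.{u} Λ} {g : V ⟶ B}
    (hfilt : FiltBy S B)
    (happ : ∀ X : ModuleCat.{u} Λ, FiltBy S X → ∀ h : V ⟶ X, ∃ u : B ⟶ X, g ≫ u = h)
    (hmin : ∀ φ : B ⟶ B, g ≫ φ = g → IsIso φ)
    {C : ModuleCat.{u} Λ} {q : B ⟶ C} (hsesC : IsSESeq g q) :
    SplitBy S C := by
  intro F ι π hsF
  obtain ⟨P, ιP, πP, σ, hsesP, hrelι, hrelc, huniv⟩ := pullback_ses ι π hsF q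
  have hPfilt : FiltBy S P := FiltBy.ext S P B ιP πP FiltBy.self hfilt hsesP
  obtain ⟨ghat, hghatσ, hghatπ⟩ := huniv V 0 g (by
    apply hom_ext
    intro v
    show π ((0 : V ⟶ F) v) = q (g v)
    rw [ses_comp_zero hsesC]
    show π 0 = 0
    rw [map_zero])
  obtain ⟨u, hu⟩ := happ P hPfilt ghat
  have hψ : g ≫ (u ≫ πP) = g := by rw [← Category.assoc, hu, hghatπ]
  haveI hψiso := hmin _ hψ
  let s : B ⟶ F := inv (u ≫ πP : B ⟶ B) ≫ (u ≫ σ)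
  have hsπ : s ≫ π = q := by
    show (inv (u ≫ πP : B ⟶ B) ≫ (u ≫ σ)) ≫ π = q
    rw [Category.assoc, Category.assoc, hrelc, ← Category.assoc u πP q,
      ← Category.assoc, IsIso.inv_hom_id, Category.id_comp]
  have hsπ' : ∀ b, π (s b) = q b := fun b => hEq hsπ b
  obtain ⟨w, hw⟩ := factor_inj ι hsF.1 (g ≫ s) (fun v => ses_exact hsF (by
    show π (s (g v)) = 0
    rw [hsπ' (g v)]
    exact ses_comp_zero hsesC v))
  obtain ⟨wbar, hwbar⟩ := happ S FiltBy.self w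
  let s' : B ⟶ F := (s : B →ₗ[Λ] F) - ((wbar ≫ ι : B ⟶ F) : B →ₗ[Λ] F)
  have hs'app : ∀ b, s' b = s b - ι (wbar b) := fun b => rfl
  have hs'π : ∀ b, π (s' b) = q b := by
    intro b
    rw [hs'app, map_sub, hsπ', ses_comp_zero hsF, sub_zero]
  have hgs' : ∀ v, s' (g v) = 0 := by
    intro v
    rw [hs'app]
    have h1 : ι (w v) = s (g v) := hEq hw v
    have h2 : wbar (g v) = w v := hEq hwbar v
    rw [h2, ← h1, sub_self]
  obtain ⟨σbar, hσbar⟩ := factor_surj q hsesC.2.1 s' (fun e he => by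
    obtain ⟨v, rfl⟩ := ses_exact hsesC he
    exact hgs' v)
  have hσπ : σbar ≫ π = 𝟙 C := by
    apply hom_ext
    intro c
    obtain ⟨b, rfl⟩ := hsesC.2.1 c
    show π (σbar (q b)) = q b
    rw [show σbar (q b) = s' b from hEq hσbar b]
    exact hs'π b
  exact retr_of_sec hsF σbar hσπ

/-- Extensions of the middle term of a minimal extension approximation by `S` split. -/
lemma splitSE {U A E : ModuleCat.{u} Λ} {i : A ⟶ E} {p : E ⟶ U}
    (hfiltA : FiltBy S A) (hsesE : IsSESeq i p)
    (happE : ∀ X : ModuleCat.{u} Λ, FiltBy S X →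
      ∀ (F : ModuleCat.{u} Λ) (i' : X ⟶ F) (p' : F ⟶ U), IsSESeq i' p' →
        ∃ (h : A ⟶ X) (k : E ⟶ F), i ≫ k = h ≫ i' ∧ k ≫ p' = p)
    (hminE : ∀ φ : A ⟶ A, (∃ k : E ⟶ E, i ≫ k = φ ≫ i ∧ k ≫ p = p) → IsIso φ) :
    SplitBy S E := by
  intro F ι π hsF
  set A's : Submodule Λ F := Submodule.comap (π : F →ₗ[Λ] E) (LinearMap.range (i : A →ₗ[Λ] E))
    with hA'def
  let A' : ModuleCat.{u} Λ := ModuleCat.of Λ A's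
  let ιA' : A' ⟶ F := A's.subtype
  have hsesA'F : IsSESeq ιA' (π ≫ p) := by
    refine ⟨Subtype.val_injective, hsesE.2.1.comp hsF.2.1, ?_⟩
    ext x
    constructor
    · rintro ⟨y, rfl⟩
      show p (π (ιA' y)) = 0
      obtain ⟨a, ha⟩ := LinearMap.mem_range.mp y.2
      show p (π y.1) = 0
      rw [← ha]
      exact ses_comp_zero hsesE a
    · intro hx
      have : p (π x) = 0 := hx
      obtain ⟨a, ha⟩ := ses_exact hsesE this
      exact ⟨⟨x, ⟨a, ha⟩⟩, rfl⟩
  -- A' is an extension of A by S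
  let ιSA' : S ⟶ A' := LinearMap.codRestrict A's (ι : S →ₗ[Λ] F)
    (fun s' => by
      show π (ι s') ∈ LinearMap.range (i : A →ₗ[Λ] E)
      rw [ses_comp_zero hsF]
      exact Submodule.zero_mem _)
  obtain ⟨πA'A, hπA'A⟩ := factor_inj i hsesE.1 (ιA' ≫ π)
    (fun x => LinearMap.mem_range.mp x.2)
  have hπA'A' : ∀ x : A', i (πA'A x) = π x.1 := fun x => hEq hπA'A x
  have hsesSA' : IsSESeq ιSA' πA'A := by
    refine ⟨?_, ?_, ?_⟩
    · intro a b hab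
      exact hsF.1 (congrArg Subtype.val hab)
    · intro a
      obtain ⟨y, hy⟩ := hsF.2.1 (i a)
      refine ⟨⟨y, ⟨a, hy.symm⟩⟩, hsesE.1 ?_⟩
      rw [hπA'A']
      exact hy
    · ext x
      constructor
      · rintro ⟨s', rfl⟩
        have : i (πA'A (ιSA' s')) = i 0 := by
          rw [hπA'A', map_zero]
          exact ses_comp_zero hsF s'
        exact hsesE.1 this
      · intro hx
        have : π x.1 = 0 := by
          rw [← hπA'A' x, show πA'A x = 0 from hx, map_zero]
        obtain ⟨s', hs'⟩ := ses_exact hsF this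
        exact ⟨s', Subtype.ext hs'⟩
  have hA'filt : FiltBy S A' := FiltBy.ext S A' A ιSA' πA'A FiltBy.self hfiltA hsesSA'
  obtain ⟨h, k, hik, hkp⟩ := happE A' hA'filt F ιA' (π ≫ p) hsesA'F
  have hΘ : i ≫ (k ≫ π) = (h ≫ πA'A) ≫ i := by
    apply hom_ext
    intro a
    show π (k (i a)) = i (πA'A (h a))
    rw [show k (i a) = ιA' (h a) from hEq hik a, hπA'A']
    rfl
  have hΘp : (k ≫ π) ≫ p = p := by
    rw [Category.assoc]
    exact hkp
  haveI hφiso : IsIso (h ≫ πA'A : A ⟶ A) := hminE _ ⟨k ≫ π, hΘ, hΘp⟩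
  have hφbij := bijective_of_isIso (h ≫ πA'A : A ⟶ A)
  have hΘapp : ∀ a, (k ≫ π : E ⟶ E) (i a) = i ((h ≫ πA'A : A ⟶ A) a) := fun a => hEq hΘ a
  have hΘpapp : ∀ e, p ((k ≫ π : E ⟶ E) e) = p e := fun e => hEq hΘp e
  have hΘbij : Function.Bijective (k ≫ π : E ⟶ E) := by
    constructor
    · intro x y hxy
      have hsub : (k ≫ π : E ⟶ E) (x - y) = 0 := by
        rw [map_sub, show (k ≫ π : E ⟶ E) x = (k ≫ π : E ⟶ E) y from hxy, sub_self]
      have hp0 : p (x - y) = 0 := by rw [← hΘpapp (x - y), hsub, map_zero]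
      obtain ⟨a, ha⟩ := ses_exact hsesE hp0
      have : i ((h ≫ πA'A : A ⟶ A) a) = 0 := by rw [← hΘapp a, ha, hsub]
      have ha0 : (h ≫ πA'A : A ⟶ A) a = 0 := hsesE.1 (by rw [this, map_zero])
      have ha00 : a = 0 := hφbij.injective (by rw [ha0]; exact (map_zero _).symm)
      rw [ha00, map_zero] at ha
      exact sub_eq_zero.mp ha.symm
    · intro y
      have hpy : p (y - (k ≫ π : E ⟶ E) y) = 0 := by
        rw [map_sub, hΘpapp, sub_self]
      obtain ⟨a₁, ha₁⟩ := ses_exact hsesE hpy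
      obtain ⟨a₂, ha₂⟩ := hφbij.surjective a₁
      refine ⟨y + i a₂, ?_⟩
      rw [map_add, hΘapp, ha₂, ha₁]
      abel
  haveI := isIso_of_bijective _ hΘbij
  have hsec : (inv (k ≫ π : E ⟶ E) ≫ k) ≫ π = 𝟙 E := by
    rw [Category.assoc, IsIso.inv_hom_id]
  exact retr_of_sec hsF _ hsec

/-- Extensions by the kernel of a minimal left approximation split, provided extensions
by `V` split and there are no maps to `B`. -/
lemma splitK_of {V B : ModuleCat.{u} Λ} {g : V ⟶ B}
    {K : ModuleCat.{u} Λ} {κ : K ⟶ V} (hsesK : IsSESeq κ g)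
    {M : ModuleCat.{u} Λ} (hsplitVM : SplitBy V M) (hMB : ∀ f : M ⟶ B, f = 0) :
    SplitBy K M := by
  intro F ι π hsF
  obtain ⟨Q, ιV, πM, jF, hsesQ, hrel1, hrel2⟩ := pushout_ses ι π hsF κ
  obtain ⟨rQ, hrQ⟩ := hsplitVM Q ιV πM hsesQ
  have hrQ' : ∀ v, rQ (ιV v) = v := fun v => hEq hrQ v
  let ρ : F ⟶ V := jF ≫ rQ
  have hρι : ∀ x, ρ (ι x) = κ x := by
    intro x
    show rQ (jF (ι x)) = κ x
    rw [show jF (ι x) = ιV (κ x) from hEq hrel1 x, hrQ']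
  have hρg0 : ∀ x : K, g (ρ (ι x)) = 0 := by
    intro x
    rw [hρι]
    exact ses_comp_zero hsesK x
  obtain ⟨γ, hγ⟩ := factor_surj π hsF.2.1 (ρ ≫ g) (fun e he => by
    obtain ⟨x, rfl⟩ := ses_exact hsF he
    exact hρg0 x)
  have hγ0 : γ = 0 := hMB γ
  have hρg : ∀ f', g (ρ f') = 0 := by
    intro f'
    have h1 : g (ρ f') = γ (π f') := (hEq hγ f').symm
    rw [h1, hγ0]
    rfl
  obtain ⟨r, hr⟩ := factor_inj κ hsesK.1 ρ (fun f' => ses_exact hsesK (hρg f'))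
  refine ⟨r, ?_⟩
  apply hom_ext
  intro x
  apply hsesK.1
  show κ (r (ι x)) = κ x
  rw [show κ (r (ι x)) = ρ (ι x) from hEq hr (ι x), hρι]

/-- The middle term of a minimal extension approximation is a brick. -/
lemma brick_E (hSb : IsBrick S) {U A E : ModuleCat.{u} Λ} {i : A ⟶ E} {p : E ⟶ U}
    (hfiltA : FiltBy S A) (hsesE : IsSESeq i p)
    (happE : ∀ X : ModuleCat.{u} Λ, FiltBy S X →
      ∀ (F : ModuleCat.{u} Λ) (i' : X ⟶ F) (p' : F ⟶ U), IsSESeq i' p' →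
        ∃ (h : A ⟶ X) (k : E ⟶ F), i ≫ k = h ≫ i' ∧ k ≫ p' = p)
    (hminE : ∀ φ : A ⟶ A, (∃ k : E ⟶ E, i ≫ k = φ ≫ i ∧ k ≫ p = p) → IsIso φ)
    (hUb : IsBrick U) (hUS : ∀ f : U ⟶ S, f = 0) (hSU : ∀ f : S ⟶ U, f = 0) :
    IsBrick E := by
  have hES := homES hSb hfiltA hsesE happE hminE hUS
  constructor
  · -- nontrivial
    have := hUb.1
    obtain ⟨u, hu⟩ := exists_ne (0 : U)
    obtain ⟨e, he⟩ := hsesE.2.1 u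
    exact ⟨e, 0, fun hc => hu (by rw [← he, hc, map_zero])⟩
  · intro f hf
    have hAU : i ≫ (f ≫ p) = 0 := by
      rw [← Category.assoc]
      exact filt_hom_zero_from hSU hfiltA _
    obtain ⟨fbar, hfbar⟩ := factor_surj p hsesE.2.1 (f ≫ p) (fun e he => by
      obtain ⟨a, rfl⟩ := ses_exact hsesE he
      exact hEq hAU a)
    by_cases hfb : fbar = 0
    · exfalso
      have hfp : f ≫ p = 0 := by
        rw [← hfbar, hfb]
        exact hom_ext fun x => rfl
      obtain ⟨f₀, hf₀⟩ := factor_inj i hsesE.1 f (fun e => ses_exact hsesE (hEq hfp e))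
      have : f₀ = 0 := filt_hom_zero_to hES hfiltA f₀
      apply hf
      rw [← hf₀, this]
      exact hom_ext fun x => show i 0 = 0 from map_zero i.hom
    · haveI hfbiso := hUb.2 fbar hfb
      have hfbbij := bijective_of_isIso fbar
      have hfbar' : ∀ e, fbar (p e) = p (f e) := fun e => hEq hfbar e
      -- factor i ≫ f through i
      have hifp : ∀ a, p (f (i a)) = 0 := by
        intro a
        rw [← hfbar', ses_comp_zero hsesE, map_zero]
      obtain ⟨a₀, ha₀⟩ := factor_inj i hsesE.1 (i ≫ f) (fun a => ses_exact hsesE (hifp a))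
      have ha₀' : ∀ a, i (a₀ a) = f (i a) := fun a => hEq ha₀ a
      -- the twisted sequence
      have hses' : IsSESeq i (p ≫ fbar) := by
        refine ⟨hsesE.1, hfbbij.surjective.comp hsesE.2.1, ?_⟩
        rw [hsesE.2.2]
        ext e
        constructor
        · intro he
          show fbar (p e) = 0
          rw [show p e = (0 : U) from he, map_zero]
        · intro he
          have : fbar (p e) = fbar 0 := by rw [map_zero]; exact he
          exact hfbbij.injective this
      obtain ⟨h', k', hik', hkp'⟩ := happE A hfiltA E i (p ≫ fbar) hses'
      rw [← Category.assoc] at hkp'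
      have hkp'' : k' ≫ p = p ≫ inv fbar := by
        have h1 := congrArg (fun t : E ⟶ U => t ≫ inv fbar) hkp'
        simpa only [Category.assoc, IsIso.hom_inv_id, Category.comp_id] using h1
      haveI hiso1 : IsIso (a₀ ≫ h' : A ⟶ A) := by
        apply hminE
        refine ⟨f ≫ k', ?_, ?_⟩
        · rw [← Category.assoc, ← ha₀, Category.assoc, hik', ← Category.assoc]
        · rw [Category.assoc, hkp'', ← Category.assoc, ← hfbar, Category.assoc,
            IsIso.hom_inv_id, Category.comp_id]
      haveI hiso2 : IsIso (h' ≫ a₀ : A ⟶ A) := by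
        apply hminE
        refine ⟨k' ≫ f, ?_, ?_⟩
        · rw [← Category.assoc, hik', Category.assoc, ← ha₀, ← Category.assoc]
        · rw [Category.assoc, ← hfbar, ← Category.assoc, hkp'', Category.assoc,
            IsIso.inv_hom_id, Category.comp_id]
      have hb1 := bijective_of_isIso (a₀ ≫ h' : A ⟶ A)
      have hb2 := bijective_of_isIso (h' ≫ a₀ : A ⟶ A)
      have ha₀bij : Function.Bijective a₀ := by
        constructor
        · intro x y hxy
          apply hb1.injective
          show h' (a₀ x) = h' (a₀ y)
          rw [hxy]
        · intro b
          obtain ⟨x, hx⟩ := hb2.surjective b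
          exact ⟨h' x, hx⟩
      apply isIso_of_bijective
      constructor
      · intro x y hxy
        have hsub : f (x - y) = 0 := by
          rw [map_sub, show f x = f y from hxy, sub_self]
        have hp0 : p (x - y) = 0 := by
          apply hfbbij.injective
          rw [hfbar', hsub, map_zero, map_zero]
        obtain ⟨a, ha⟩ := ses_exact hsesE hp0
        have hia : i (a₀ a) = 0 := by rw [ha₀', ha, hsub]
        have ha0 : a₀ a = 0 := hsesE.1 (by rw [hia, map_zero])
        have ha00 : a = 0 := ha₀bij.injective (by rw [ha0, map_zero])
        rw [ha00, map_zero] at ha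
        exact sub_eq_zero.mp ha.symm
      · intro y
        obtain ⟨u₀, hu₀⟩ := hfbbij.surjective (p y)
        obtain ⟨x, rfl⟩ := hsesE.2.1 u₀
        have hdiff : p (y - f x) = 0 := by
          rw [map_sub, ← hfbar' x, hu₀, sub_self]
        obtain ⟨a₁, ha₁⟩ := ses_exact hsesE hdiff
        obtain ⟨a₂, ha₂⟩ := ha₀bij.surjective a₁
        refine ⟨x + i a₂, ?_⟩
        rw [map_add, ← ha₀', ha₂, ha₁]
        abel

/-- The cokernel of a monic minimal left approximation is a brick. -/
lemma brick_C (hSb : IsBrick S) {V B : ModuleCat.{u} Λ} {g : V ⟶ B}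
    (hVb : IsBrick V) (hfilt : FiltBy S B)
    (happ : ∀ X : ModuleCat.{u} Λ, FiltBy S X → ∀ h : V ⟶ X, ∃ u : B ⟶ X, g ≫ u = h)
    (hmin : ∀ φ : B ⟶ B, g ≫ φ = g → IsIso φ)
    (hSV : ∀ f : S ⟶ V, f = 0) (hbase : SplitBy V S)
    {C : ModuleCat.{u} Λ} {q : B ⟶ C} (hsesC : IsSESeq g q) :
    IsBrick C := by
  have hCS := homCS hSb hfilt happ hmin hsesC
  constructor
  · -- nontrivial
    rcases subsingleton_or_nontrivial C with hsub | hnt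
    · exfalso
      have hgsurj : Function.Surjective g := by
        intro b
        apply ses_exact hsesC
        exact Subsingleton.elim _ _
      have hgbij : Function.Bijective g := ⟨hsesC.1, hgsurj⟩
      let e := LinearEquiv.ofBijective (g : V →ₗ[Λ] B) hgbij
      have hVfilt : FiltBy S V := FiltBy.iso B V hfilt e.toModuleIso.symm
      have hVnt : Nontrivial V := hVb.1
      obtain ⟨f, hf⟩ := filt_nonzero_from hSb.1 hVfilt hVnt
      exact hf (hSV f)
    · exact hnt
  · intro f hf
    obtain ⟨Ψ, hΨ⟩ := lift_of_splitBy g q hsesC (q ≫ f) (splitBy_filt hbase hfilt)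
    have hΨ' : ∀ b, q (Ψ b) = f (q b) := fun b => hEq hΨ b
    have hqgΨ : ∀ v, q (Ψ (g v)) = 0 := by
      intro v
      rw [hΨ', ses_comp_zero hsesC, map_zero]
    obtain ⟨ψ₀, hψ₀⟩ := factor_inj g hsesC.1 (g ≫ Ψ) (fun v => ses_exact hsesC (hqgΨ v))
    have hψ₀' : ∀ v, g (ψ₀ v) = Ψ (g v) := fun v => hEq hψ₀ v
    by_cases hψ0 : ψ₀ = 0
    · exfalso
      have hgΨ0 : ∀ v, Ψ (g v) = 0 := by
        intro v
        rw [← hψ₀', hψ0]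
        exact map_zero g.hom
      obtain ⟨lam, hlam⟩ := factor_surj q hsesC.2.1 Ψ (fun e he => by
        obtain ⟨v, rfl⟩ := ses_exact hsesC he
        exact hgΨ0 v)
      have hlam0 : lam = 0 := filt_hom_zero_to hCS hfilt lam
      have hΨ0 : ∀ b, Ψ b = 0 := by
        intro b
        rw [show Ψ b = lam (q b) from (hEq hlam b).symm, hlam0]
        rfl
      apply hf
      apply hom_ext
      intro c
      obtain ⟨b, rfl⟩ := hsesC.2.1 c
      rw [← hΨ' b, hΨ0, map_zero]
      rfl
    · haveI hψiso := hVb.2 ψ₀ hψ0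
      have hψbij := bijective_of_isIso ψ₀
      have hΨbij : Function.Bijective Ψ := min_comp_iso hfilt happ hmin ψ₀ hψiso Ψ hψ₀.symm
      apply isIso_of_bijective
      constructor
      · intro x y hxy
        obtain ⟨bx, rfl⟩ := hsesC.2.1 x
        obtain ⟨by', rfl⟩ := hsesC.2.1 y
        have h1 : q (Ψ bx - Ψ by') = 0 := by
          rw [map_sub, hΨ', hΨ', show f (q bx) = f (q by') from hxy, sub_self]
        obtain ⟨v, hv⟩ := ses_exact hsesC h1
        obtain ⟨v', hv'⟩ := hψbij.surjective v
        have h2 : Ψ (bx - by' - g v') = 0 := by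
          rw [map_sub, map_sub, ← hψ₀', hv', hv]
          abel
        have h3 : bx - by' - g v' = 0 := hΨbij.injective (by rw [h2, map_zero])
        have h4 : bx - by' = g v' := by
          have := sub_eq_zero.mp h3
          linear_combination (norm := abel) this
        show q bx = q by'
        have h5 : q (bx - by') = 0 := by rw [h4]; exact ses_comp_zero hsesC v'
        rw [map_sub] at h5
        exact sub_eq_zero.mp h5
      · intro c
        obtain ⟨b, rfl⟩ := hsesC.2.1 c
        obtain ⟨b', hb'⟩ := hΨbij.surjective b
        exact ⟨q b', by rw [← hΨ' b', hb']⟩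

/-- The kernel of a non-monic (hence epic) minimal left approximation is a brick. -/
lemma brick_K (hSb : IsBrick S) {V B : ModuleCat.{u} Λ} {g : V ⟶ B}
    (hVb : IsBrick V) (hfilt : FiltBy S B)
    (happ : ∀ X : ModuleCat.{u} Λ, FiltBy S X → ∀ h : V ⟶ X, ∃ u : B ⟶ X, g ≫ u = h)
    (hmin : ∀ φ : B ⟶ B, g ≫ φ = g → IsIso φ)
    (hbase : SplitBy V S) (hginj : ¬ Function.Injective g)
    {K : ModuleCat.{u} Λ} {κ : K ⟶ V} (hsesK : IsSESeq κ g) :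
    IsBrick K := by
  constructor
  · -- nontrivial
    rw [Function.not_injective_iff] at hginj
    obtain ⟨a, b, hab, hne⟩ := hginj
    have : g (a - b) = 0 := by rw [map_sub, hab, sub_self]
    obtain ⟨k, hk⟩ := ses_exact hsesK this
    refine ⟨k, 0, fun hc => hne ?_⟩
    rw [hc, map_zero] at hk
    exact sub_eq_zero.mp hk.symm
  · intro φ hφ
    obtain ⟨Q, ι₂, πB, j, hsesQ, hrel1, hrel2⟩ := pushout_ses κ g hsesK (φ ≫ κ)
    obtain ⟨rQ, hrQ⟩ := splitBy_filt hbase hfilt Q ι₂ πB hsesQ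
    have hrQ' : ∀ v, rQ (ι₂ v) = v := fun v => hEq hrQ v
    let Φ : V ⟶ V := j ≫ rQ
    have hΦκ : ∀ k, Φ (κ k) = κ (φ k) := by
      intro k
      show rQ (j (κ k)) = κ (φ k)
      rw [show j (κ k) = ι₂ (κ (φ k)) from hEq hrel1 k, hrQ']
    by_cases hΦ0 : Φ = 0
    · exfalso
      apply hφ
      apply hom_ext
      intro k
      apply hsesK.1
      have h1 : κ (φ k) = Φ (κ k) := (hΦκ k).symm
      have h2 : Φ (κ k) = 0 := by rw [hΦ0]; rfl
      show κ (φ k) = κ ((0 : K ⟶ K) k)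
      rw [h1, h2]
      exact (map_zero κ.hom).symm
    · haveI hΦiso := hVb.2 Φ hΦ0
      have hΦbij := bijective_of_isIso Φ
      have hκΦg : ∀ k, g (Φ (κ k)) = 0 := by
        intro k
        rw [hΦκ]
        exact ses_comp_zero hsesK (φ k)
      obtain ⟨Φb, hΦb⟩ := factor_surj g hsesK.2.1 (Φ ≫ g) (fun v hv => by
        obtain ⟨k, rfl⟩ := ses_exact hsesK hv
        exact hκΦg k)
      have hΦb' : ∀ v, Φb (g v) = g (Φ v) := fun v => hEq hΦb v
      have hΦbbij : Function.Bijective Φb :=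
        min_comp_iso hfilt happ hmin Φ hΦiso Φb (by
          apply hom_ext
          intro v
          exact hΦb' v)
      apply isIso_of_bijective
      constructor
      · intro x y hxy
        apply hsesK.1
        apply hΦbij.injective
        rw [hΦκ, hΦκ, hxy]
      · intro k
        obtain ⟨v, hv⟩ := hΦbij.surjective (κ k)
        have hgv : g v = 0 := by
          apply hΦbbij.injective
          rw [hΦb', hv, map_zero]
          exact ses_comp_zero hsesK k
        obtain ⟨k₀, hk₀⟩ := ses_exact hsesK hgv
        refine ⟨k₀, hsesK.1 ?_⟩
        rw [← hΦκ, hk₀, hv]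

lemma homEE {U A E : ModuleCat.{u} Λ} {i : A ⟶ E} {p : E ⟶ U}
    (hfiltA : FiltBy S A) (hsesE : IsSESeq i p)
    (hES : ∀ f : E ⟶ S, f = 0)
    {U' A' E' : ModuleCat.{u} Λ} {i' : A' ⟶ E'} {p' : E' ⟶ U'}
    (hfiltA' : FiltBy S A') (hsesE' : IsSESeq i' p')
    (hSU' : ∀ f : S ⟶ U', f = 0) (hUU' : ∀ f : U ⟶ U', f = 0) :
    ∀ f : E ⟶ E', f = 0 := by
  intro f
  have h1 : i ≫ (f ≫ p') = 0 := by
    rw [← Category.assoc]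
    exact filt_hom_zero_from hSU' hfiltA _
  obtain ⟨u, hu⟩ := factor_surj p hsesE.2.1 (f ≫ p') (fun e he => by
    obtain ⟨a, rfl⟩ := ses_exact hsesE he
    exact hEq h1 a)
  have hu0 : u = 0 := hUU' u
  have h2 : ∀ e, p' (f e) = 0 := by
    intro e
    have := (hEq hu e).symm
    rw [hu0] at this
    exact this
  obtain ⟨f₀, hf₀⟩ := factor_inj i' hsesE'.1 f (fun e => ses_exact hsesE' (h2 e))
  have hf₀0 : f₀ = 0 := filt_hom_zero_to hES hfiltA' f₀
  apply hom_ext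
  intro e
  rw [show f e = i' (f₀ e) from (hEq hf₀ e).symm, hf₀0]
  exact map_zero i'.hom

lemma homEC {E : ModuleCat.{u} Λ}
    (hES : ∀ f : E ⟶ S, f = 0)
    {V B C : ModuleCat.{u} Λ} {g : V ⟶ B} {q : B ⟶ C} (hsesC : IsSESeq g q)
    (hfiltB : FiltBy S B) (hsplitVE : SplitBy V E) :
    ∀ f : E ⟶ C, f = 0 := by
  intro f
  obtain ⟨fhat, hfhat⟩ := lift_of_splitBy g q hsesC f hsplitVE
  have h0 : fhat = 0 := filt_hom_zero_to hES hfiltB fhat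
  apply hom_ext
  intro e
  rw [show f e = q (fhat e) from (hEq hfhat e).symm, h0]
  exact map_zero q.hom

lemma homCE {V B C : ModuleCat.{u} Λ} {g : V ⟶ B} {q : B ⟶ C} (hsesC : IsSESeq g q)
    (hfiltB : FiltBy S B) (hCS : ∀ f : C ⟶ S, f = 0)
    {U' A' E' : ModuleCat.{u} Λ} {i' : A' ⟶ E'} {p' : E' ⟶ U'}
    (hfiltA' : FiltBy S A') (hsesE' : IsSESeq i' p')
    (hSU' : ∀ f : S ⟶ U', f = 0) :
    ∀ f : C ⟶ E', f = 0 := by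
  intro f
  have h1 : ∀ b, p' (f (q b)) = 0 := fun b =>
    hEq (filt_hom_zero_from hSU' hfiltB (q ≫ f ≫ p')) b
  have h2 : ∀ c, p' (f c) = 0 := by
    intro c
    obtain ⟨b, rfl⟩ := hsesC.2.1 c
    exact h1 b
  obtain ⟨f₀, hf₀⟩ := factor_inj i' hsesE'.1 f (fun c => ses_exact hsesE' (h2 c))
  have hf₀0 : f₀ = 0 := filt_hom_zero_to hCS hfiltA' f₀
  apply hom_ext
  intro c
  rw [show f c = i' (f₀ c) from (hEq hf₀ c).symm, hf₀0]
  exact map_zero i'.hom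

lemma homCC {V B C : ModuleCat.{u} Λ} {g : V ⟶ B} {q : B ⟶ C} (hsesC : IsSESeq g q)
    (hCS : ∀ f : C ⟶ S, f = 0)
    {V' B' C' : ModuleCat.{u} Λ} {g' : V' ⟶ B'} {q' : B' ⟶ C'} (hsesC' : IsSESeq g' q')
    (hfiltB' : FiltBy S B') (hsplitV'C : SplitBy V' C) :
    ∀ f : C ⟶ C', f = 0 := by
  intro f
  obtain ⟨fhat, hfhat⟩ := lift_of_splitBy g' q' hsesC' f hsplitV'C
  have h0 : fhat = 0 := filt_hom_zero_to hCS hfiltB' fhat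
  apply hom_ext
  intro c
  rw [show f c = q' (fhat c) from (hEq hfhat c).symm, h0]
  exact map_zero q'.hom

lemma homEK {U A E : ModuleCat.{u} Λ} {i : A ⟶ E} {p : E ⟶ U}
    (hfiltA : FiltBy S A) (hsesE : IsSESeq i p)
    {V' B' K' : ModuleCat.{u} Λ} {g' : V' ⟶ B'} {κ' : K' ⟶ V'} (hsesK' : IsSESeq κ' g')
    (hSV' : ∀ f : S ⟶ V', f = 0) (hUV' : ∀ f : U ⟶ V', f = 0) :
    ∀ f : E ⟶ K', f = 0 := by
  intro f
  have h1 : i ≫ (f ≫ κ') = 0 := by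
    rw [← Category.assoc]
    exact filt_hom_zero_from hSV' hfiltA _
  obtain ⟨u, hu⟩ := factor_surj p hsesE.2.1 (f ≫ κ') (fun e he => by
    obtain ⟨a, rfl⟩ := ses_exact hsesE he
    exact hEq h1 a)
  have hu0 : u = 0 := hUV' u
  apply hom_ext
  intro e
  apply hsesK'.1
  have h2 : κ' (f e) = u (p e) := (hEq hu e).symm
  rw [h2, hu0]
  exact (map_zero κ'.hom).symm

lemma homCK {V B C : ModuleCat.{u} Λ} {g : V ⟶ B} {q : B ⟶ C} (hsesC : IsSESeq g q)
    (hfiltB : FiltBy S B)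
    {V' B' K' : ModuleCat.{u} Λ} {g' : V' ⟶ B'} {κ' : K' ⟶ V'} (hsesK' : IsSESeq κ' g')
    (hSV' : ∀ f : S ⟶ V', f = 0) :
    ∀ f : C ⟶ K', f = 0 := by
  intro f
  have h1 : ∀ b, κ' (f (q b)) = 0 := fun b =>
    hEq (filt_hom_zero_from hSV' hfiltB (q ≫ f ≫ κ')) b
  apply hom_ext
  intro c
  apply hsesK'.1
  obtain ⟨b, rfl⟩ := hsesC.2.1 c
  rw [h1 b]
  exact (map_zero κ'.hom).symm

lemma homKK {V B K : ModuleCat.{u} Λ} {g : V ⟶ B} {κ : K ⟶ V} (hsesK : IsSESeq κ g)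
    {V' B' K' : ModuleCat.{u} Λ} {g' : V' ⟶ B'} {κ' : K' ⟶ V'} (hsesK' : IsSESeq κ' g')
    (hsplitV'B : SplitBy V' B) (hVV' : ∀ f : V ⟶ V', f = 0) :
    ∀ f : K ⟶ K', f = 0 := by
  intro f
  obtain ⟨Q, ιV', πB, j, hsesQ, hrel1, hrel2⟩ := pushout_ses κ g hsesK (f ≫ κ')
  obtain ⟨r, hr⟩ := hsplitV'B Q ιV' πB hsesQ
  have hm0 : (j ≫ r : V ⟶ V') = 0 := hVV' _
  apply hom_ext
  intro k
  apply hsesK'.1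
  have h1 : r (j (κ k)) = κ' (f k) := by
    rw [show j (κ k) = ιV' (κ' (f k)) from hEq hrel1 k]
    exact hEq hr (κ' (f k))
  have h2 : r (j (κ k)) = 0 := by
    have := hEq hm0 (κ k)
    exact this
  rw [← h1, h2]
  exact (map_zero κ'.hom).symm

lemma homSK {V K : ModuleCat.{u} Λ} {κ : K ⟶ V} (hκinj : Function.Injective κ)
    (hSV : ∀ f : S ⟶ V, f = 0) : ∀ f : S ⟶ K, f = 0 := by
  intro f
  have h1 : (f ≫ κ : S ⟶ V) = 0 := hSV _
  apply hom_ext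
  intro s'
  apply hκinj
  rw [show κ (f s') = (0 : S ⟶ V) s' from hEq h1 s']
  exact (map_zero κ.hom).symm ▸ rfl

end Masters

open Limits in
lemma ses_kernel {V B : ModuleCat.{u} Λ} (g : V ⟶ B) (hsurj : Function.Surjective g) :
    IsSESeq (kernel.ι g) g := by
  refine ⟨(ModuleCat.mono_iff_injective _).mp inferInstance, hsurj, ?_⟩
  have hcomp : (ModuleCat.kernelIsoKer g).inv ≫ kernel.ι g = ModuleCat.ofHom (LinearMap.ker g.hom).subtype := by
    rw [← ModuleCat.kernelIsoKer_hom_ker_subtype, ← Category.assoc, Iso.inv_hom_id,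
      Category.id_comp]
  ext x
  constructor
  · rintro ⟨y, rfl⟩
    exact hEq (kernel.condition g) y
  · intro hx
    refine ⟨(ModuleCat.kernelIsoKer g).inv ⟨x, hx⟩, ?_⟩
    exact hEq hcomp ⟨x, hx⟩

open Limits in
lemma ses_cokernel {V B : ModuleCat.{u} Λ} (g : V ⟶ B) (hinj : Function.Injective g) :
    IsSESeq g (cokernel.π g) := by
  refine ⟨hinj, (ModuleCat.epi_iff_surjective _).mp inferInstance, ?_⟩
  have hcomp : cokernel.π g ≫ (ModuleCat.cokernelIsoRangeQuotient g).hom =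
      ModuleCat.ofHom (LinearMap.range g.hom).mkQ := ModuleCat.cokernel_π_cokernelIsoRangeQuotient_hom g
  have hhominj : Function.Injective ((ModuleCat.cokernelIsoRangeQuotient g).hom) :=
    (bijective_of_isIso _).injective
  ext x
  constructor
  · rintro ⟨v, rfl⟩
    exact hEq (cokernel.condition g) v
  · intro hx
    have h2 : (ModuleCat.cokernelIsoRangeQuotient g).hom ((cokernel.π g) x) =
        (LinearMap.range g.hom).mkQ x := hEq hcomp x
    have h1 : (LinearMap.range g.hom).mkQ x = 0 := by
      rw [← h2, show cokernel.π g x = 0 from hx, map_zero]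
    rwa [Submodule.mkQ_apply, Submodule.Quotient.mk_eq_zero] at h1

end SB

open Limits in
/-- Let `Λ` be a finite-dimensional algebra and `X = Sp ⊔ Sn[1]` a
semibrick pair singly left mutation compatible at `S ∈ Sp`. Define the left mutation
`μ⁺_S(X)` by replacing `S` with `S[1]` and each other `T ∈ X` by the cone of a left
minimal `Filt S`-approximation `T[-1] ⟶ S_T`: for `T ∈ Sp \ {S}` the cone is the middle
term `E_T` of the approximating extension `S_T ↪ E_T ↠ T`; for `T ∈ Sn` with
approximation `g_T : T ⟶ S_T` the cone is `coker g_T` (positive part) if `g_T` is mono,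
and `(ker g_T)[1]` (negative part) otherwise. Then `μ⁺_S(X)` is again a semibrick pair. -/
theorem stmt12 {K : Type} [Field K] {Λ : Type} [Ring Λ] [Algebra K Λ] [FiniteDimensional K Λ]
    (Sp Sn : Set (ModuleCat Λ)) (hX : IsSemibrickPair Sp Sn)
    (S : ModuleCat Λ) (hcompat : SinglyLeftMutCompatAt Sp Sn S)
    -- chosen left minimal approximations of the negative part
    (An : {T // T ∈ Sn} → ModuleCat Λ) (g : ∀ T : {T // T ∈ Sn}, (T : ModuleCat Λ) ⟶ An T)
    (hg : ∀ T : {T // T ∈ Sn}, IsMinLeftApprox S (g T))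
    -- chosen left minimal approximations (extension classes) of the positive part
    (Ap Ep : {T // T ∈ Sp ∧ T ≠ S} → ModuleCat Λ)
    (ip : ∀ T : {T // T ∈ Sp ∧ T ≠ S}, Ap T ⟶ Ep T)
    (pp : ∀ T : {T // T ∈ Sp ∧ T ≠ S}, Ep T ⟶ (T : ModuleCat Λ))
    (hp : ∀ T : {T // T ∈ Sp ∧ T ≠ S}, IsMinExtApprox S T.1 (Ap T) (Ep T) (ip T) (pp T)) :
    IsSemibrickPair
      ((Set.range fun T : {T // T ∈ Sp ∧ T ≠ S} => Ep T) ∪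
        (Set.range fun T : {T : {T // T ∈ Sn} // Mono (g T)} => cokernel (g T.1)))
      ({S} ∪
        (Set.range fun T : {T : {T // T ∈ Sn} // ¬ Mono (g T)} => kernel (g T.1))) := by
  obtain ⟨hPb, hNb, hPP, hNN, hPN, hExt⟩ := hX
  obtain ⟨hSmem, hcomp⟩ := hcompat
  have hSb : IsBrick S := hPb S hSmem
  -- negative-side data
  have hgfilt : ∀ T : {T // T ∈ Sn}, FiltBy S (An T) := fun T => (hg T).1
  have hgapp : ∀ T : {T // T ∈ Sn}, ∀ X : ModuleCat Λ, FiltBy S X →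
      ∀ h : (T : ModuleCat Λ) ⟶ X, ∃ u : An T ⟶ X, g T ≫ u = h := fun T => (hg T).2.1
  have hgmin : ∀ T : {T // T ∈ Sn}, ∀ φ : An T ⟶ An T, g T ≫ φ = g T → IsIso φ :=
    fun T => (hg T).2.2
  have hVb : ∀ T : {T // T ∈ Sn}, IsBrick T.1 := fun T => hNb T.1 T.2
  have hSV : ∀ T : {T // T ∈ Sn}, ∀ f : S ⟶ T.1, f = 0 := fun T => hPN S hSmem T.1 T.2
  have hbaseV : ∀ T : {T // T ∈ Sn}, SB.SplitBy T.1 S :=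
    fun T Y ι π hs => hExt S hSmem T.1 T.2 Y ι π hs
  have hepi : ∀ T : {T // T ∈ Sn}, ¬ Mono (g T) → Function.Surjective (g T) := by
    intro T hm
    rcases hcomp T.1 T.2 (An T) (g T) (hg T) with h | h
    · exact absurd h hm
    · exact (ModuleCat.epi_iff_surjective _).mp h
  have hsesK : ∀ T : {T : {T // T ∈ Sn} // ¬ Mono (g T)},
      IsSESeq (kernel.ι (g T.1)) (g T.1) := fun T => SB.ses_kernel _ (hepi T.1 T.2)
  have hsesC : ∀ T : {T : {T // T ∈ Sn} // Mono (g T)},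
      IsSESeq (g T.1) (cokernel.π (g T.1)) :=
    fun T => SB.ses_cokernel _ ((ModuleCat.mono_iff_injective _).mp T.2)
  -- positive-side data
  have hfiltA : ∀ T : {T // T ∈ Sp ∧ T ≠ S}, FiltBy S (Ap T) := fun T => (hp T).1
  have hsesE : ∀ T : {T // T ∈ Sp ∧ T ≠ S}, IsSESeq (ip T) (pp T) := fun T => (hp T).2.1
  have happE : ∀ T : {T // T ∈ Sp ∧ T ≠ S}, ∀ X : ModuleCat Λ, FiltBy S X →
      ∀ (F : ModuleCat Λ) (i' : X ⟶ F) (p' : F ⟶ T.1), IsSESeq i' p' →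
        ∃ (h : Ap T ⟶ X) (k : Ep T ⟶ F), ip T ≫ k = h ≫ i' ∧ k ≫ p' = pp T :=
    fun T => (hp T).2.2.1
  have hminE : ∀ T : {T // T ∈ Sp ∧ T ≠ S}, ∀ φ : Ap T ⟶ Ap T,
      (∃ k : Ep T ⟶ Ep T, ip T ≫ k = φ ≫ ip T ∧ k ≫ pp T = pp T) → IsIso φ :=
    fun T => (hp T).2.2.2
  have hUb : ∀ T : {T // T ∈ Sp ∧ T ≠ S}, IsBrick T.1 := fun T => hPb T.1 T.2.1
  have hUS : ∀ T : {T // T ∈ Sp ∧ T ≠ S}, ∀ f : T.1 ⟶ S, f = 0 :=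
    fun T => hPP T.1 T.2.1 S hSmem T.2.2
  have hSU : ∀ T : {T // T ∈ Sp ∧ T ≠ S}, ∀ f : S ⟶ T.1, f = 0 :=
    fun T => hPP S hSmem T.1 T.2.1 (Ne.symm T.2.2)
  have hUV : ∀ (T : {T // T ∈ Sp ∧ T ≠ S}) (T' : {T // T ∈ Sn}), ∀ f : T.1 ⟶ T'.1, f = 0 :=
    fun T T' => hPN T.1 T.2.1 T'.1 T'.2
  have hbaseU : ∀ (T : {T // T ∈ Sp ∧ T ≠ S}) (T' : {T // T ∈ Sn}), SB.SplitBy T'.1 T.1 :=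
    fun T T' Y ι π hs => hExt T.1 T.2.1 T'.1 T'.2 Y ι π hs
  -- derived Hom-vanishing into S
  have hES : ∀ T : {T // T ∈ Sp ∧ T ≠ S}, ∀ f : Ep T ⟶ S, f = 0 :=
    fun T => SB.homES hSb (hfiltA T) (hsesE T) (happE T) (hminE T) (hUS T)
  have hCS : ∀ T : {T : {T // T ∈ Sn} // Mono (g T)}, ∀ f : cokernel (g T.1) ⟶ S, f = 0 :=
    fun T => SB.homCS hSb (hgfilt T.1) (hgapp T.1) (hgmin T.1) (hsesC T)
  have hKS : ∀ T : {T : {T // T ∈ Sn} // ¬ Mono (g T)}, ∀ f : kernel (g T.1) ⟶ S, f = 0 :=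
    fun T => SB.homKS (hgfilt T.1) (hgapp T.1) (hsesK T)
  -- splittings of new negative objects over new positive objects
  have hsplitVE : ∀ (T : {T // T ∈ Sp ∧ T ≠ S}) (T' : {T // T ∈ Sn}),
      SB.SplitBy T'.1 (Ep T) := fun T T' =>
    SB.splitBy_ext (ip T) (pp T) (hsesE T)
      (SB.splitBy_filt (hbaseV T') (hfiltA T)) (hbaseU T T')
  have hsplitVC : ∀ (T : {T : {T // T ∈ Sn} // Mono (g T)}) (T' : {T // T ∈ Sn}),
      T.1.1 ≠ T'.1 → SB.SplitBy T'.1 (cokernel (g T.1)) := fun T T' hne =>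
    SB.splitC (hsesC T) (SB.splitBy_filt (hbaseV T') (hgfilt T.1))
      (hNN T.1.1 T.1.2 T'.1 T'.2 hne)
  refine ⟨?_, ?_, ?_, ?_, ?_, ?_⟩
  · -- positive bricks
    rintro M (⟨T, rfl⟩ | ⟨T, rfl⟩)
    · exact SB.brick_E hSb (hfiltA T) (hsesE T) (happE T) (hminE T) (hUb T) (hUS T) (hSU T)
    · exact SB.brick_C hSb (hVb T.1) (hgfilt T.1) (hgapp T.1) (hgmin T.1) (hSV T.1)
        (hbaseV T.1) (hsesC T)
  · -- negative bricks
    rintro M (hM | ⟨T, rfl⟩)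
    · rw [Set.mem_singleton_iff] at hM
      subst hM
      exact hSb
    · refine SB.brick_K hSb (hVb T.1) (hgfilt T.1) (hgapp T.1) (hgmin T.1) (hbaseV T.1)
        ?_ (hsesK T)
      intro hinj
      exact T.2 ((ModuleCat.mono_iff_injective _).mpr hinj)
  · -- Hom-orthogonality of the positive part
    rintro M (⟨T₁, rfl⟩ | ⟨T₁, rfl⟩) N (⟨T₂, rfl⟩ | ⟨T₂, rfl⟩) hMN f
    · have hne : T₁.1 ≠ T₂.1 := by
        intro h
        exact hMN (by rw [Subtype.ext h])
      exact SB.homEE (hfiltA T₁) (hsesE T₁) (hES T₁) (hfiltA T₂) (hsesE T₂) (hSU T₂)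
        (hPP T₁.1 T₁.2.1 T₂.1 T₂.2.1 hne) f
    · exact SB.homEC (hES T₁) (hsesC T₂) (hgfilt T₂.1) (hsplitVE T₁ T₂.1) f
    · exact SB.homCE (hsesC T₁) (hgfilt T₁.1) (hCS T₁) (hfiltA T₂) (hsesE T₂) (hSU T₂) f
    · have hne : T₁.1.1 ≠ T₂.1.1 := by
        intro h
        exact hMN (by rw [Subtype.ext (Subtype.ext h : T₁.1 = T₂.1)])
      exact SB.homCC (hsesC T₁) (hCS T₁) (hsesC T₂) (hgfilt T₂.1) (hsplitVC T₁ T₂.1 hne) f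
  · -- Hom-orthogonality of the negative part
    rintro M (hM | ⟨T₁, rfl⟩) N (hN | ⟨T₂, rfl⟩) hMN f
    · rw [Set.mem_singleton_iff] at hM hN
      subst hM; subst hN
      exact absurd rfl hMN
    · rw [Set.mem_singleton_iff] at hM
      subst hM
      exact SB.homSK (hsesK T₂).1 (hSV T₂.1) f
    · rw [Set.mem_singleton_iff] at hN
      subst hN
      exact hKS T₁ f
    · have hne : T₁.1.1 ≠ T₂.1.1 := by
        intro h
        exact hMN (by rw [Subtype.ext (Subtype.ext h : T₁.1 = T₂.1)])
      exact SB.homKK (hsesK T₁) (hsesK T₂)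
        (SB.splitBy_filt (hbaseV T₂.1) (hgfilt T₁.1))
        (hNN T₁.1.1 T₁.1.2 T₂.1.1 T₂.1.2 hne) f
  · -- Hom from positive to negative part vanishes
    rintro M (⟨T₁, rfl⟩ | ⟨T₁, rfl⟩) N (hN | ⟨T₂, rfl⟩) f
    · rw [Set.mem_singleton_iff] at hN
      subst hN
      exact hES T₁ f
    · exact SB.homEK (hfiltA T₁) (hsesE T₁) (hsesK T₂) (hSV T₂.1) (hUV T₁ T₂.1) f
    · rw [Set.mem_singleton_iff] at hN
      subst hN
      exact hCS T₁ f
    · exact SB.homCK (hsesC T₁) (hgfilt T₁.1) (hsesK T₂) (hSV T₂.1) f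
  · -- extensions split
    rintro M (⟨T₁, rfl⟩ | ⟨T₁, rfl⟩) N (hN | ⟨T₂, rfl⟩) F i' p' hs
    · rw [Set.mem_singleton_iff] at hN
      subst hN
      exact SB.splitSE (hfiltA T₁) (hsesE T₁) (happE T₁) (hminE T₁) F i' p' hs
    · exact SB.splitK_of (hsesK T₂) (hsplitVE T₁ T₂.1)
        (SB.filt_hom_zero_to (hES T₁) (hgfilt T₂.1)) F i' p' hs
    · rw [Set.mem_singleton_iff] at hN
      subst hN
      exact SB.splitSC hSb (hgfilt T₁.1) (hgapp T₁.1) (hgmin T₁.1) (hsesC T₁) F i' p' hs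
    · have hne : T₁.1.1 ≠ T₂.1.1 := by
        intro h
        have h1 : T₁.1 = T₂.1 := Subtype.ext h
        exact T₂.2 (h1 ▸ T₁.2)
      exact SB.splitK_of (hsesK T₂) (hsplitVC T₁ T₂.1 hne)
        (SB.filt_hom_zero_to (hCS T₁) (hgfilt T₂.1)) F i' p' hs
end
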